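/- arXiv:2503.15656 — 9 statements merged into one kernel-verified Lean document; each statement's English description precedes it below -/
import Mathlib

section
/- Suppose 𝒢 is a graph decomposition of a finite-dimensional real Hilbert space H ≠ {0} and φ is a balanced weight on the edges of 𝒢 with values in [0,∞)^N for some N. Then for some k ≥ 1 there exist weight functions φ_1, …, φ_k, each of which equals 1 on the edges of some maximal directed chain in 𝒢 from {0} to H and 0 on all other edges, and values c_1, …, c_k ∈ [0,∞)^N, such that φ = Σ_{i=1}^k c_i φ_i. Moreover the total mass τ of φ equals Σ_{i=1}^k c_i, and consequently the sum of φ over edges outgoing from {0} equals the sum of φ over edges incoming to H. -/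
open MeasureTheory Module
open scoped ENNReal

noncomputable section

/-- A directed graph whose vertices are linear subspaces of `H`. -/
structure SubspaceGraph (H : Type*) [NormedAddCommGroup H] [InnerProductSpace ℝ H] where
  verts : Set (Submodule ℝ H)
  edges : Set (Submodule ℝ H × Submodule ℝ H)

namespace SubspaceGraph

variable {H : Type*} [NormedAddCommGroup H] [InnerProductSpace ℝ H]

/-- The edges of `G` incoming to the vertex `V`. -/
def incomingEdges (G : SubspaceGraph H) (V : Submodule ℝ H) :
    Set (Submodule ℝ H × Submodule ℝ H) :=
  {e ∈ G.edges | e.2 = V}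

/-- The edges of `G` outgoing from the vertex `V`. -/
def outgoingEdges (G : SubspaceGraph H) (V : Submodule ℝ H) :
    Set (Submodule ℝ H × Submodule ℝ H) :=
  {e ∈ G.edges | e.1 = V}

/-- `G` is a graph decomposition of the subspace `T` of `H` (for a graph decomposition
of `H` itself take `T = ⊤`): the vertices are subspaces of `T`, with `⊥` and `T` among
them; every edge goes from a vertex `V₁` to a vertex `V₂` with `V₁ ⊆ V₂` and
`dim V₂ = dim V₁ + 1`; every vertex other than `⊥` has at least one incoming edge; and
every vertex other than `T` has at least one outgoing edge. -/
def IsDecompositionOf (G : SubspaceGraph H) (T : Submodule ℝ H) : Prop :=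
  G.verts.Finite ∧ G.edges.Finite ∧
  (⊥ : Submodule ℝ H) ∈ G.verts ∧ T ∈ G.verts ∧
  (∀ V ∈ G.verts, V ≤ T) ∧
  (∀ e ∈ G.edges, e.1 ∈ G.verts ∧ e.2 ∈ G.verts ∧ e.1 ≤ e.2 ∧
    finrank ℝ ↥e.2 = finrank ℝ ↥e.1 + 1) ∧
  (∀ V ∈ G.verts, V ≠ ⊥ → ∃ e ∈ G.edges, e.2 = V) ∧
  (∀ V ∈ G.verts, V ≠ T → ∃ e ∈ G.edges, e.1 = V)

/-- A weight function on the edges of `G` is balanced when, at every vertex other than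
`⊥` and the top vertex `T`, the sum over incoming edges equals the sum over outgoing
edges. -/
def IsBalancedWeight {M : Type*} [AddCommMonoid M] (G : SubspaceGraph H)
    (T : Submodule ℝ H) (φ : Submodule ℝ H × Submodule ℝ H → M) : Prop :=
  ∀ V ∈ G.verts, V ≠ ⊥ → V ≠ T →
    ∑ᶠ e ∈ G.incomingEdges V, φ e = ∑ᶠ e ∈ G.outgoingEdges V, φ e

/-- The total mass of a weight function: the sum over all edges outgoing from `⊥`. -/
def totalMass {M : Type*} [AddCommMonoid M] (G : SubspaceGraph H)
    (φ : Submodule ℝ H × Submodule ℝ H → M) : M :=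
  ∑ᶠ e ∈ G.outgoingEdges ⊥, φ e

end SubspaceGraph

/-- A chain of edges in the edge set `E`: an ordered collection `c 0, …, c (k-1)` of
edges such that the vertex to which each edge is incoming is the vertex from which the
next one is outgoing. -/
def IsEdgeChain {α : Type*} (E : Set (α × α)) {k : ℕ} (c : Fin k → α × α) : Prop :=
  (∀ j, c j ∈ E) ∧
  ∀ (j : ℕ) (h : j + 1 < k), (c ⟨j, Nat.lt_of_succ_lt h⟩).2 = (c ⟨j + 1, h⟩).1

/-- A nonempty chain of edges beginning at the vertex `A` and ending at the vertex `B`. -/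
def IsChainFromTo {α : Type*} (E : Set (α × α)) (A B : α) {k : ℕ}
    (c : Fin k → α × α) : Prop :=
  IsEdgeChain E c ∧
  ∃ h : 0 < k, (c ⟨0, h⟩).1 = A ∧ (c ⟨k - 1, Nat.sub_lt h Nat.one_pos⟩).2 = B

namespace SGAux
attribute [local instance] Classical.propDecidable
set_option linter.unusedSectionVars false
set_option linter.unusedVariables false
set_option linter.deprecated false

variable {H : Type*} [NormedAddCommGroup H] [InnerProductSpace ℝ H] [FiniteDimensional ℝ H]

local notation "Edge" => (Submodule ℝ H × Submodule ℝ H)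

lemma finsum_out {M : Type*} [AddCommMonoid M] (G : SubspaceGraph H) (Efin : Finset Edge)
    (hEfin : ↑Efin = G.edges) (V : Submodule ℝ H) (f : Edge → M) :
    ∑ᶠ e ∈ G.outgoingEdges V, f e = ∑ e ∈ Efin.filter (fun e => e.1 = V), f e := by
  have h : G.outgoingEdges V = ↑(Efin.filter (fun e => e.1 = V)) := by
    ext e
    simp [SubspaceGraph.outgoingEdges, ← hEfin]
  rw [h, finsum_mem_coe_finset]

lemma finsum_in {M : Type*} [AddCommMonoid M] (G : SubspaceGraph H) (Efin : Finset Edge)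
    (hEfin : ↑Efin = G.edges) (V : Submodule ℝ H) (f : Edge → M) :
    ∑ᶠ e ∈ G.incomingEdges V, f e = ∑ e ∈ Efin.filter (fun e => e.2 = V), f e := by
  have h : G.incomingEdges V = ↑(Efin.filter (fun e => e.2 = V)) := by
    ext e
    simp [SubspaceGraph.incomingEdges, ← hEfin]
  rw [h, finsum_mem_coe_finset]

lemma zero_case {N : ℕ} (G : SubspaceGraph H) (Efin : Finset Edge)
    (hEfin : ↑Efin = G.edges) (ψ : Edge → Fin N → ℝ)
    (hz : ∀ e ∈ G.edges, ψ e = 0) :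
    ∃ (k : ℕ) (c : Fin k → Fin N → ℝ) (ind : Fin k → Edge → ℝ),
      (∀ i n, 0 ≤ c i n) ∧
      (∀ i, ∃ (m : ℕ) (ch : Fin m → Edge),
        IsChainFromTo G.edges ⊥ ⊤ ch ∧ ind i = (Set.range ch).indicator 1) ∧
      (∀ e ∈ G.edges, ψ e = ∑ i, ind i e • c i) ∧
      (∑ᶠ e ∈ G.outgoingEdges ⊥, ψ e) = ∑ i, c i ∧
      (∑ᶠ e ∈ G.incomingEdges ⊤, ψ e) = ∑ i, c i := by
  have hmem : ∀ x : Edge, x ∈ Efin ↔ x ∈ G.edges := by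
    intro x; rw [← hEfin]; exact Iff.rfl
  refine ⟨0, Fin.elim0, Fin.elim0, fun i => i.elim0, fun i => i.elim0, ?_, ?_, ?_⟩
  · intro e he; rw [hz e he]; simp
  · rw [finsum_out G Efin hEfin]
    rw [Finset.sum_eq_zero]
    · simp
    · intro e he
      exact hz e ((hmem e).mp (Finset.mem_filter.mp he).1)
  · rw [finsum_in G Efin hEfin]
    rw [Finset.sum_eq_zero]
    · simp
    · intro e he
      exact hz e ((hmem e).mp (Finset.mem_filter.mp he).1)

/-- Backward extension. -/
lemma exists_back (E : Set Edge)
    (hstep : ∀ e ∈ E, e.1 ≠ ⊥ → ∃ e' ∈ E, e'.2 = e.1 ∧ finrank ℝ ↥e'.1 + 1 = finrank ℝ ↥e.1) :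
    ∀ (d : ℕ) (e : Edge), e ∈ E → finrank ℝ ↥e.1 ≤ d →
      ∃ (l : List Edge) (hl : l ≠ []), l.Chain' (fun a b => a.2 = b.1) ∧ (∀ x ∈ l, x ∈ E) ∧
        l.getLast hl = e ∧ (l.head hl).1 = ⊥ := by
  intro d
  induction d with
  | zero =>
    intro e he hd
    have h0 : e.1 = ⊥ := Submodule.finrank_eq_zero.mp (Nat.le_zero.mp hd)
    exact ⟨[e], by simp, List.isChain_singleton e, by simp [he], rfl, h0⟩
  | succ d ih =>
    intro e he hd
    by_cases h0 : e.1 = ⊥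
    · exact ⟨[e], by simp, List.isChain_singleton e, by simp [he], rfl, h0⟩
    · obtain ⟨e', he', h2, hdim⟩ := hstep e he h0
      obtain ⟨l', hl', hc', hm', hlast', hhead'⟩ := ih e' he' (by omega)
      refine ⟨l' ++ [e], by simp, ?_, ?_, ?_, ?_⟩
      · simp only [List.Chain', List.isChain_append]
        refine ⟨hc', List.isChain_singleton e, ?_⟩
        intro x hx y hy
        rw [List.getLast?_eq_getLast hl'] at hx
        simp only [List.head?_cons, Option.mem_some_iff] at hx hy
        rw [← hx, ← hy, hlast', h2]
      · intro x hx
        rcases List.mem_append.mp hx with h | h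
        · exact hm' x h
        · simp only [List.mem_singleton] at h; exact h ▸ he
      · simp [List.getLast_append]
      · rw [List.head_append_of_ne_nil hl']; exact hhead'

/-- Forward extension. -/
lemma exists_fwd (E : Set Edge)
    (hstep : ∀ e ∈ E, e.2 ≠ ⊤ → ∃ e' ∈ E, e'.1 = e.2 ∧ finrank ℝ ↥e'.2 = finrank ℝ ↥e.2 + 1) :
    ∀ (d : ℕ) (e : Edge), e ∈ E → finrank ℝ (⊤ : Submodule ℝ H) - finrank ℝ ↥e.2 ≤ d →
      ∃ (l : List Edge) (hl : l ≠ []), l.Chain' (fun a b => a.2 = b.1) ∧ (∀ x ∈ l, x ∈ E) ∧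
        l.head hl = e ∧ (l.getLast hl).2 = ⊤ := by
  intro d
  induction d with
  | zero =>
    intro e he hd
    have hle : finrank ℝ ↥e.2 ≤ finrank ℝ (⊤ : Submodule ℝ H) := by
      rw [finrank_top]; exact Submodule.finrank_le e.2
    have htop : e.2 = ⊤ := by
      apply Submodule.eq_top_of_finrank_eq
      rw [← finrank_top (R := ℝ) (M := H)] at *
      omega
    exact ⟨[e], by simp, List.isChain_singleton e, by simp [he], rfl, htop⟩
  | succ d ih =>
    intro e he hd
    by_cases h0 : e.2 = ⊤
    · exact ⟨[e], by simp, List.isChain_singleton e, by simp [he], rfl, h0⟩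
    · obtain ⟨e', he', h2, hdim⟩ := hstep e he h0
      have hlt : finrank ℝ ↥e.2 < finrank ℝ (⊤ : Submodule ℝ H) := by
        rw [finrank_top]
        exact Submodule.finrank_lt h0
      obtain ⟨l', hl', hc', hm', hhead', hlast'⟩ := ih e' he' (by omega)
      refine ⟨e :: l', by simp, ?_, ?_, rfl, ?_⟩
      · simp only [List.Chain', List.isChain_cons]
        refine ⟨?_, hc'⟩
        intro y hy
        have hsome : l'.head? = some e' := by rw [List.head?_eq_head hl', hhead']
        rw [hsome, Option.mem_some_iff] at hy
        rw [← hy, h2]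
      · intro x hx
        rcases List.mem_cons.mp hx with h | h
        · exact h ▸ he
        · exact hm' x h
      · rw [List.getLast_cons hl']; exact hlast'

/-- Chain through a given edge, from ⊥ to ⊤. -/
lemma exists_through (E : Set Edge)
    (hback : ∀ e ∈ E, e.1 ≠ ⊥ → ∃ e' ∈ E, e'.2 = e.1 ∧ finrank ℝ ↥e'.1 + 1 = finrank ℝ ↥e.1)
    (hfwd : ∀ e ∈ E, e.2 ≠ ⊤ → ∃ e' ∈ E, e'.1 = e.2 ∧ finrank ℝ ↥e'.2 = finrank ℝ ↥e.2 + 1)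
    (e : Edge) (he : e ∈ E) :
    ∃ (l : List Edge) (hl : l ≠ []), l.Chain' (fun a b => a.2 = b.1) ∧ (∀ x ∈ l, x ∈ E) ∧
      (l.head hl).1 = ⊥ ∧ (l.getLast hl).2 = ⊤ ∧ e ∈ l := by
  obtain ⟨b, hb, hcb, hmb, hlastb, hheadb⟩ := exists_back E hback (finrank ℝ ↥e.1) e he le_rfl
  obtain ⟨f, hf, hcf, hmf, hheadf, hlastf⟩ := exists_fwd E hfwd
    (finrank ℝ (⊤ : Submodule ℝ H) - finrank ℝ ↥e.2) e he le_rfl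
  obtain ⟨a, t, rfl⟩ := List.exists_cons_of_ne_nil hf
  have ha : a = e := by simpa using hheadf
  subst ha
  by_cases ht : t = []
  · subst ht
    simp only [List.getLast_singleton] at hlastf
    refine ⟨b, hb, hcb, hmb, hheadb, ?_, ?_⟩
    · rw [hlastb]; exact hlastf
    · rw [← hlastb]; exact List.getLast_mem hb
  · refine ⟨b ++ t, by simp [hb], ?_, ?_, ?_, ?_, ?_⟩
    · simp only [List.Chain', List.isChain_append]
      refine ⟨hcb, (List.isChain_cons.mp hcf).2, ?_⟩
      intro x hx y hy
      rw [List.getLast?_eq_getLast hb, Option.mem_some_iff] at hx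
      have := (List.isChain_cons.mp hcf).1 y hy
      rw [← hx, hlastb]; exact this
    · intro x hx
      rcases List.mem_append.mp hx with h | h
      · exact hmb x h
      · exact hmf x (List.mem_cons_of_mem _ h)
    · rw [List.head_append_of_ne_nil hb]; exact hheadb
    · rw [List.getLast_append_of_ne_nil _ ht]
      rw [List.getLast_cons ht] at hlastf; exact hlastf
    · refine List.mem_append.mpr (Or.inl ?_)
      rw [← hlastb]; exact List.getLast_mem hb


lemma range_get {α : Type*} (l : List α) : Set.range l.get = {a | a ∈ l} := by
  ext a
  simp only [Set.mem_range, Set.mem_setOf_eq, List.mem_iff_get]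

lemma chain_level (l : List Edge) (hl : l ≠ [])
    (hc : l.Chain' (fun a b => a.2 = b.1))
    (hdim : ∀ x ∈ l, finrank ℝ ↥x.2 = finrank ℝ ↥x.1 + 1)
    (hhead : (l.head hl).1 = ⊥) :
    ∀ (i : ℕ) (hi : i < l.length), finrank ℝ ↥(l.get ⟨i, hi⟩).1 = i := by
  intro i
  induction i with
  | zero =>
    intro hi
    rw [List.get_mk_zero, hhead, finrank_bot]
  | succ i ih =>
    intro hi
    have adj : (l.get ⟨i, by omega⟩).2 = (l.get ⟨i+1, hi⟩).1 :=
      List.isChain_iff_getElem.mp hc i (by omega)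
    have := hdim _ (l.get_mem ⟨i, by omega⟩)
    rw [← adj, this, ih (by omega)]

lemma chain_level2 (l : List Edge) (hl : l ≠ [])
    (hc : l.Chain' (fun a b => a.2 = b.1))
    (hdim : ∀ x ∈ l, finrank ℝ ↥x.2 = finrank ℝ ↥x.1 + 1)
    (hhead : (l.head hl).1 = ⊥) :
    ∀ (i : ℕ) (hi : i < l.length), finrank ℝ ↥(l.get ⟨i, hi⟩).2 = i + 1 := by
  intro i hi
  rw [hdim _ (l.get_mem ⟨i, hi⟩), chain_level l hl hc hdim hhead i hi]

lemma uniq_start (l : List Edge) (hl : l ≠ [])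
    (hc : l.Chain' (fun a b => a.2 = b.1))
    (hdim : ∀ x ∈ l, finrank ℝ ↥x.2 = finrank ℝ ↥x.1 + 1)
    (hhead : (l.head hl).1 = ⊥) :
    ∀ x ∈ l, ∀ y ∈ l, x.1 = y.1 → x = y := by
  intro x hx y hy hxy
  obtain ⟨⟨i, hi⟩, rfl⟩ := List.mem_iff_get.mp hx
  obtain ⟨⟨j, hj⟩, rfl⟩ := List.mem_iff_get.mp hy
  have h1 := chain_level l hl hc hdim hhead i hi
  have h2 := chain_level l hl hc hdim hhead j hj
  rw [hxy] at h1
  have : i = j := by omega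
  subst this; rfl

lemma uniq_end (l : List Edge) (hl : l ≠ [])
    (hc : l.Chain' (fun a b => a.2 = b.1))
    (hdim : ∀ x ∈ l, finrank ℝ ↥x.2 = finrank ℝ ↥x.1 + 1)
    (hhead : (l.head hl).1 = ⊥) :
    ∀ x ∈ l, ∀ y ∈ l, x.2 = y.2 → x = y := by
  intro x hx y hy hxy
  obtain ⟨⟨i, hi⟩, rfl⟩ := List.mem_iff_get.mp hx
  obtain ⟨⟨j, hj⟩, rfl⟩ := List.mem_iff_get.mp hy
  have h1 := chain_level2 l hl hc hdim hhead i hi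
  have h2 := chain_level2 l hl hc hdim hhead j hj
  rw [hxy] at h1
  have : i = j := by omega
  subst this; rfl

lemma in_iff_out (l : List Edge) (hl : l ≠ [])
    (hc : l.Chain' (fun a b => a.2 = b.1))
    (hdim : ∀ x ∈ l, finrank ℝ ↥x.2 = finrank ℝ ↥x.1 + 1)
    (hhead : (l.head hl).1 = ⊥) (hlast : (l.getLast hl).2 = ⊤)
    (V : Submodule ℝ H) (hV1 : V ≠ ⊥) (hV2 : V ≠ ⊤) :
    (∃ x ∈ l, x.2 = V) ↔ (∃ x ∈ l, x.1 = V) := by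
  constructor
  · rintro ⟨x, hx, hxV⟩
    obtain ⟨⟨i, hi⟩, rfl⟩ := List.mem_iff_get.mp hx
    have hi1 : i + 1 < l.length := by
      rcases Nat.lt_or_ge (i+1) l.length with h | h
      · exact h
      · exfalso
        have : i = l.length - 1 := by omega
        subst this
        rw [List.getLast_eq_getElem] at hlast
        exact hV2 (hxV ▸ hlast.symm ▸ rfl)
    have adj : (l.get ⟨i, hi⟩).2 = (l.get ⟨i+1, hi1⟩).1 :=
      List.isChain_iff_getElem.mp hc i (by omega)
    exact ⟨l.get ⟨i+1, hi1⟩, l.get_mem _, by rw [← adj, hxV]⟩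
  · rintro ⟨x, hx, hxV⟩
    obtain ⟨⟨i, hi⟩, rfl⟩ := List.mem_iff_get.mp hx
    have hi0 : i ≠ 0 := by
      intro h
      subst h
      rw [List.get_mk_zero, hhead] at hxV
      exact hV1 hxV.symm
    have adj : (l.get ⟨i-1, by omega⟩).2 = (l.get ⟨i-1+1, by omega⟩).1 :=
      List.isChain_iff_getElem.mp hc (i-1) (by omega)
    have hcast : (⟨i - 1 + 1, by omega⟩ : Fin l.length) = ⟨i, hi⟩ := by
      ext; simp; omega
    rw [hcast] at adj
    exact ⟨l.get ⟨i-1, by omega⟩, l.get_mem _, by rw [adj, hxV]⟩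

lemma sum_indicator_list (s : Finset Edge) (l : List Edge) :
    ∑ e ∈ s, Set.indicator {a | a ∈ l} (1 : Edge → ℝ) e
      = ((s.filter (fun e => e ∈ l)).card : ℝ) := by
  classical
  rw [← Finset.sum_boole]
  refine Finset.sum_congr rfl fun e _ => ?_
  by_cases h : e ∈ l <;> simp [Set.indicator_apply, h]

lemma isChainFromTo_of_list (E : Set Edge) (l : List Edge) (hl : l ≠ [])
    (hc : l.Chain' (fun a b => a.2 = b.1)) (hm : ∀ x ∈ l, x ∈ E)
    (hhead : (l.head hl).1 = ⊥) (hlast : (l.getLast hl).2 = ⊤) :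
    IsChainFromTo E ⊥ ⊤ l.get := by
  refine ⟨⟨fun j => hm _ (l.get_mem _), fun j h => List.isChain_iff_getElem.mp hc j (by omega)⟩,
    List.length_pos_iff.mpr hl, ?_, ?_⟩
  · rw [List.get_mk_zero]; exact hhead
  · rw [List.getLast_eq_getElem] at hlast; exact hlast


lemma main_rec {N : ℕ} (G : SubspaceGraph H) (hG : G.IsDecompositionOf ⊤)
    (Efin : Finset Edge) (hEfin : ↑Efin = G.edges) :
    ∀ (s : ℕ) (ψ : Edge → Fin N → ℝ),
      (∀ e ∈ G.edges, ∀ n, 0 ≤ ψ e n) → G.IsBalancedWeight ⊤ ψ →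
      ((Efin ×ˢ (Finset.univ : Finset (Fin N))).filter
          (fun p => ψ p.1 p.2 ≠ 0)).card ≤ s →
      ∃ (k : ℕ) (c : Fin k → Fin N → ℝ) (ind : Fin k → Edge → ℝ),
        (∀ i n, 0 ≤ c i n) ∧
        (∀ i, ∃ (m : ℕ) (ch : Fin m → Edge),
          IsChainFromTo G.edges ⊥ ⊤ ch ∧ ind i = (Set.range ch).indicator 1) ∧
        (∀ e ∈ G.edges, ψ e = ∑ i, ind i e • c i) ∧
        (∑ᶠ e ∈ G.outgoingEdges ⊥, ψ e) = ∑ i, c i ∧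
        (∑ᶠ e ∈ G.incomingEdges ⊤, ψ e) = ∑ i, c i := by
  have hmem : ∀ x : Edge, x ∈ Efin ↔ x ∈ G.edges := by
    intro x; rw [← hEfin]; exact Iff.rfl
  have hedim : ∀ e ∈ G.edges, finrank ℝ ↥e.2 = finrank ℝ ↥e.1 + 1 :=
    fun e he => (hG.2.2.2.2.2.1 e he).2.2.2
  intro s
  induction s with
  | zero =>
    intro ψ hpos hbal hcard
    apply zero_case G Efin hEfin
    intro e he
    funext n
    by_contra hn
    have hp : (e, n) ∈ (Efin ×ˢ (Finset.univ : Finset (Fin N))).filter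
        (fun p => ψ p.1 p.2 ≠ 0) := by
      refine Finset.mem_filter.mpr ⟨Finset.mem_product.mpr ⟨(hmem e).mpr he, Finset.mem_univ n⟩, hn⟩
    have := Finset.card_pos.mpr ⟨_, hp⟩
    omega
  | succ s IH =>
    intro ψ hpos hbal hcard
    by_cases hz : ∀ e ∈ G.edges, ψ e = 0
    · exact zero_case G Efin hEfin ψ hz
    push_neg at hz
    obtain ⟨e₀, he₀, hne⟩ := hz
    have hex : ∃ n₀, ψ e₀ n₀ ≠ 0 := by
      by_contra h; push_neg at h; exact hne (funext h)
    obtain ⟨n₀, hn₀⟩ := hex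
    have hn₀pos : 0 < ψ e₀ n₀ := lt_of_le_of_ne (hpos e₀ he₀ n₀) (Ne.symm hn₀)
    set E : Set Edge := {e | e ∈ G.edges ∧ 0 < ψ e n₀} with hEdef
    have hbalF : ∀ V ∈ G.verts, V ≠ ⊥ → V ≠ ⊤ →
        ∑ e ∈ Efin.filter (fun e => e.2 = V), ψ e
          = ∑ e ∈ Efin.filter (fun e => e.1 = V), ψ e := by
      intro V hV h1 h2
      have hb := hbal V hV h1 h2
      rwa [finsum_in G Efin hEfin, finsum_out G Efin hEfin] at hb
    -- one-step extension hypotheses for the positive-edge set E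
    have hfwd : ∀ e ∈ E, e.2 ≠ ⊤ →
        ∃ e' ∈ E, e'.1 = e.2 ∧ finrank ℝ ↥e'.2 = finrank ℝ ↥e.2 + 1 := by
      intro e he htop
      have heG : e ∈ G.edges := he.1
      have hv : e.2 ∈ G.verts := (hG.2.2.2.2.2.1 e heG).2.1
      have hbot : e.2 ≠ ⊥ := by
        intro h
        have hd := hedim e heG
        rw [h, finrank_bot] at hd
        omega
      have hb := congrFun (hbalF e.2 hv hbot htop) n₀
      rw [Finset.sum_apply, Finset.sum_apply] at hb
      have hein : e ∈ Efin.filter (fun e' => e'.2 = e.2) :=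
        Finset.mem_filter.mpr ⟨(hmem e).mpr heG, rfl⟩
      have hpos_in : 0 < ∑ e' ∈ Efin.filter (fun e' => e'.2 = e.2), ψ e' n₀ :=
        lt_of_lt_of_le he.2 (Finset.single_le_sum
          (fun x hx => hpos x ((hmem x).mp (Finset.mem_filter.mp hx).1) n₀) hein)
      rw [hb] at hpos_in
      obtain ⟨e', he'f, he'pos⟩ : ∃ e' ∈ Efin.filter (fun e' => e'.1 = e.2), 0 < ψ e' n₀ := by
        by_contra hcon
        push_neg at hcon
        have hsn : ∑ e' ∈ Efin.filter (fun e' => e'.1 = e.2), ψ e' n₀ ≤ 0 :=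
          Finset.sum_nonpos hcon
        linarith
      obtain ⟨he'E, he'1⟩ := Finset.mem_filter.mp he'f
      have he'G : e' ∈ G.edges := (hmem e').mp he'E
      refine ⟨e', ⟨he'G, he'pos⟩, he'1, ?_⟩
      rw [hedim e' he'G, he'1]
    have hback : ∀ e ∈ E, e.1 ≠ ⊥ →
        ∃ e' ∈ E, e'.2 = e.1 ∧ finrank ℝ ↥e'.1 + 1 = finrank ℝ ↥e.1 := by
      intro e he hbot
      have heG : e ∈ G.edges := he.1
      have hv : e.1 ∈ G.verts := (hG.2.2.2.2.2.1 e heG).1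
      have htop : e.1 ≠ ⊤ := by
        intro h
        have hd := hedim e heG
        have h1 : finrank ℝ ↥e.2 ≤ finrank ℝ (⊤ : Submodule ℝ H) := by
          rw [finrank_top]; exact Submodule.finrank_le e.2
        rw [h] at hd
        omega
      have hb := congrFun (hbalF e.1 hv hbot htop) n₀
      rw [Finset.sum_apply, Finset.sum_apply] at hb
      have hein : e ∈ Efin.filter (fun e' => e'.1 = e.1) :=
        Finset.mem_filter.mpr ⟨(hmem e).mpr heG, rfl⟩
      have hpos_out : 0 < ∑ e' ∈ Efin.filter (fun e' => e'.1 = e.1), ψ e' n₀ :=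
        lt_of_lt_of_le he.2 (Finset.single_le_sum
          (fun x hx => hpos x ((hmem x).mp (Finset.mem_filter.mp hx).1) n₀) hein)
      rw [← hb] at hpos_out
      obtain ⟨e', he'f, he'pos⟩ : ∃ e' ∈ Efin.filter (fun e' => e'.2 = e.1), 0 < ψ e' n₀ := by
        by_contra hcon
        push_neg at hcon
        have hsn : ∑ e' ∈ Efin.filter (fun e' => e'.2 = e.1), ψ e' n₀ ≤ 0 :=
          Finset.sum_nonpos hcon
        linarith
      obtain ⟨he'E, he'2⟩ := Finset.mem_filter.mp he'f
      have he'G : e' ∈ G.edges := (hmem e').mp he'E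
      refine ⟨e', ⟨he'G, he'pos⟩, he'2, ?_⟩
      have := hedim e' he'G
      rw [he'2] at this
      omega
    -- the chain through e₀
    obtain ⟨l, hl, hc, hmE, hhead, hlast, he₀l⟩ :=
      exists_through E hback hfwd e₀ ⟨he₀, hn₀pos⟩
    have hmG : ∀ x ∈ l, x ∈ G.edges := fun x hx => (hmE x hx).1
    have hdim : ∀ x ∈ l, finrank ℝ ↥x.2 = finrank ℝ ↥x.1 + 1 :=
      fun x hx => hedim x (hmG x hx)
    -- minimum along the chain
    obtain ⟨em, hemF, hminF⟩ := Finset.exists_min_image l.toFinset (fun e => ψ e n₀)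
      ⟨e₀, List.mem_toFinset.mpr he₀l⟩
    have heml : em ∈ l := List.mem_toFinset.mp hemF
    have hmin : ∀ x ∈ l, ψ em n₀ ≤ ψ x n₀ :=
      fun x hx => hminF x (List.mem_toFinset.mpr hx)
    have hδpos : 0 < ψ em n₀ := (hmE em heml).2
    set δ : ℝ := ψ em n₀ with hδdef
    set c₀ : Fin N → ℝ := fun n => if n = n₀ then δ else 0 with hc₀def
    set ind₀ : Edge → ℝ := Set.indicator {a | a ∈ l} 1 with hind₀def
    have hind1 : ∀ e ∈ l, ind₀ e = 1 := fun e he => Set.indicator_of_mem he 1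
    have hind0 : ∀ e, e ∉ l → ind₀ e = 0 := fun e he => Set.indicator_of_notMem he 1
    set ψ' : Edge → Fin N → ℝ := fun e => ψ e - ind₀ e • c₀ with hψ'def
    have hψ'app : ∀ e n, ψ' e n = ψ e n - ind₀ e * c₀ n := by
      intro e n; simp [hψ'def]
    -- nonnegativity of ψ'
    have hpos' : ∀ e ∈ G.edges, ∀ n, 0 ≤ ψ' e n := by
      intro e he n
      rw [hψ'app]
      by_cases hel : e ∈ l
      · rw [hind1 e hel]
        by_cases hn : n = n₀
        · subst hn
          simp only [hc₀def, if_pos rfl, one_mul]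
          have := hmin e hel
          linarith
        · simp only [hc₀def, if_neg hn, mul_zero, sub_zero]
          exact hpos e he n
      · rw [hind0 e hel]
        simp only [zero_mul, sub_zero]
        exact hpos e he n
    -- the key counting identity
    have hkey : ∀ (V : Submodule ℝ H), V ≠ ⊥ → V ≠ ⊤ →
        ∑ e ∈ Efin.filter (fun e => e.2 = V), ind₀ e
          = ∑ e ∈ Efin.filter (fun e => e.1 = V), ind₀ e := by
      intro V h1 h2
      rw [hind₀def, sum_indicator_list, sum_indicator_list]
      set A := (Efin.filter (fun e => e.2 = V)).filter (fun e => e ∈ l) with hA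
      set B := (Efin.filter (fun e => e.1 = V)).filter (fun e => e ∈ l) with hB
      have hmemA : ∀ x, x ∈ A ↔ (x ∈ l ∧ x.2 = V) := by
        intro x
        simp only [hA, Finset.mem_filter]
        constructor
        · rintro ⟨⟨-, h⟩, hx⟩; exact ⟨hx, h⟩
        · rintro ⟨hx, h⟩; exact ⟨⟨(hmem x).mpr (hmG x hx), h⟩, hx⟩
      have hmemB : ∀ x, x ∈ B ↔ (x ∈ l ∧ x.1 = V) := by
        intro x
        simp only [hB, Finset.mem_filter]
        constructor
        · rintro ⟨⟨-, h⟩, hx⟩; exact ⟨hx, h⟩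
        · rintro ⟨hx, h⟩; exact ⟨⟨(hmem x).mpr (hmG x hx), h⟩, hx⟩
      have hA1 : A.card ≤ 1 := by
        rw [Finset.card_le_one]
        intro a ha b hb
        rw [hmemA] at ha hb
        exact uniq_end l hl hc hdim hhead a ha.1 b hb.1 (ha.2.trans hb.2.symm)
      have hB1 : B.card ≤ 1 := by
        rw [Finset.card_le_one]
        intro a ha b hb
        rw [hmemB] at ha hb
        exact uniq_start l hl hc hdim hhead a ha.1 b hb.1 (ha.2.trans hb.2.symm)
      have hcards : A.card = B.card := by
        by_cases hAne : A.Nonempty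
        · obtain ⟨a, ha⟩ := hAne
          rw [hmemA] at ha
          obtain ⟨x, hx, hxV⟩ := (in_iff_out l hl hc hdim hhead hlast V h1 h2).mp ⟨a, ha.1, ha.2⟩
          have hBne : B.Nonempty := ⟨x, (hmemB x).mpr ⟨hx, hxV⟩⟩
          have := Finset.card_pos.mpr hBne
          have := Finset.card_pos.mpr ⟨a, (hmemA a).mpr ha⟩
          omega
        · have hBne : ¬B.Nonempty := by
            intro ⟨b, hb⟩
            rw [hmemB] at hb
            obtain ⟨x, hx, hxV⟩ := (in_iff_out l hl hc hdim hhead hlast V h1 h2).mpr ⟨b, hb.1, hb.2⟩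
            exact hAne ⟨x, (hmemA x).mpr ⟨hx, hxV⟩⟩
          rw [Finset.not_nonempty_iff_eq_empty] at hAne hBne
          rw [hAne, hBne]
      rw [hcards]
    -- balance of ψ'
    have hbal' : G.IsBalancedWeight ⊤ ψ' := by
      intro V hV h1 h2
      rw [finsum_in G Efin hEfin, finsum_out G Efin hEfin]
      have expand : ∀ (s : Finset Edge),
          ∑ e ∈ s, ψ' e = ∑ e ∈ s, ψ e - (∑ e ∈ s, ind₀ e) • c₀ := by
        intro s
        rw [hψ'def]
        rw [Finset.sum_sub_distrib, Finset.sum_smul]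
      rw [expand, expand, hbalF V hV h1 h2, hkey V h1 h2]
    -- support decreases
    have hsub : (Efin ×ˢ (Finset.univ : Finset (Fin N))).filter
          (fun p => ψ' p.1 p.2 ≠ 0)
        ⊂ (Efin ×ˢ (Finset.univ : Finset (Fin N))).filter
          (fun p => ψ p.1 p.2 ≠ 0) := by
      constructor
      · intro p hp
        obtain ⟨hp1, hp2⟩ := Finset.mem_filter.mp hp
        refine Finset.mem_filter.mpr ⟨hp1, ?_⟩
        intro h0
        apply hp2
        rw [hψ'app, h0]
        by_cases hel : p.1 ∈ l
        · by_cases hn : p.2 = n₀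
          · exfalso
            have := (hmE p.1 hel).2
            rw [← hn, h0] at this
            exact lt_irrefl 0 this
          · simp [hc₀def, hn]
        · simp [hind0 p.1 hel]
      · intro hss
        have hmemm : (em, n₀) ∈ (Efin ×ˢ (Finset.univ : Finset (Fin N))).filter
            (fun p => ψ p.1 p.2 ≠ 0) := by
          refine Finset.mem_filter.mpr ⟨Finset.mem_product.mpr
            ⟨(hmem em).mpr (hmG em heml), Finset.mem_univ n₀⟩, ?_⟩
          exact ne_of_gt hδpos
        have := hss hmemm
        obtain ⟨-, hcon⟩ := Finset.mem_filter.mp this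
        apply hcon
        rw [hψ'app, hind1 em heml]
        simp [hc₀def, hδdef]
    have hcard' : ((Efin ×ˢ (Finset.univ : Finset (Fin N))).filter
        (fun p => ψ' p.1 p.2 ≠ 0)).card ≤ s := by
      have := Finset.card_lt_card hsub
      omega
    obtain ⟨k, c, ind, hcpos, hchs, hdec, hout, hin⟩ := IH ψ' hpos' hbal' hcard'
    -- sum of ind₀ over edges out of ⊥ is 1
    have hout1 : ∑ e ∈ Efin.filter (fun e => e.1 = ⊥), ind₀ e = 1 := by
      rw [hind₀def, sum_indicator_list]
      have hcard1 : ((Efin.filter (fun e => e.1 = ⊥)).filter (fun e => e ∈ l)).card = 1 := by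
        have h0 : 0 < l.length := List.length_pos_iff.mpr hl
        have hg0 : l.get ⟨0, h0⟩ ∈ (Efin.filter (fun e => e.1 = ⊥)).filter (fun e => e ∈ l) := by
          refine Finset.mem_filter.mpr ⟨Finset.mem_filter.mpr
            ⟨(hmem _).mpr (hmG _ (l.get_mem _)), ?_⟩, l.get_mem _⟩
          rw [List.get_mk_zero]; exact hhead
        have hle : ((Efin.filter (fun e => e.1 = ⊥)).filter (fun e => e ∈ l)).card ≤ 1 := by
          rw [Finset.card_le_one]
          intro a ha b hb
          obtain ⟨ha1, ha2⟩ := Finset.mem_filter.mp ha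
          obtain ⟨hb1, hb2⟩ := Finset.mem_filter.mp hb
          exact uniq_start l hl hc hdim hhead a ha2 b hb2
            ((Finset.mem_filter.mp ha1).2.trans (Finset.mem_filter.mp hb1).2.symm)
        have hge := Finset.card_pos.mpr ⟨_, hg0⟩
        omega
      rw [hcard1]; norm_num
    -- sum of ind₀ over edges into ⊤ is 1
    have hin1 : ∑ e ∈ Efin.filter (fun e => e.2 = ⊤), ind₀ e = 1 := by
      rw [hind₀def, sum_indicator_list]
      have hcard1 : ((Efin.filter (fun e => e.2 = ⊤)).filter (fun e => e ∈ l)).card = 1 := by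
        have hg0 : l.getLast hl ∈ (Efin.filter (fun e => e.2 = ⊤)).filter (fun e => e ∈ l) := by
          refine Finset.mem_filter.mpr ⟨Finset.mem_filter.mpr
            ⟨(hmem _).mpr (hmG _ (List.getLast_mem hl)), hlast⟩, List.getLast_mem hl⟩
        have hle : ((Efin.filter (fun e => e.2 = ⊤)).filter (fun e => e ∈ l)).card ≤ 1 := by
          rw [Finset.card_le_one]
          intro a ha b hb
          obtain ⟨ha1, ha2⟩ := Finset.mem_filter.mp ha
          obtain ⟨hb1, hb2⟩ := Finset.mem_filter.mp hb
          exact uniq_end l hl hc hdim hhead a ha2 b hb2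
            ((Finset.mem_filter.mp ha1).2.trans (Finset.mem_filter.mp hb1).2.symm)
        have hge := Finset.card_pos.mpr ⟨_, hg0⟩
        omega
      rw [hcard1]; norm_num
    have expand : ∀ (s : Finset Edge),
        ∑ e ∈ s, ψ e = ∑ e ∈ s, ψ' e + (∑ e ∈ s, ind₀ e) • c₀ := by
      intro s
      rw [hψ'def, Finset.sum_sub_distrib, Finset.sum_smul, sub_add_cancel]
    refine ⟨k + 1, Fin.cons c₀ c, Fin.cons ind₀ ind, ?_, ?_, ?_, ?_, ?_⟩
    · intro i n
      refine Fin.cases ?_ (fun j => ?_) i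
      · rw [Fin.cons_zero]
        simp only [hc₀def]
        by_cases hn : n = n₀ <;> simp [hn, le_of_lt hδpos]
      · rw [Fin.cons_succ]
        exact hcpos j n
    · intro i
      refine Fin.cases ?_ (fun j => ?_) i
      · refine ⟨l.length, l.get, isChainFromTo_of_list G.edges l hl hc hmG hhead hlast, ?_⟩
        rw [Fin.cons_zero, hind₀def, range_get]
      · rw [Fin.cons_succ]
        exact hchs j
    · intro e he
      rw [Fin.sum_univ_succ]
      simp only [Fin.cons_zero, Fin.cons_succ]
      rw [← hdec e he, hψ'def]
      module
    · rw [finsum_out G Efin hEfin, expand, Fin.sum_univ_succ]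
      simp only [Fin.cons_zero, Fin.cons_succ]
      rw [← finsum_out G Efin hEfin ⊥ ψ', hout, hout1, one_smul]
      abel
    · rw [finsum_in G Efin hEfin, expand, Fin.sum_univ_succ]
      simp only [Fin.cons_zero, Fin.cons_succ]
      rw [← finsum_in G Efin hEfin ⊤ ψ', hin, hin1, one_smul]
      abel

end SGAux

/-- **Proposition 1.** Every nonnegative `[0,∞)^N`-valued balanced weight on a graph
decomposition of `H ≠ {0}` is a nonnegative linear combination of indicator functions
of maximal directed chains from `{0}` to `H`; its total mass is the sum of the
coefficients, and the sum of the weights of edges outgoing from `{0}` equals the sum of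
the weights of edges incoming to `H`. -/
theorem balanced_weight_eq_combination_of_chains
    {H : Type*} [NormedAddCommGroup H] [InnerProductSpace ℝ H] [FiniteDimensional ℝ H]
    (hH : Nontrivial H) {N : ℕ}
    (G : SubspaceGraph H) (hG : G.IsDecompositionOf ⊤)
    (φ : Submodule ℝ H × Submodule ℝ H → Fin N → ℝ)
    (hφ0 : ∀ e ∈ G.edges, ∀ n, 0 ≤ φ e n)
    (hbal : G.IsBalancedWeight ⊤ φ) :
    ∃ k : ℕ, 0 < k ∧
      ∃ (c : Fin k → Fin N → ℝ)
        (ind : Fin k → Submodule ℝ H × Submodule ℝ H → ℝ),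
        (∀ i n, 0 ≤ c i n) ∧
        (∀ i : Fin k, ∃ (m : ℕ) (ch : Fin m → Submodule ℝ H × Submodule ℝ H),
          IsChainFromTo G.edges ⊥ ⊤ ch ∧ ind i = (Set.range ch).indicator 1) ∧
        (∀ e ∈ G.edges, φ e = ∑ i : Fin k, ind i e • c i) ∧
        G.totalMass φ = ∑ i : Fin k, c i ∧
        (∑ᶠ e ∈ G.outgoingEdges ⊥, φ e) = ∑ᶠ e ∈ G.incomingEdges ⊤, φ e := by
  classical
  haveI := hH
  set Efin := hG.2.1.toFinset with hEfin0
  have hEfin : ↑Efin = G.edges := Set.Finite.coe_toFinset _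
  obtain ⟨k, c, ind, hcpos, hchs, hdec, hmass, hin⟩ :=
    SGAux.main_rec G hG Efin hEfin _ φ hφ0 hbal le_rfl
  have hedim : ∀ e ∈ G.edges, Module.finrank ℝ ↥e.2 = Module.finrank ℝ ↥e.1 + 1 :=
    fun e he => (hG.2.2.2.2.2.1 e he).2.2.2
  have hbt : (⊥ : Submodule ℝ H) ≠ ⊤ := by
    intro h
    have h0 : finrank ℝ (⊥ : Submodule ℝ H) = 0 := finrank_bot ℝ H
    rw [h, finrank_top] at h0
    exact (Module.finrank_pos (R := ℝ) (M := H)).ne' h0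
  obtain ⟨e, he, he1⟩ := hG.2.2.2.2.2.2.2 ⊥ hG.2.2.1 hbt
  have hback : ∀ x ∈ G.edges, x.1 ≠ ⊥ →
      ∃ e' ∈ G.edges, e'.2 = x.1 ∧ finrank ℝ ↥e'.1 + 1 = finrank ℝ ↥x.1 := by
    intro x hx h0
    obtain ⟨e', he', h2⟩ := hG.2.2.2.2.2.2.1 x.1 ((hG.2.2.2.2.2.1 x hx).1) h0
    refine ⟨e', he', h2, ?_⟩
    rw [← h2]
    exact (hedim e' he').symm
  have hfwd : ∀ x ∈ G.edges, x.2 ≠ ⊤ →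
      ∃ e' ∈ G.edges, e'.1 = x.2 ∧ finrank ℝ ↥e'.2 = finrank ℝ ↥x.2 + 1 := by
    intro x hx h0
    obtain ⟨e', he', h2⟩ := hG.2.2.2.2.2.2.2 x.2 ((hG.2.2.2.2.2.1 x hx).2.1) h0
    refine ⟨e', he', h2, ?_⟩
    rw [← h2]
    exact hedim e' he'
  obtain ⟨l, hl, hcn, hmG, hhead, hlast, -⟩ := SGAux.exists_through G.edges hback hfwd e he
  refine ⟨k + 1, Nat.succ_pos k, Fin.cons 0 c, Fin.cons (Set.indicator {a | a ∈ l} 1) ind,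
    ?_, ?_, ?_, ?_, ?_⟩
  · intro i n
    refine Fin.cases ?_ (fun j => ?_) i
    · simp
    · simpa using hcpos j n
  · intro i
    refine Fin.cases ?_ (fun j => ?_) i
    · exact ⟨l.length, l.get, SGAux.isChainFromTo_of_list G.edges l hl hcn hmG hhead hlast,
        by rw [Fin.cons_zero, SGAux.range_get]⟩
    · simpa using hchs j
  · intro e' he'
    rw [Fin.sum_univ_succ]
    simp only [Fin.cons_zero, Fin.cons_succ, smul_zero, zero_add]
    exact hdec e' he'
  · rw [SubspaceGraph.totalMass, Fin.sum_univ_succ]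
    simp only [Fin.cons_zero, Fin.cons_succ, zero_add]
    exact hmass
  · exact hmass.trans hin.symm

end
end

section
/- If 𝒢 is a graph decomposition of a finite-dimensional real Hilbert space H and π : H → W is a linear map into a finite-dimensional real Hilbert space, then the projected graph π(𝒢) is a graph decomposition of π(H). In particular: {0} and π(H) are vertices of π(𝒢); whenever an edge of π(𝒢) goes from V₁ to V₂ then V₁ ⊂ V₂ and dim V₂ = dim V₁ + 1; every vertex of π(𝒢) other than {0} has an incoming edge; and every vertex other than π(H) has an outgoing edge. -/
open MeasureTheory Module
open scoped ENNReal

noncomputable section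

namespace SubspaceGraph

variable {H : Type*} [NormedAddCommGroup H] [InnerProductSpace ℝ H]
variable {W : Type*} [NormedAddCommGroup W] [InnerProductSpace ℝ W]

/-- The projected graph `π(G)`: its vertices are the images under `π` of the vertices
of `G`, and two unequal vertices `V₁, V₂` are joined by a directed edge exactly when
some edge of `G` goes from `V₁'` to `V₂'` with `π(V₁') = V₁` and `π(V₂') = V₂`. -/
def proj (G : SubspaceGraph H) (π : H →ₗ[ℝ] W) : SubspaceGraph W where
  verts := (Submodule.map π) '' G.verts
  edges := {e | e.1 ≠ e.2 ∧
    ∃ e' ∈ G.edges, Submodule.map π e'.1 = e.1 ∧ Submodule.map π e'.2 = e.2}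

/-- The projected weight `π(φ)`: its value on an edge `e` of `π(G)` is the sum of
`φ e'` over all edges `e'` of `G` which project via `π` to `e`. -/
def projWeight {M : Type*} [AddCommMonoid M] (G : SubspaceGraph H) (π : H →ₗ[ℝ] W)
    (φ : Submodule ℝ H × Submodule ℝ H → M) (e : Submodule ℝ W × Submodule ℝ W) : M :=
  ∑ᶠ e' ∈ {e' ∈ G.edges |
    Submodule.map π e'.1 = e.1 ∧ Submodule.map π e'.2 = e.2}, φ e'

end SubspaceGraph

/-- The projected graph `π(G)` of a graph decomposition `G` of `H` is a graph
decomposition of `π(H)`; in particular `{0}` and `π(H)` are among its vertices, each of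
its edges goes from a subspace `V₁` to a subspace `V₂ ⊇ V₁` with
`dim V₂ = dim V₁ + 1`, every vertex other than `{0}` has an incoming edge, and every
vertex other than `π(H)` has an outgoing edge. -/
theorem proj_isDecompositionOf
    {H : Type*} [NormedAddCommGroup H] [InnerProductSpace ℝ H] [FiniteDimensional ℝ H]
    {W : Type*} [NormedAddCommGroup W] [InnerProductSpace ℝ W] [FiniteDimensional ℝ W]
    (G : SubspaceGraph H) (hG : G.IsDecompositionOf ⊤) (π : H →ₗ[ℝ] W) :
    (G.proj π).IsDecompositionOf (LinearMap.range π) := by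
  obtain ⟨hVfin, hEfin, hbot, htop, hle, hedge, hin, hout⟩ := hG
  have key : ∀ e' ∈ G.edges, Submodule.map π e'.1 ≠ Submodule.map π e'.2 →
      Submodule.map π e'.1 ≤ Submodule.map π e'.2 ∧
      finrank ℝ ↥(Submodule.map π e'.2) = finrank ℝ ↥(Submodule.map π e'.1) + 1 := by
    intro e' he' hne
    obtain ⟨_, _, h12, hdim⟩ := hedge e' he'
    have hlt : e'.1 < e'.2 := lt_of_le_of_ne h12 (fun h => by rw [h] at hdim; omega)
    obtain ⟨x, hx2, hx1⟩ := SetLike.exists_of_lt hlt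
    have hspan : e'.1 ⊔ (Submodule.span ℝ {x}) = e'.2 := by
      apply Submodule.eq_of_le_of_finrank_le
      · exact sup_le h12 ((Submodule.span_singleton_le_iff_mem _ _).2 hx2)
      · have hlt2 : e'.1 < e'.1 ⊔ Submodule.span ℝ {x} := by
          refine lt_of_le_of_ne le_sup_left ?_
          intro h
          exact hx1 (h ▸ le_sup_right (a := e'.1) (Submodule.mem_span_singleton_self x))
        have := Submodule.finrank_lt_finrank_of_lt hlt2
        omega
    have hmap : Submodule.map π e'.2 = Submodule.map π e'.1 ⊔ Submodule.span ℝ {π x} := by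
      rw [← hspan, Submodule.map_sup, Submodule.map_span, Set.image_singleton]
    have hle' : Submodule.map π e'.1 ≤ Submodule.map π e'.2 := Submodule.map_mono h12
    refine ⟨hle', ?_⟩
    have hub : finrank ℝ ↥(Submodule.map π e'.2) ≤ finrank ℝ ↥(Submodule.map π e'.1) + 1 := by
      rw [hmap]
      refine (Submodule.finrank_add_le_finrank_add_finrank _ _).trans ?_
      have : finrank ℝ ↥(Submodule.span ℝ {π x}) ≤ 1 := by
        rcases eq_or_ne (π x) 0 with h | h
        · rw [h, Submodule.span_zero_singleton]; simp
        · rw [finrank_span_singleton h]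
      omega
    have hlb := Submodule.finrank_lt_finrank_of_lt (lt_of_le_of_ne hle' hne)
    omega
  refine ⟨hVfin.image _, ?_, ⟨⊥, hbot, Submodule.map_bot π⟩,
    ⟨⊤, htop, Submodule.map_top π⟩, ?_, ?_, ?_, ?_⟩
  · refine Set.Finite.subset (hEfin.image
      (fun e' => (Submodule.map π e'.1, Submodule.map π e'.2))) ?_
    rintro e ⟨-, e', he', h1, h2⟩
    exact ⟨e', he', Prod.ext h1 h2⟩
  · rintro V ⟨V', hV', rfl⟩
    rw [← Submodule.map_top π]
    exact Submodule.map_mono (hle V' hV')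
  · rintro ⟨V₁, V₂⟩ ⟨hne, e', he', h1, h2⟩
    obtain ⟨hm1, hm2, -, -⟩ := hedge e' he'
    obtain ⟨hle', hdim⟩ := key e' he' (by rw [h1, h2]; exact hne)
    rw [h1, h2] at hle' hdim
    exact ⟨⟨e'.1, hm1, h1⟩, ⟨e'.2, hm2, h2⟩, hle', hdim⟩
  · rintro V ⟨V₀, hV₀, rfl⟩ hVne
    set S : Set (Submodule ℝ H) := {V' ∈ G.verts | Submodule.map π V' = Submodule.map π V₀}
    obtain ⟨V', ⟨hV'v, hV'map⟩, hmin⟩ := Set.exists_min_image S (fun V' => finrank ℝ ↥V')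
      (hVfin.subset (fun x hx => hx.1)) ⟨V₀, hV₀, rfl⟩
    have hV'bot : V' ≠ ⊥ := by
      rintro rfl
      exact hVne (by rw [← hV'map, Submodule.map_bot])
    obtain ⟨e', he', he'2⟩ := hin V' hV'v hV'bot
    obtain ⟨hm1, -, -, hdim⟩ := hedge e' he'
    have hne' : Submodule.map π e'.1 ≠ Submodule.map π V₀ := by
      intro h
      have := hmin e'.1 ⟨hm1, h⟩
      rw [he'2] at hdim
      omega
    refine ⟨(Submodule.map π e'.1, Submodule.map π V₀), ⟨hne', e', he', rfl, ?_⟩, rfl⟩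
    rw [he'2, hV'map]
  · rintro V ⟨V₀, hV₀, rfl⟩ hVne
    set S : Set (Submodule ℝ H) := {V' ∈ G.verts | Submodule.map π V' = Submodule.map π V₀}
    obtain ⟨V', ⟨hV'v, hV'map⟩, hmax⟩ := Set.exists_max_image S (fun V' => finrank ℝ ↥V')
      (hVfin.subset (fun x hx => hx.1)) ⟨V₀, hV₀, rfl⟩
    have hV'top : V' ≠ ⊤ := by
      rintro rfl
      exact hVne (by rw [← hV'map, Submodule.map_top])
    obtain ⟨e', he', he'1⟩ := hout V' hV'v hV'top
    obtain ⟨-, hm2, -, hdim⟩ := hedge e' he'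
    have hne' : Submodule.map π V₀ ≠ Submodule.map π e'.2 := by
      intro h
      have := hmax e'.2 ⟨hm2, h.symm⟩
      rw [he'1] at hdim
      omega
    refine ⟨(Submodule.map π V₀, Submodule.map π e'.2), ⟨hne', e', he', ?_, rfl⟩, rfl⟩
    rw [he'1, hV'map]

end
end

section
/- Let 𝒢 be a graph decomposition of a finite-dimensional real Hilbert space H, let π : H → W be a linear map, and let e_1, …, e_k be a directed chain of edges in 𝒢 from {0} to H. Let e_{i_1}, …, e_{i_ℓ} with i_1 < ⋯ < i_ℓ be exactly those edges among e_1, …, e_k whose two endpoint subspaces project via π to distinct subspaces of π(H). Then π(e_{i_1}), …, π(e_{i_ℓ}) is a directed chain of edges in the projected graph π(𝒢) which begins at {0} and ends at π(H). -/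
open MeasureTheory Module
open scoped ENNReal

noncomputable section

/-- Projecting a maximal chain: if `c` is a chain of edges in `G` from `{0}` to `H`,
and `ι` enumerates (in increasing order) exactly those indices whose edges have
endpoints projecting to distinct subspaces via `π`, then the projected edges form a
directed chain in `π(G)` beginning at `{0}` and ending at `π(H)`. -/
theorem proj_chain_isChain
    {H : Type*} [NormedAddCommGroup H] [InnerProductSpace ℝ H] [FiniteDimensional ℝ H]
    {W : Type*} [NormedAddCommGroup W] [InnerProductSpace ℝ W] [FiniteDimensional ℝ W]
    (G : SubspaceGraph H) (hG : G.IsDecompositionOf ⊤) (π : H →ₗ[ℝ] W)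
    {k : ℕ} (c : Fin k → Submodule ℝ H × Submodule ℝ H)
    (hc : IsChainFromTo G.edges ⊥ ⊤ c)
    {ℓ : ℕ} (ι : Fin ℓ → Fin k) (hι : StrictMono ι)
    (hιrange : ∀ j : Fin k, (∃ m, ι m = j) ↔
      Submodule.map π (c j).1 ≠ Submodule.map π (c j).2) :
    IsEdgeChain (G.proj π).edges
      (fun m => (Submodule.map π (c (ι m)).1, Submodule.map π (c (ι m)).2)) ∧
    (∀ h : 0 < ℓ, Submodule.map π (c (ι ⟨0, h⟩)).1 = ⊥ ∧
      Submodule.map π (c (ι ⟨ℓ - 1, Nat.sub_lt h Nat.one_pos⟩)).2 = LinearMap.range π) ∧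
    (ℓ = 0 → LinearMap.range π = ⊥) := by
  obtain ⟨⟨hmem, hchain⟩, hk, h0, hlast⟩ := hc
  have heq : ∀ j : Fin k, (¬ ∃ m, ι m = j) →
      Submodule.map π (c j).1 = Submodule.map π (c j).2 :=
    fun j hj => of_not_not (mt (hιrange j).mpr hj)
  -- key1: propagate `.1` along a segment of the chain whose edges become degenerate
  have key1 : ∀ b (hb : b < k), ∀ a, ∀ hab : a ≤ b,
      (∀ j (hj : j < k), a ≤ j → j < b →
        Submodule.map π (c ⟨j, hj⟩).1 = Submodule.map π (c ⟨j, hj⟩).2) →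
      Submodule.map π (c ⟨a, lt_of_le_of_lt hab hb⟩).1
        = Submodule.map π (c ⟨b, hb⟩).1 := by
    intro b
    induction b with
    | zero =>
      intro hb a hab _
      have : a = 0 := Nat.le_zero.mp hab
      subst this; rfl
    | succ b ih =>
      intro hb a hab h
      rcases Nat.lt_or_ge a (b + 1) with hlt | hge
      · have hab' : a ≤ b := Nat.lt_succ_iff.mp hlt
        have h1 := ih (Nat.lt_of_succ_lt hb) a hab'
          (fun j hj hja hjb => h j hj hja (Nat.lt_succ_of_lt hjb))
        have h2 := h b (Nat.lt_of_succ_lt hb) hab' (Nat.lt_succ_self b)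
        have h3 := hchain b hb
        exact h1.trans (h2.trans (congrArg _ h3))
      · have : a = b + 1 := le_antisymm hab hge
        subst this; rfl
  -- key2: propagate `.2` along a segment
  have key2 : ∀ b (hb : b < k), ∀ a, ∀ hab : a ≤ b,
      (∀ j (hj : j < k), a < j → j ≤ b →
        Submodule.map π (c ⟨j, hj⟩).1 = Submodule.map π (c ⟨j, hj⟩).2) →
      Submodule.map π (c ⟨a, lt_of_le_of_lt hab hb⟩).2
        = Submodule.map π (c ⟨b, hb⟩).2 := by
    intro b
    induction b with
    | zero =>
      intro hb a hab _
      have : a = 0 := Nat.le_zero.mp hab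
      subst this; rfl
    | succ b ih =>
      intro hb a hab h
      rcases Nat.lt_or_ge a (b + 1) with hlt | hge
      · have hab' : a ≤ b := Nat.lt_succ_iff.mp hlt
        have h1 := ih (Nat.lt_of_succ_lt hb) a hab'
          (fun j hj hja hjb => h j hj hja (Nat.le_succ_of_le hjb))
        have h2 := h (b + 1) hb (Nat.lt_succ_of_le hab') (le_refl _)
        have h3 := hchain b hb
        exact h1.trans ((congrArg _ h3).trans h2)
      · have : a = b + 1 := le_antisymm hab hge
        subst this; rfl
  -- key3: cross from `.2` at a to `.1` at b when everything strictly between is degenerate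
  have key3 : ∀ a b (hab : a < b) (hb : b < k),
      (∀ j (hj : j < k), a < j → j < b →
        Submodule.map π (c ⟨j, hj⟩).1 = Submodule.map π (c ⟨j, hj⟩).2) →
      Submodule.map π (c ⟨a, lt_trans hab hb⟩).2
        = Submodule.map π (c ⟨b, hb⟩).1 := by
    intro a b hab hb h
    have ha1 : a + 1 < k := lt_of_le_of_lt hab hb
    have h3 := hchain a ha1
    have h1 := key1 b hb (a + 1) hab
      (fun j hj hja hjb => h j hj (Nat.lt_of_succ_le hja) hjb)
    exact (congrArg _ h3).trans h1
  refine ⟨⟨fun m => ⟨(hιrange (ι m)).mp ⟨m, rfl⟩, c (ι m), hmem (ι m), rfl, rfl⟩, ?_⟩,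
    ?_, ?_⟩
  · -- consecutive edges of the projected chain match up
    intro m hm
    have hab : ι ⟨m, Nat.lt_of_succ_lt hm⟩ < ι ⟨m + 1, hm⟩ :=
      hι (Fin.mk_lt_mk.mpr (Nat.lt_succ_self m))
    have hgap : ∀ j (hj : j < k), (ι ⟨m, Nat.lt_of_succ_lt hm⟩ : ℕ) < j →
        j < (ι ⟨m + 1, hm⟩ : ℕ) →
        Submodule.map π (c ⟨j, hj⟩).1 = Submodule.map π (c ⟨j, hj⟩).2 := by
      intro j hj h1 h2
      refine heq ⟨j, hj⟩ ?_
      rintro ⟨m', hm'⟩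
      have hv : (ι m' : ℕ) = j := congrArg Fin.val hm'
      have h3 : (⟨m, Nat.lt_of_succ_lt hm⟩ : Fin ℓ) < m' :=
        hι.lt_iff_lt.mp (Fin.lt_def.mpr (by omega))
      have h4 : m' < (⟨m + 1, hm⟩ : Fin ℓ) :=
        hι.lt_iff_lt.mp (Fin.lt_def.mpr (by omega))
      rw [Fin.lt_def] at h3 h4
      simp only [Fin.val_mk] at h3 h4
      omega
    exact key3 (ι ⟨m, Nat.lt_of_succ_lt hm⟩ : ℕ) (ι ⟨m + 1, hm⟩ : ℕ) hab
      (ι ⟨m + 1, hm⟩).isLt hgap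
  · -- endpoints
    intro h
    constructor
    · have hgap : ∀ j (hj : j < k), 0 ≤ j → j < (ι ⟨0, h⟩ : ℕ) →
          Submodule.map π (c ⟨j, hj⟩).1 = Submodule.map π (c ⟨j, hj⟩).2 := by
        intro j hj _ h2
        refine heq ⟨j, hj⟩ ?_
        rintro ⟨m', hm'⟩
        have hv : (ι m' : ℕ) = j := congrArg Fin.val hm'
        have h3 : ι ⟨0, h⟩ ≤ ι m' := hι.monotone (Fin.mk_le_mk.mpr (Nat.zero_le _))
        rw [Fin.le_def] at h3
        omega
      have h1 := key1 (ι ⟨0, h⟩ : ℕ) (ι ⟨0, h⟩).isLt 0 (Nat.zero_le _) hgap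
      have h2 : Submodule.map π (c ⟨0, hk⟩).1 = ⊥ := by
        rw [h0]; exact Submodule.map_bot π
      exact h1.symm.trans h2
    · have hb : k - 1 < k := Nat.sub_lt hk Nat.one_pos
      set b : Fin k := ι ⟨ℓ - 1, Nat.sub_lt h Nat.one_pos⟩ with hbdef
      have hgap : ∀ j (hj : j < k), (b : ℕ) < j → j ≤ k - 1 →
          Submodule.map π (c ⟨j, hj⟩).1 = Submodule.map π (c ⟨j, hj⟩).2 := by
        intro j hj h2 _
        refine heq ⟨j, hj⟩ ?_
        rintro ⟨m', hm'⟩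
        have hv : (ι m' : ℕ) = j := congrArg Fin.val hm'
        have h3 : ι m' ≤ b := hι.monotone (Fin.mk_le_mk.mpr (by omega))
        rw [Fin.le_def] at h3
        omega
      have h1 := key2 (k - 1) hb (b : ℕ) (by omega) hgap
      have h2 : Submodule.map π (c ⟨k - 1, hb⟩).2 = LinearMap.range π := by
        rw [show (c ⟨k - 1, hb⟩).2 = ⊤ from hlast]; exact Submodule.map_top π
      exact h1.trans h2
  · -- if no edge survives, the range is trivial
    intro hℓ
    subst hℓ
    have hall : ∀ j (hj : j < k),
        Submodule.map π (c ⟨j, hj⟩).1 = Submodule.map π (c ⟨j, hj⟩).2 := by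
      intro j hj
      exact heq ⟨j, hj⟩ (by rintro ⟨m', -⟩; exact m'.elim0)
    have hb : k - 1 < k := Nat.sub_lt hk Nat.one_pos
    have h1 := key1 (k - 1) hb 0 (Nat.zero_le _) (fun j hj _ hjb => hall j hj)
    have h2 := hall (k - 1) hb
    have h3 : Submodule.map π (c ⟨0, hk⟩).1 = ⊥ := by
      rw [h0]; exact Submodule.map_bot π
    have h4 : Submodule.map π (c ⟨k - 1, hb⟩).2 = LinearMap.range π := by
      rw [show (c ⟨k - 1, hb⟩).2 = ⊤ from hlast]; exact Submodule.map_top π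
    exact h4.symm.trans (h2.symm.trans (h1.symm.trans h3))


end
end

section
/- Suppose 𝒢 is a graph decomposition of a finite-dimensional real Hilbert space H. For each nonnegative Lebesgue-measurable function f on H with finite integral, there exist nonnegative Borel-measurable functions f_e, one for each edge e of 𝒢, such that each f_e is a normalized edge function for e, and such that for every real-valued nonnegative balanced edge weight φ on 𝒢 with total mass τ, the factorization [f(x)]^τ = ‖f‖_1^τ · ∏_{e ∈ edges(𝒢)} [f_e(x)]^{φ(e)} holds for almost every x ∈ H, where ‖f‖_1 denotes the integral of f over H. -/
open MeasureTheory Module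
open scoped ENNReal RealInnerProductSpace
set_option synthInstance.maxHeartbeats 1000000
set_option maxHeartbeats 1000000
noncomputable section
section Marginal
variable {E : Type*} [NormedAddCommGroup E] [InnerProductSpace ℝ E] [FiniteDimensional ℝ E]
  [MeasurableSpace E] [BorelSpace E]

lemma measurePreserving_pair (V : Submodule ℝ E) :
    MeasurePreserving (fun p : ↥Vᗮ × ↥V => (↑p.1 + ↑p.2 : E))
      ((volume : Measure ↥Vᗮ).prod (volume : Measure ↥V)) (volume : Measure E) := by
  classical
  set k := finrank ℝ ↥Vᗮ with hk
  set m := finrank ℝ ↥V with hm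
  let b : OrthonormalBasis (Fin k) ℝ ↥Vᗮ := stdOrthonormalBasis ℝ ↥Vᗮ
  let c : OrthonormalBasis (Fin m) ℝ ↥V := stdOrthonormalBasis ℝ ↥V
  set d0 : Fin k ⊕ Fin m → E := Sum.elim (fun i => (b i : E)) (fun j => (c j : E)) with hd0
  have hon : Orthonormal ℝ d0 := by
    constructor
    · rintro (i | j) <;>
        simp only [d0, Sum.elim_inl, Sum.elim_inr, ← Submodule.coe_norm]
      · exact b.orthonormal.1 i
      · exact c.orthonormal.1 j
    · rintro (i | j) (i' | j') hne <;>
        simp only [d0, Sum.elim_inl, Sum.elim_inr]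
      · have := b.orthonormal.2 (show i ≠ i' by simpa using hne)
        simpa [Submodule.coe_inner] using this
      · rw [real_inner_comm]
        exact Submodule.inner_right_of_mem_orthogonal (c j').2 (b i).2
      · exact Submodule.inner_right_of_mem_orthogonal (c j).2 (b i').2
      · have := c.orthonormal.2 (show j ≠ j' by simpa using hne)
        simpa [Submodule.coe_inner] using this
  have hsp : ⊤ ≤ Submodule.span ℝ (Set.range d0) := by
    rw [Set.Sum.elim_range]
    rw [Submodule.span_union]
    have h1 : Submodule.span ℝ (Set.range fun i => (b i : E)) = Vᗮ := by
      have : (Set.range fun i => (b i : E)) = (Vᗮ.subtype) '' (Set.range b) := by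
        ext x; simp [Submodule.subtype]
      rw [this, ← Submodule.map_span]
      have hb : Submodule.span ℝ (Set.range ⇑b) = ⊤ := by
        rw [← b.coe_toBasis]; exact b.toBasis.span_eq
      rw [hb, Submodule.map_subtype_top]
    have h2 : Submodule.span ℝ (Set.range fun j => (c j : E)) = V := by
      have : (Set.range fun j => (c j : E)) = (V.subtype) '' (Set.range c) := by
        ext x; simp [Submodule.subtype]
      rw [this, ← Submodule.map_span]
      have hc : Submodule.span ℝ (Set.range ⇑c) = ⊤ := by
        rw [← c.coe_toBasis]; exact c.toBasis.span_eq
      rw [hc, Submodule.map_subtype_top]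
    rw [h1, h2, sup_comm, Submodule.sup_orthogonal_of_hasOrthogonalProjection]
  let d : OrthonormalBasis (Fin k ⊕ Fin m) ℝ E := OrthonormalBasis.mk hon hsp
  -- measurable equiv chainA
  let eA : ((Fin k → ℝ) × (Fin m → ℝ)) ≃ᵐ (↥Vᗮ × ↥V) :=
    ((MeasurableEquiv.toLp 2 (Fin k → ℝ)).trans
      b.repr.symm.toHomeomorph.toMeasurableEquiv).prodCongr
    ((MeasurableEquiv.toLp 2 (Fin m → ℝ)).trans
      c.repr.symm.toHomeomorph.toMeasurableEquiv)
  have hA : MeasurePreserving eA ((volume : Measure (Fin k → ℝ)).prod volume)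
      ((volume : Measure ↥Vᗮ).prod (volume : Measure ↥V)) :=
    (b.measurePreserving_repr_symm.comp
      (EuclideanSpace.volume_preserving_symm_measurableEquiv_toLp (Fin k)).symm).prod
    (c.measurePreserving_repr_symm.comp
      (EuclideanSpace.volume_preserving_symm_measurableEquiv_toLp (Fin m)).symm)
  have hB : MeasurePreserving
      (fun q : (Fin k → ℝ) × (Fin m → ℝ) => d.repr.symm
        ((MeasurableEquiv.toLp 2 (Fin k ⊕ Fin m → ℝ))
          ((MeasurableEquiv.sumPiEquivProdPi (fun _ : Fin k ⊕ Fin m => ℝ)).symm q)))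
      ((volume : Measure (Fin k → ℝ)).prod volume) (volume : Measure E) :=
    (d.measurePreserving_repr_symm.comp
      (EuclideanSpace.volume_preserving_symm_measurableEquiv_toLp (Fin k ⊕ Fin m)).symm).comp
      (MeasureTheory.volume_measurePreserving_sumPiEquivProdPi_symm _)
  have key : ∀ q : (Fin k → ℝ) × (Fin m → ℝ),
      ((eA q).1 : E) + ((eA q).2 : E) =
      d.repr.symm ((MeasurableEquiv.toLp 2 (Fin k ⊕ Fin m → ℝ))
        ((MeasurableEquiv.sumPiEquivProdPi (fun _ : Fin k ⊕ Fin m => ℝ)).symm q)) := by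
    rintro ⟨a, β⟩
    have h1 : ((eA (a, β)).1 : E) = ∑ i, a i • (b i : E) := by
      show ((b.repr.symm ((MeasurableEquiv.toLp 2 (Fin k → ℝ)) a) : ↥Vᗮ) : E) = _
      rw [← b.sum_repr_symm]
      push_cast
      rfl
    have h2 : ((eA (a, β)).2 : E) = ∑ j, β j • (c j : E) := by
      show ((c.repr.symm ((MeasurableEquiv.toLp 2 (Fin m → ℝ)) β) : ↥V) : E) = _
      rw [← c.sum_repr_symm]
      push_cast
      rfl
    rw [h1, h2, ← d.sum_repr_symm]
    rw [Fintype.sum_sum_type]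
    congr 1 <;>
    · apply Finset.sum_congr rfl; intro i _
      simp [d, d0, OrthonormalBasis.coe_mk, MeasurableEquiv.coe_toLp,
        MeasurableEquiv.coe_sumPiEquivProdPi_symm, Equiv.sumPiEquivProdPi_symm_apply]
  have : (fun p : ↥Vᗮ × ↥V => (↑p.1 + ↑p.2 : E)) =
      (fun q => d.repr.symm ((MeasurableEquiv.toLp 2 (Fin k ⊕ Fin m → ℝ))
        ((MeasurableEquiv.sumPiEquivProdPi (fun _ : Fin k ⊕ Fin m => ℝ)).symm q))) ∘ eA.symm := by
    funext p
    simp only [Function.comp_apply, ← key (eA.symm p), MeasurableEquiv.apply_symm_apply]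
  rw [this]
  exact hB.comp (hA.symm eA)


variable (g : E → ℝ≥0∞)


variable (g : E → ℝ≥0∞)

def Fm (V : Submodule ℝ E) (x : E) : ℝ≥0∞ := ∫⁻ v : ↥V, g (x + ↑v)

lemma measurable_Fm (hg : Measurable g) (V : Submodule ℝ E) : Measurable (Fm g V) := by
  apply Measurable.lintegral_prod_right' (f := fun p : E × ↥V => g (p.1 + ↑p.2))
  exact hg.comp (measurable_fst.add (measurable_subtype_coe.comp measurable_snd))

lemma Fm_add_mem (V : Submodule ℝ E) (x : E) {v : E} (hv : v ∈ V) :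
    Fm g V (x + v) = Fm g V x := by
  have : (fun u : ↥V => g (x + v + ↑u)) = fun u : ↥V => g (x + ↑((⟨v, hv⟩ : ↥V) + u)) := by
    funext u; push_cast; rw [add_assoc]
  rw [Fm, this]
  exact lintegral_add_left_eq_self (μ := (volume : Measure ↥V)) (fun u : ↥V => g (x + ↑u)) ⟨v, hv⟩

lemma lintegral_Fm_orth (hg : Measurable g) (V : Submodule ℝ E) :
    ∫⁻ u : ↥Vᗮ, Fm g V ↑u = ∫⁻ y, g y := by
  have hmeas : Measurable fun p : ↥Vᗮ × ↥V => g (↑p.1 + ↑p.2) :=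
    hg.comp ((measurable_subtype_coe.comp measurable_fst).add
      (measurable_subtype_coe.comp measurable_snd))
  calc ∫⁻ u : ↥Vᗮ, Fm g V ↑u = ∫⁻ u : ↥Vᗮ, ∫⁻ v : ↥V, g (↑u + ↑v) := rfl
    _ = ∫⁻ p : ↥Vᗮ × ↥V, g (↑p.1 + ↑p.2) ∂((volume : Measure ↥Vᗮ).prod volume) :=
        (lintegral_prod _ hmeas.aemeasurable).symm
    _ = ∫⁻ y, g y := (measurePreserving_pair V).lintegral_comp hg

lemma ae_Fm_ne_top (hg : Measurable g) (V : Submodule ℝ E) (hfin : ∫⁻ y, g y ≠ ∞) :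
    ∀ᵐ x : E ∂volume, Fm g V x ≠ ∞ := by
  have hFm := measurable_Fm g hg V
  have hS : MeasurableSet {x : E | Fm g V x = ∞} := hFm (measurableSet_singleton ∞)
  rw [ae_iff]
  have : {x : E | ¬Fm g V x ≠ ∞} = {x : E | Fm g V x = ∞} := by ext x; simp
  rw [this, ← (measurePreserving_pair V).measure_preimage hS.nullMeasurableSet]
  have hpre : (fun p : ↥Vᗮ × ↥V => (↑p.1 + ↑p.2 : E)) ⁻¹' {x : E | Fm g V x = ∞}
      = {u : ↥Vᗮ | Fm g V ↑u = ∞} ×ˢ Set.univ := by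
    ext ⟨u, v⟩
    simp only [Set.mem_preimage, Set.mem_setOf_eq, Set.mem_prod, Set.mem_univ, and_true]
    rw [Fm_add_mem g V _ v.2]
  rw [hpre, Measure.prod_prod]
  have hTnull : volume {u : ↥Vᗮ | Fm g V ↑u = ∞} = 0 := by
    have hint : ∫⁻ u : ↥Vᗮ, Fm g V ↑u ≠ ∞ := by rw [lintegral_Fm_orth g hg]; exact hfin
    have := ae_lt_top (hFm.comp measurable_subtype_coe) hint
    rw [ae_iff] at this
    convert this using 2
    ext u; simp
  rw [hTnull, zero_mul]

lemma ae_Fm_ne_zero (hg : Measurable g) (V : Submodule ℝ E) :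
    ∀ᵐ x : E ∂volume, g x ≠ 0 → Fm g V x ≠ 0 := by
  have hFm := measurable_Fm g hg V
  rw [ae_iff]
  have hset : {x : E | ¬(g x ≠ 0 → Fm g V x ≠ 0)} = {x : E | g x ≠ 0 ∧ Fm g V x = 0} := by
    ext x; by_cases h1 : g x = 0 <;> by_cases h2 : Fm g V x = 0 <;> simp [h1, h2]
  rw [hset]
  have hS : MeasurableSet {x : E | g x ≠ 0 ∧ Fm g V x = 0} :=
    ((hg (measurableSet_singleton 0)).compl).inter (hFm (measurableSet_singleton 0))
  rw [← (measurePreserving_pair V).measure_preimage hS.nullMeasurableSet]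
  have hpre : (fun p : ↥Vᗮ × ↥V => (↑p.1 + ↑p.2 : E)) ⁻¹' {x : E | g x ≠ 0 ∧ Fm g V x = 0}
      = {p : ↥Vᗮ × ↥V | g (↑p.1 + ↑p.2) ≠ 0 ∧ Fm g V ↑p.1 = 0} := by
    ext ⟨u, v⟩
    simp only [Set.mem_preimage, Set.mem_setOf_eq]
    rw [Fm_add_mem g V _ v.2]
  rw [hpre]
  have hmeasp : MeasurableSet {p : ↥Vᗮ × ↥V | g (↑p.1 + ↑p.2) ≠ 0 ∧ Fm g V ↑p.1 = 0} := by
    apply MeasurableSet.inter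
    · exact ((hg.comp ((measurable_subtype_coe.comp measurable_fst).add
        (measurable_subtype_coe.comp measurable_snd))) (measurableSet_singleton 0)).compl
    · exact ((hFm.comp measurable_subtype_coe).comp measurable_fst) (measurableSet_singleton 0)
  rw [Measure.prod_apply hmeasp]
  apply lintegral_eq_zero_iff ?_ |>.mpr
  · apply Filter.Eventually.of_forall
    intro u
    simp only [Pi.zero_apply]
    by_cases hu : Fm g V ↑u = 0
    · have : Prod.mk u ⁻¹' {p : ↥Vᗮ × ↥V | g (↑p.1 + ↑p.2) ≠ 0 ∧ Fm g V ↑p.1 = 0}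
          = {v : ↥V | g (↑u + ↑v) ≠ 0} := by ext v; simp [hu]
      rw [this]
      have h0 : ∫⁻ v : ↥V, g (↑u + ↑v) = 0 := hu
      have h1 := (lintegral_eq_zero_iff (hg.comp (measurable_const.add
        measurable_subtype_coe))).mp h0
      have h2 : ∀ᵐ v : ↥V, g (↑u + ↑v) = 0 := by
        filter_upwards [h1] with v hv using hv
      rw [ae_iff] at h2
      exact h2
    · have : Prod.mk u ⁻¹' {p : ↥Vᗮ × ↥V | g (↑p.1 + ↑p.2) ≠ 0 ∧ Fm g V ↑p.1 = 0}
          = ∅ := by ext v; simp [hu]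
      simp [this]
  · exact measurable_measure_prodMk_left hmeasp

lemma volume_univ_subsingleton {F : Type*} [NormedAddCommGroup F] [InnerProductSpace ℝ F]
    [FiniteDimensional ℝ F] [MeasurableSpace F] [BorelSpace F] [Subsingleton F] :
    (volume : Measure F) Set.univ = 1 := by
  have hk : finrank ℝ F = 0 := finrank_zero_of_subsingleton
  have : IsEmpty (Fin (finrank ℝ F)) := by rw [hk]; infer_instance
  let b := stdOrthonormalBasis ℝ F
  have h := b.measurePreserving_repr.measure_preimage
    (MeasurableSet.univ (α := EuclideanSpace ℝ (Fin (finrank ℝ F)))).nullMeasurableSet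
  have hp : ⇑b.repr ⁻¹' Set.univ = Set.univ := Set.preimage_univ
  rw [hp] at h
  rw [h, volume_euclideanSpace_eq_dirac, Measure.dirac_apply_of_mem (Set.mem_univ 0)]

lemma Fm_bot (x : E) : Fm g ⊥ x = g x := by
  have h : (fun v : ↥(⊥ : Submodule ℝ E) => g (x + ↑v)) = fun _ => g x := by
    funext v
    have hv : (v : E) = 0 := (Submodule.mem_bot ℝ).mp v.2
    rw [hv, add_zero]
  rw [Fm, h, lintegral_const, volume_univ_subsingleton, mul_one]

lemma Fm_top (hg : Measurable g) (x : E) : Fm g ⊤ x = ∫⁻ y, g y := by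
  let eT : E ≃ₗᵢ[ℝ] ↥(⊤ : Submodule ℝ E) :=
    { Submodule.topEquiv.symm with norm_map' := fun _ => rfl }
  have h := eT.measurePreserving.lintegral_comp
    (f := fun v : ↥(⊤ : Submodule ℝ E) => g (x + ↑v))
    (hg.comp (measurable_subtype_coe.const_add x))
  rw [Fm, ← h]
  exact lintegral_add_left_eq_self (μ := (volume : Measure E)) g x

lemma fubini_step (hg : Measurable g) {V₁ V₂ : Submodule ℝ E} (h12 : V₁ ≤ V₂)
    (hrank : finrank ℝ ↥V₂ = finrank ℝ ↥V₁ + 1) {w : E} (hw2 : w ∈ V₂) (hw1 : w ∈ V₁ᗮ)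
    (hnw : ‖w‖ = 1) (x : E) :
    ∫⁻ t : ℝ, Fm g V₁ (x + t • w) = Fm g V₂ x := by
  classical
  set W : Submodule ℝ ↥V₂ := Submodule.comap V₂.subtype V₁ with hW
  -- isometry between W and V₁
  let eW : ↥W ≃ₗᵢ[ℝ] ↥V₁ :=
    { Submodule.comapSubtypeEquivOfLe h12 with norm_map' := fun _ => rfl }
  have heW : ∀ u : ↥W, ((eW u : ↥V₁) : E) = ((u : ↥V₂) : E) := fun u => rfl
  -- inner integral computation
  have hinner : ∀ y : E, (∫⁻ v : ↥W, g (y + ↑(↑v : ↥V₂))) = Fm g V₁ y := by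
    intro y
    haveI : FiniteDimensional ℝ ↥W := inferInstance
    have h2 := (LinearIsometryEquiv.measurePreserving (E := ↥W) (F := ↥V₁) eW).lintegral_comp
      (f := fun v₁ : ↥V₁ => g (y + ↑v₁))
      (hg.comp (measurable_subtype_coe.const_add y))
    rw [Fm, ← h2]
    rfl
  -- w as element of Wᗮ
  have hwmem : (⟨w, hw2⟩ : ↥V₂) ∈ Wᗮ := by
    intro u hu
    exact hw1 (u : E) hu
  set w' : ↥Wᗮ := ⟨⟨w, hw2⟩, hwmem⟩ with hw'
  have hnw' : ‖w'‖ = 1 := hnw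
  have hw'ne : w' ≠ 0 := by
    intro h
    apply one_ne_zero (α := ℝ)
    rw [← hnw', h, norm_zero]
  -- dimension of Wᗮ is 1
  have hdimW : finrank ℝ ↥W = finrank ℝ ↥V₁ := by
    have := (Submodule.comapSubtypeEquivOfLe h12).finrank_eq
    exact this
  have hdim : finrank ℝ ↥Wᗮ = 1 := by
    have h1 := Submodule.finrank_add_finrank_orthogonal (K := W)
    omega
  have hspan : Submodule.span ℝ ({w'} : Set ↥Wᗮ) = ⊤ :=
    (finrank_eq_one_iff_of_nonzero w' hw'ne).mp hdim
  have hon : Orthonormal ℝ (fun _ : Fin 1 => w') := by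
    constructor
    · intro i; exact hnw'
    · intro i j hij; exact absurd (Subsingleton.elim i j) hij
  have hsp : ⊤ ≤ Submodule.span ℝ (Set.range (fun _ : Fin 1 => w')) := by
    rw [Set.range_const, hspan]
  let bL : OrthonormalBasis (Fin 1) ℝ ↥Wᗮ := OrthonormalBasis.mk hon hsp
  have hLfun : ∀ t : ℝ, bL.repr.symm ((MeasurableEquiv.toLp 2 (Fin 1 → ℝ))
      ((MeasurableEquiv.funUnique (Fin 1) ℝ).symm t)) = t • w' := by
    intro t
    rw [← bL.sum_repr_symm, Fin.sum_univ_one]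
    have h0 : bL 0 = w' := by simp [bL, OrthonormalBasis.coe_mk]
    rw [h0]
    rfl
  have hLmp : MeasurePreserving (fun t : ℝ => t • w') volume volume := by
    have h1 : MeasurePreserving (MeasurableEquiv.funUnique (Fin 1) ℝ).symm
        (volume : Measure ℝ) volume := (volume_preserving_funUnique (Fin 1) ℝ).symm
    have h2 := (EuclideanSpace.volume_preserving_symm_measurableEquiv_toLp (Fin 1)).symm
    have h3 := bL.measurePreserving_repr_symm
    have hcomp := (h3.comp h2).comp h1
    have : (fun t : ℝ => t • w') = (⇑bL.repr.symm ∘ ⇑(MeasurableEquiv.toLp 2 (Fin 1 → ℝ)))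
        ∘ ⇑(MeasurableEquiv.funUnique (Fin 1) ℝ).symm := by
      funext t; exact (hLfun t).symm
    rw [this]
    exact hcomp
  -- now assemble
  have hmeasV2 : Measurable (fun v : ↥V₂ => g (x + ↑v)) :=
    hg.comp (measurable_subtype_coe.const_add x)
  have hmeasp : Measurable (fun p : ↥Wᗮ × ↥W => g (x + (↑↑p.1 + ↑↑p.2))) := by
    apply hg.comp
    apply Measurable.const_add
    exact ((measurable_subtype_coe.comp measurable_subtype_coe).comp measurable_fst).add
      ((measurable_subtype_coe.comp measurable_subtype_coe).comp measurable_snd)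
  have hmeasFm1 : Measurable (fun u : ↥Wᗮ => Fm g V₁ (x + ↑↑u)) :=
    (measurable_Fm g hg V₁).comp
      ((measurable_subtype_coe.comp measurable_subtype_coe).const_add x)
  calc ∫⁻ t : ℝ, Fm g V₁ (x + t • w)
      = ∫⁻ t : ℝ, (fun u : ↥Wᗮ => Fm g V₁ (x + ↑↑u)) ((fun s : ℝ => s • w') t) := by
        apply lintegral_congr
        intro t
        simp only []
        congr 2
    _ = ∫⁻ u : ↥Wᗮ, Fm g V₁ (x + ↑↑u) := hLmp.lintegral_comp hmeasFm1
    _ = ∫⁻ u : ↥Wᗮ, ∫⁻ v : ↥W, g ((x + ↑↑u) + ↑↑v) := by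
        apply lintegral_congr
        intro u
        rw [← hinner (x + ↑↑u)]
    _ = ∫⁻ p : ↥Wᗮ × ↥W, g (x + (↑↑p.1 + ↑↑p.2))
          ∂((volume : Measure ↥Wᗮ).prod volume) := by
        rw [lintegral_prod _ hmeasp.aemeasurable]
        apply lintegral_congr; intro u; apply lintegral_congr; intro v
        rw [add_assoc]
    _ = ∫⁻ v : ↥V₂, g (x + ↑v) := by
        have hmp := measurePreserving_pair (E := ↥V₂) W
        have := hmp.lintegral_comp (f := fun v : ↥V₂ => g (x + ↑v)) hmeasV2
        rw [← this]
        rfl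
    _ = Fm g V₂ x := rfl

end Marginal

section EdgeFun
variable {E : Type*} [NormedAddCommGroup E] [InnerProductSpace ℝ E] [FiniteDimensional ℝ E]
  [MeasurableSpace E] [BorelSpace E]
variable (g : E → ℝ≥0∞)

def edgeFun (e : Submodule ℝ E × Submodule ℝ E) (x : E) : ℝ :=
  if Fm g e.2 x ≠ 0 ∧ Fm g e.2 x ≠ ∞ ∧ Fm g e.1 x ≠ ∞
  then (Fm g e.1 x).toReal / (Fm g e.2 x).toReal else 0

lemma edgeFun_nonneg (e : Submodule ℝ E × Submodule ℝ E) (x : E) : 0 ≤ edgeFun g e x := by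
  rw [edgeFun]
  split
  · positivity
  · exact le_refl 0

lemma measurable_edgeFun (hg : Measurable g) (e : Submodule ℝ E × Submodule ℝ E) :
    Measurable (edgeFun g e) := by
  have h1 := measurable_Fm g hg e.1
  have h2 := measurable_Fm g hg e.2
  apply Measurable.ite
  · apply MeasurableSet.inter
    · exact (h2 (measurableSet_singleton 0)).compl
    · exact MeasurableSet.inter ((h2 (measurableSet_singleton ∞)).compl)
        ((h1 (measurableSet_singleton ∞)).compl)
  · exact (h1.ennreal_toReal).div (h2.ennreal_toReal)
  · exact measurable_const

lemma edgeFun_add_mem (e : Submodule ℝ E × Submodule ℝ E) (h12 : e.1 ≤ e.2) (x : E) {v : E}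
    (hv : v ∈ e.1) : edgeFun g e (x + v) = edgeFun g e x := by
  rw [edgeFun, edgeFun, Fm_add_mem g e.1 x hv, Fm_add_mem g e.2 x (h12 hv)]

lemma lintegral_edgeFun_le_one (hg : Measurable g) {V₁ V₂ : Submodule ℝ E} (h12 : V₁ ≤ V₂)
    (hrank : finrank ℝ ↥V₂ = finrank ℝ ↥V₁ + 1) {w : E} (hw2 : w ∈ V₂) (hw1 : w ∈ V₁ᗮ)
    (hnw : ‖w‖ = 1) (x : E) :
    (∫⁻ t : ℝ, ENNReal.ofReal (edgeFun g (V₁, V₂) (x + t • w))) ≤ 1 := by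
  have hconst : ∀ t : ℝ, Fm g V₂ (x + t • w) = Fm g V₂ x := fun t =>
    Fm_add_mem g V₂ x (V₂.smul_mem t hw2)
  by_cases h2 : Fm g V₂ x ≠ 0 ∧ Fm g V₂ x ≠ ∞
  · have hbound : ∀ t : ℝ, ENNReal.ofReal (edgeFun g (V₁, V₂) (x + t • w)) ≤
        Fm g V₁ (x + t • w) / Fm g V₂ x := by
      intro t
      rw [edgeFun]
      by_cases h1 : Fm g V₁ (x + t • w) = ∞
      · rw [if_neg]
        · simp
        · simp [h1]
      · rw [if_pos]
        · simp only [hconst t]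
          rw [ENNReal.ofReal_div_of_pos (ENNReal.toReal_pos h2.1 h2.2),
            ENNReal.ofReal_toReal h1, ENNReal.ofReal_toReal h2.2]
        · refine ⟨?_, ?_, h1⟩ <;> simp [hconst t, h2.1, h2.2]
    calc (∫⁻ t : ℝ, ENNReal.ofReal (edgeFun g (V₁, V₂) (x + t • w)))
        ≤ ∫⁻ t : ℝ, Fm g V₁ (x + t • w) / Fm g V₂ x := lintegral_mono hbound
      _ = (∫⁻ t : ℝ, Fm g V₁ (x + t • w)) / Fm g V₂ x := by
          simp_rw [ENNReal.div_eq_inv_mul]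
          exact lintegral_const_mul (Fm g V₂ x)⁻¹ ((measurable_Fm g hg V₁).comp
            ((measurable_id.smul_const w).const_add x))
      _ = Fm g V₂ x / Fm g V₂ x := by
          rw [fubini_step g hg h12 hrank hw2 hw1 hnw x]
      _ ≤ 1 := ENNReal.div_self_le_one
  · have : ∀ t : ℝ, edgeFun g (V₁, V₂) (x + t • w) = 0 := by
      intro t
      rw [edgeFun, if_neg]
      intro hc
      exact h2 ⟨by rw [← hconst t]; exact hc.1, by rw [← hconst t]; exact hc.2.1⟩
    simp [this]
end EdgeFun

/-- A normalized edge function for an edge from `V₁` to `V₂`: a nonnegative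
Borel-measurable function on `H` which is invariant under translation by elements of
`V₁` and whose integral along every line in the direction of a unit vector of
`V₂ ∩ V₁ᵗ` is at most `1`. -/
def IsNormalizedEdgeFunction {H : Type*} [NormedAddCommGroup H] [InnerProductSpace ℝ H]
    [MeasurableSpace H] (V₁ V₂ : Submodule ℝ H) (f : H → ℝ) : Prop :=
  Measurable f ∧ (∀ x, 0 ≤ f x) ∧
  (∀ x : H, ∀ v ∈ V₁, f (x + v) = f x) ∧
  (∀ w ∈ V₂, w ∈ V₁ᗮ → ‖w‖ = 1 →
    ∀ x : H, (∫⁻ t : ℝ, ENNReal.ofReal (f (x + t • w))) ≤ 1)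

/-- **Proposition 3.** For every nonnegative integrable function `f` on `H` there exist
normalized edge functions `f_e`, one for each edge of the graph decomposition `G`, such
that for every real nonnegative balanced edge weight `φ` of total mass `τ` one has the
factorization `f(x)^τ = ‖f‖₁^τ · ∏_e f_e(x)^{φ(e)}` almost everywhere. -/
theorem exists_normalized_edge_factorization
    {H : Type*} [NormedAddCommGroup H] [InnerProductSpace ℝ H] [FiniteDimensional ℝ H]
    [MeasurableSpace H] [BorelSpace H]
    (G : SubspaceGraph H) (hG : G.IsDecompositionOf ⊤)
    (f : H → ℝ) (hf0 : ∀ x, 0 ≤ f x) (hf : Integrable f (volume : Measure H)) :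
    ∃ fe : Submodule ℝ H × Submodule ℝ H → H → ℝ,
      (∀ e ∈ G.edges, IsNormalizedEdgeFunction e.1 e.2 (fe e)) ∧
      ∀ φ : Submodule ℝ H × Submodule ℝ H → ℝ,
        (∀ e ∈ G.edges, 0 ≤ φ e) → G.IsBalancedWeight ⊤ φ →
        ∀ᵐ x ∂(volume : Measure H),
          f x ^ G.totalMass φ =
            (∫ y, f y) ^ G.totalMass φ * ∏ᶠ e ∈ G.edges, fe e x ^ φ e := by

  classical
  obtain ⟨f₀, hf₀meas, hff₀⟩ : ∃ f₀ : H → ℝ, Measurable f₀ ∧ f =ᵐ[(volume : Measure H)] f₀ :=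
    ⟨hf.aemeasurable.mk f, hf.aemeasurable.measurable_mk, hf.aemeasurable.ae_eq_mk⟩
  set fM : H → ℝ := fun x => max (f₀ x) 0 with hfMdef
  have hfMmeas : Measurable fM := hf₀meas.max measurable_const
  have hfM0 : ∀ x, 0 ≤ fM x := fun x => le_max_right _ _
  have hffM : f =ᵐ[(volume : Measure H)] fM := by
    filter_upwards [hff₀] with x hx
    rw [hfMdef]
    simp only
    rw [← hx]
    exact (max_eq_left (hf0 x)).symm
  set g : H → ℝ≥0∞ := fun x => ENNReal.ofReal (fM x) with hgdef
  have hg : Measurable g := hfMmeas.ennreal_ofReal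
  have hInt : ∫ y, f y = ∫ y, fM y := integral_congr_ae hffM
  have hfMInt : Integrable fM (volume : Measure H) := hf.congr hffM
  have hintnn : 0 ≤ ∫ y, f y := by
    rw [hInt]; exact integral_nonneg hfM0
  have hlint : ∫⁻ y, g y = ENNReal.ofReal (∫ y, f y) := by
    rw [hInt]
    exact (MeasureTheory.ofReal_integral_eq_lintegral_ofReal hfMInt
      (Filter.Eventually.of_forall hfM0)).symm
  obtain ⟨hVfin, hEfin, hbotV, htopV, hle, hedge, hinc, houtg⟩ := hG
  refine ⟨fun e => edgeFun g e, ?_, ?_⟩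
  · intro e he
    obtain ⟨h1v, h2v, h12, hrk⟩ := hedge e he
    refine ⟨measurable_edgeFun g hg e, edgeFun_nonneg g e,
      fun x v hv => edgeFun_add_mem g e h12 x hv, ?_⟩
    intro w hw2 hw1 hnw x
    have := lintegral_edgeFun_le_one g hg h12 hrk hw2 hw1 hnw x
    simpa using this
  intro φ hφ hbal
  -- Finset versions
  set Es : Finset (Submodule ℝ H × Submodule ℝ H) := hEfin.toFinset with hEsdef
  set Vs : Finset (Submodule ℝ H) := hVfin.toFinset with hVsdef
  have hmemE : ∀ e, e ∈ Es ↔ e ∈ G.edges := fun e => hEfin.mem_toFinset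
  have hmemV : ∀ V, V ∈ Vs ↔ V ∈ G.verts := fun V => hVfin.mem_toFinset
  have hcoeE : G.edges = ↑Es := hEfin.coe_toFinset.symm
  have hout' : ∀ V, (∑ᶠ e ∈ G.outgoingEdges V, φ e)
      = ∑ e ∈ Es.filter (fun e => e.1 = V), φ e := by
    intro V
    have h : G.outgoingEdges V = ↑(Es.filter (fun e => e.1 = V)) := by
      ext e
      simp only [SubspaceGraph.outgoingEdges, Set.mem_setOf_eq, Finset.coe_filter, hmemE e]
    rw [h, finsum_mem_coe_finset]
  have hin' : ∀ V, (∑ᶠ e ∈ G.incomingEdges V, φ e)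
      = ∑ e ∈ Es.filter (fun e => e.2 = V), φ e := by
    intro V
    have h : G.incomingEdges V = ↑(Es.filter (fun e => e.2 = V)) := by
      ext e
      simp only [SubspaceGraph.incomingEdges, Set.mem_setOf_eq, Finset.coe_filter, hmemE e]
    rw [h, finsum_mem_coe_finset]
  have hτout : G.totalMass φ = ∑ e ∈ Es.filter (fun e => e.1 = ⊥), φ e := hout' ⊥
  have hφ' : ∀ e ∈ Es, 0 ≤ φ e := fun e he => hφ e ((hmemE e).mp he)
  -- no edge ends at ⊥, no edge starts at ⊤
  have hne2bot : ∀ e ∈ Es, e.2 ≠ ⊥ := by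
    intro e he hc
    have hrk := (hedge e ((hmemE e).mp he)).2.2.2
    rw [hc, finrank_bot] at hrk
    omega
  have hne1top : ∀ e ∈ Es, e.1 ≠ ⊤ := by
    intro e he hc
    have hrk := (hedge e ((hmemE e).mp he)).2.2.2
    have hle2 : finrank ℝ ↥e.2 ≤ finrank ℝ H := e.2.finrank_le
    rw [hc, finrank_top] at hrk
    omega
  by_cases hbt : (⊥ : Submodule ℝ H) = ⊤
  · -- trivial space : no edges, total mass zero
    have hEempty : Es = ∅ := by
      rw [Finset.eq_empty_iff_forall_notMem]
      intro e he
      apply hne2bot e he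
      have h2v := (hedge e ((hmemE e).mp he)).2.1
      have h := hle e.2 h2v
      rw [← hbt] at h
      exact le_bot_iff.mp h
    have hτ0 : G.totalMass φ = 0 := by rw [hτout, hEempty]; simp
    have hprod1 : ∀ x : H, ∏ᶠ e ∈ G.edges, edgeFun g e x ^ φ e = 1 := by
      intro x
      apply finprod_mem_of_eqOn_one
      intro e he
      rw [hcoeE, hEempty] at he
      simp at he
    apply Filter.Eventually.of_forall
    intro x
    rw [hτ0, Real.rpow_zero, Real.rpow_zero, hprod1, mul_one]
  -- helper: τ = 0 implies φ vanishes on all edges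
  by_cases hτ : G.totalMass φ = 0
  · have hzero : ∀ n : ℕ, ∀ e ∈ Es, finrank ℝ ↥e.1 = n → φ e = 0 := by
      intro n
      induction n using Nat.strong_induction_on with
      | _ n ih =>
        intro e heE hrk1
        by_cases hb : e.1 = ⊥
        · have hsum0 : ∑ e' ∈ Es.filter (fun e' => e'.1 = (⊥ : Submodule ℝ H)), φ e' = 0 := by
            rw [← hτout]; exact hτ
          have hnn : ∀ e' ∈ Es.filter (fun e' => e'.1 = (⊥ : Submodule ℝ H)), 0 ≤ φ e' :=
            fun e' he' => hφ' e' (Finset.mem_filter.mp he').1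
          exact (Finset.sum_eq_zero_iff_of_nonneg hnn).mp hsum0 e
            (Finset.mem_filter.mpr ⟨heE, hb⟩)
        · have h1v := (hedge e ((hmemE e).mp heE)).1
          have hbalV := hbal e.1 h1v hb (hne1top e heE)
          rw [hin' e.1, hout' e.1] at hbalV
          have hin0 : ∑ e' ∈ Es.filter (fun e' => e'.2 = e.1), φ e' = 0 := by
            apply Finset.sum_eq_zero
            intro e' he'
            obtain ⟨he'E, he'2⟩ := Finset.mem_filter.mp he'
            have hrk' := (hedge e' ((hmemE e').mp he'E)).2.2.2
            rw [he'2, hrk1] at hrk'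
            have hnz : n ≠ 0 := by
              intro h0
              exact hb (Submodule.finrank_eq_zero.mp (by rw [hrk1, h0]))
            exact ih (finrank ℝ ↥e'.1) (by omega) e' he'E rfl
          rw [hin0] at hbalV
          have hnn : ∀ e' ∈ Es.filter (fun e' => e'.1 = e.1), 0 ≤ φ e' :=
            fun e' he' => hφ' e' (Finset.mem_filter.mp he').1
          exact (Finset.sum_eq_zero_iff_of_nonneg hnn).mp hbalV.symm e
            (Finset.mem_filter.mpr ⟨heE, rfl⟩)
    have hprod1 : ∀ x : H, ∏ᶠ e ∈ G.edges, edgeFun g e x ^ φ e = 1 := by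
      intro x
      apply finprod_mem_of_eqOn_one
      intro e he
      rw [hcoeE] at he
      show edgeFun g e x ^ φ e = 1
      rw [hzero (finrank ℝ ↥e.1) e (Finset.mem_coe.mp he) rfl, Real.rpow_zero]
    apply Filter.Eventually.of_forall
    intro x
    rw [hτ, Real.rpow_zero, Real.rpow_zero, hprod1, mul_one]
  · -- main case : τ ≠ 0
    have hae2 : ∀ᵐ x : H ∂volume, ∀ V ∈ G.verts, Fm g V x ≠ ∞ := by
      rw [MeasureTheory.ae_ball_iff hVfin.countable]
      intro V hV
      exact ae_Fm_ne_top g hg V (by rw [hlint]; exact ENNReal.ofReal_ne_top)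
    have hae3 : ∀ᵐ x : H ∂volume, ∀ V ∈ G.verts, g x ≠ 0 → Fm g V x ≠ 0 := by
      rw [MeasureTheory.ae_ball_iff hVfin.countable]
      intro V hV
      exact ae_Fm_ne_zero g hg V
    filter_upwards [hffM, hae2, hae3] with x hx1 hx2 hx3
    by_cases hfx : fM x = 0
    · -- zero value case
      rw [hx1, hfx, Real.zero_rpow hτ]
      have hsumne : ∑ e ∈ Es.filter (fun e => e.1 = (⊥ : Submodule ℝ H)), φ e ≠ 0 := by
        rw [← hτout]; exact hτ
      obtain ⟨e₀, he₀f, hφe₀⟩ : ∃ e₀ ∈ Es.filter (fun e => e.1 = (⊥ : Submodule ℝ H)), φ e₀ ≠ 0 := by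
        by_contra hc
        push_neg at hc
        exact hsumne (Finset.sum_eq_zero hc)
      obtain ⟨he₀E, he₀1⟩ := Finset.mem_filter.mp he₀f
      have hfe0 : edgeFun g e₀ x = 0 := by
        have hnum : Fm g e₀.1 x = 0 := by
          rw [he₀1, Fm_bot]
          simp [hgdef, hfx]
        rw [edgeFun]
        split
        · rw [hnum, ENNReal.toReal_zero, zero_div]
        · rfl
      have hprod0 : ∏ᶠ e ∈ G.edges, edgeFun g e x ^ φ e = 0 := by
        rw [hcoeE, finprod_mem_coe_finset]
        apply Finset.prod_eq_zero he₀E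
        rw [hfe0]
        exact Real.zero_rpow hφe₀
      rw [hprod0, mul_zero]
    · -- positive value case
      have hfxpos : 0 < fM x := lt_of_le_of_ne (hfM0 x) (Ne.symm hfx)
      have hgx : g x ≠ 0 := by
        simp only [hgdef]
        exact (ENNReal.ofReal_pos.mpr hfxpos).ne'
      set L : Submodule ℝ H → ℝ := fun V => Real.log ((Fm g V x).toReal) with hLdef
      have hpos : ∀ V ∈ G.verts, 0 < (Fm g V x).toReal :=
        fun V hV => ENNReal.toReal_pos (hx3 V hV hgx) (hx2 V hV)
      have hfactor : ∀ e ∈ Es, edgeFun g e x ^ φ e = Real.exp (φ e * (L e.1 - L e.2)) := by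
        intro e he
        obtain ⟨h1v, h2v, h12, hrk⟩ := hedge e ((hmemE e).mp he)
        have h1 := hpos e.1 h1v
        have h2 := hpos e.2 h2v
        have hfe : edgeFun g e x = (Fm g e.1 x).toReal / (Fm g e.2 x).toReal := by
          rw [edgeFun, if_pos]
          exact ⟨hx3 e.2 h2v hgx, hx2 e.2 h2v, hx2 e.1 h1v⟩
        rw [hfe, Real.rpow_def_of_pos (div_pos h1 h2), Real.log_div h1.ne' h2.ne', mul_comm]
      have hgoalprod : ∏ᶠ e ∈ G.edges, edgeFun g e x ^ φ e
          = Real.exp (∑ e ∈ Es, φ e * (L e.1 - L e.2)) := by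
        rw [hcoeE, finprod_mem_coe_finset, Finset.prod_congr rfl hfactor, ← Real.exp_sum]
      -- sum rearrangement
      set out : Submodule ℝ H → ℝ := fun V => ∑ e ∈ Es.filter (fun e => e.1 = V), φ e with houtdef
      set inn : Submodule ℝ H → ℝ := fun V => ∑ e ∈ Es.filter (fun e => e.2 = V), φ e with hinndef
      have hmaps1 : ∀ e ∈ Es, e.1 ∈ Vs := fun e he =>
        (hmemV e.1).mpr (hedge e ((hmemE e).mp he)).1
      have hmaps2 : ∀ e ∈ Es, e.2 ∈ Vs := fun e he =>
        (hmemV e.2).mpr (hedge e ((hmemE e).mp he)).2.1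
      have hA : ∑ e ∈ Es, φ e * L e.1 = ∑ V ∈ Vs, out V * L V := by
        rw [← Finset.sum_fiberwise_of_maps_to hmaps1 (fun e => φ e * L e.1)]
        apply Finset.sum_congr rfl
        intro V hV
        rw [houtdef]
        simp only
        rw [Finset.sum_mul]
        apply Finset.sum_congr rfl
        intro e he
        rw [(Finset.mem_filter.mp he).2]
      have hB : ∑ e ∈ Es, φ e * L e.2 = ∑ V ∈ Vs, inn V * L V := by
        rw [← Finset.sum_fiberwise_of_maps_to hmaps2 (fun e => φ e * L e.2)]
        apply Finset.sum_congr rfl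
        intro V hV
        rw [hinndef]
        simp only
        rw [Finset.sum_mul]
        apply Finset.sum_congr rfl
        intro e he
        rw [(Finset.mem_filter.mp he).2]
      have hAB : ∑ e ∈ Es, φ e * (L e.1 - L e.2) = ∑ V ∈ Vs, (out V - inn V) * L V := by
        calc ∑ e ∈ Es, φ e * (L e.1 - L e.2)
            = ∑ e ∈ Es, (φ e * L e.1 - φ e * L e.2) := by
              apply Finset.sum_congr rfl; intro e _; ring
          _ = (∑ e ∈ Es, φ e * L e.1) - ∑ e ∈ Es, φ e * L e.2 := Finset.sum_sub_distrib _ _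
          _ = (∑ V ∈ Vs, out V * L V) - ∑ V ∈ Vs, inn V * L V := by rw [hA, hB]
          _ = ∑ V ∈ Vs, (out V - inn V) * L V := by
              rw [← Finset.sum_sub_distrib]
              apply Finset.sum_congr rfl; intro V _; ring
      -- properties of out/inn
      have hinnbot : inn ⊥ = 0 := by
        rw [hinndef]
        simp only
        apply Finset.sum_eq_zero
        intro e he
        exact absurd (Finset.mem_filter.mp he).2 (hne2bot e (Finset.mem_filter.mp he).1)
      have houttop : out ⊤ = 0 := by
        rw [houtdef]
        simp only
        apply Finset.sum_eq_zero
        intro e he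
        exact absurd (Finset.mem_filter.mp he).2 (hne1top e (Finset.mem_filter.mp he).1)
      have hbal' : ∀ V ∈ Vs, V ≠ ⊥ → V ≠ ⊤ → out V - inn V = 0 := by
        intro V hV hVb hVt
        have := hbal V ((hmemV V).mp hV) hVb hVt
        rw [hin' V, hout' V] at this
        rw [houtdef, hinndef]
        simp only
        rw [← this]
        ring
      have hsumD : ∑ V ∈ Vs, (out V - inn V) = 0 := by
        rw [Finset.sum_sub_distrib]
        have h1 : ∑ V ∈ Vs, out V = ∑ e ∈ Es, φ e :=
          Finset.sum_fiberwise_of_maps_to hmaps1 φ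
        have h2 : ∑ V ∈ Vs, inn V = ∑ e ∈ Es, φ e :=
          Finset.sum_fiberwise_of_maps_to hmaps2 φ
        rw [h1, h2, sub_self]
      set τ : ℝ := G.totalMass φ with hτdef
      have hτbot : out ⊥ = τ := hτout.symm
      have hbotVs : (⊥ : Submodule ℝ H) ∈ Vs := (hmemV ⊥).mpr hbotV
      have htopVs : (⊤ : Submodule ℝ H) ∈ Vs := (hmemV ⊤).mpr htopV
      have htopVs' : (⊤ : Submodule ℝ H) ∈ Vs.erase ⊥ :=
        Finset.mem_erase.mpr ⟨Ne.symm hbt, htopVs⟩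
      have hsplit : ∀ F : Submodule ℝ H → ℝ,
          ∑ V ∈ Vs, F V = F ⊥ + F ⊤ + ∑ V ∈ (Vs.erase ⊥).erase ⊤, F V := by
        intro F
        rw [← Finset.add_sum_erase Vs F hbotVs, ← Finset.add_sum_erase (Vs.erase ⊥) F htopVs']
        ring
      have hrest0 : ∀ (c : Submodule ℝ H → ℝ), (∀ V, c V = out V - inn V) →
          ∑ V ∈ (Vs.erase ⊥).erase ⊤, (fun V => c V * L V) V = 0 ∧
          ∑ V ∈ (Vs.erase ⊥).erase ⊤, c V = 0 := by
        intro c hc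
        constructor <;>
        · apply Finset.sum_eq_zero
          intro V hV
          obtain ⟨hVt, hVb, hVs⟩ : V ≠ ⊤ ∧ V ≠ ⊥ ∧ V ∈ Vs := by
            obtain ⟨h1, h2⟩ := Finset.mem_erase.mp hV
            obtain ⟨h3, h4⟩ := Finset.mem_erase.mp h2
            exact ⟨h1, h3, h4⟩
          rw [hc V, hbal' V hVs hVb hVt]
          try simp
      have hinntop : inn ⊤ = τ := by
        have h1 := hsplit (fun V => out V - inn V)
        have h2 := (hrest0 (fun V => out V - inn V) (fun V => rfl)).2
        rw [hsumD, h2] at h1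
        rw [hinnbot, houttop, hτbot] at h1
        linarith
      have hsumL : ∑ V ∈ Vs, (out V - inn V) * L V = τ * (L ⊥ - L ⊤) := by
        have h1 := hsplit (fun V => (out V - inn V) * L V)
        have h2 := (hrest0 (fun V => out V - inn V) (fun V => rfl)).1
        rw [h2] at h1
        rw [hinnbot, houttop, hτbot, hinntop] at h1
        rw [h1]; ring
      rw [hgoalprod, hAB, hsumL]
      have hLbot : L ⊥ = Real.log (fM x) := by
        rw [hLdef]
        simp only
        rw [Fm_bot g x]
        simp only [hgdef]
        rw [ENNReal.toReal_ofReal (hfM0 x)]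
      have hFtop : Fm g ⊤ x = ENNReal.ofReal (∫ y, f y) := by rw [Fm_top g hg x, hlint]
      have hfintpos : 0 < ∫ y, f y := by
        have hne := hx3 ⊤ htopV hgx
        rw [hFtop] at hne
        rcases lt_or_eq_of_le hintnn with h | h
        · exact h
        · exact absurd (by rw [← h]; simp) hne
      have hLtop : L ⊤ = Real.log (∫ y, f y) := by
        rw [hLdef]
        simp only
        rw [hFtop, ENNReal.toReal_ofReal hintnn]
      rw [hx1, hLbot, hLtop]
      have hexp : Real.exp (τ * Real.log (fM x) - τ * Real.log (∫ y, f y))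
          = fM x ^ τ / (∫ y, f y) ^ τ := by
        rw [Real.exp_sub, mul_comm τ, mul_comm τ, Real.exp_mul, Real.exp_mul,
          Real.exp_log hfxpos, Real.exp_log hfintpos]
      rw [mul_sub, hexp, mul_comm, div_mul_cancel₀ _ (Real.rpow_pos_of_pos hfintpos τ).ne']

end
end

section
/- Suppose F is a nonnegative measurable function on a finite-dimensional real Hilbert space H and 𝒢 is a graph decomposition of H with real-valued nonnegative balanced edge weights φ having total mass 1. If F admits a factorization F(x) = ∏_{e ∈ edges(𝒢)} [F_e(x)]^{φ(e)} for almost every x ∈ H, where each F_e is a normalized edge function for e, then ∫_H F(x) dx ≤ 1. -/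
open MeasureTheory Module
open scoped ENNReal

noncomputable section

lemma pi_prod_lintegral_le :
    ∀ (n : ℕ) (g : Fin n → (Fin n → ℝ) → ℝ≥0∞),
    (∀ i, Measurable (g i)) →
    (∀ (i : Fin n) (y y' : Fin n → ℝ), (∀ j, i ≤ j → y j = y' j) → g i y = g i y') →
    (∀ (i : Fin n) (y : Fin n → ℝ), ∫⁻ t : ℝ, g i (Function.update y i t) ≤ 1) →
    ∫⁻ y, ∏ i, g i y ≤ 1 := by
  intro n
  induction n with
  | zero =>
    intro g _ _ _
    simp only [Finset.univ_eq_empty, Finset.prod_empty, lintegral_one]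
    rw [volume_pi, Measure.pi_univ]
    simp
  | succ n ih =>
    intro g hmeas hdep hint
    have hmp := MeasureTheory.volume_preserving_piFinSuccAbove (fun _ : Fin (n+1) => ℝ) 0
    set e := MeasurableEquiv.piFinSuccAbove (fun _ : Fin (n+1) => ℝ) 0 with he
    have hsymm : ∀ (t : ℝ) (z : Fin n → ℝ), e.symm (t, z) = Fin.cons t z := by
      intro t z
      show (Fin.insertNthEquiv (fun _ : Fin (n+1) => ℝ) 0).symm.symm (t, z) = _
      simp [Fin.insertNth_zero', Fin.consEquiv]
    have hG : Measurable fun p : ℝ × (Fin n → ℝ) => ∏ i, g i (e.symm p) :=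
      Finset.measurable_prod _ fun i _ => (hmeas i).comp e.symm.measurable
    have step1 : ∫⁻ y, ∏ i, g i y = ∫⁻ p : ℝ × (Fin n → ℝ), ∏ i, g i (e.symm p) := by
      rw [← (hmp.symm e).lintegral_comp (Finset.measurable_prod _ fun i _ => hmeas i)]
    rw [step1, Measure.volume_eq_prod, lintegral_prod_symm _ (by rw [← Measure.volume_eq_prod]; exact hG.aemeasurable)]
    -- now : ∫⁻ z, ∫⁻ t, ∏ i, g i (e.symm (t, z)) ≤ 1
    have hconsm : Measurable (fun z : Fin n → ℝ => (Fin.cons (0:ℝ) z : Fin (n+1) → ℝ)) := by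
      apply measurable_pi_lambda
      intro j
      refine Fin.cases ?_ ?_ j
      · simpa using measurable_const
      · intro k; simpa using measurable_pi_apply k
    set C : (Fin n → ℝ) → ℝ≥0∞ := fun z => ∏ i : Fin n, g i.succ (Fin.cons 0 z) with hC
    have inner_le : ∀ z : Fin n → ℝ, ∫⁻ t, ∏ i, g i (e.symm (t, z)) ≤ C z := by
      intro z
      have h1 : ∀ t : ℝ, ∏ i, g i (e.symm (t, z))
          = C z * g 0 (Fin.cons t z) := by
        intro t
        rw [hsymm, Fin.prod_univ_succ, mul_comm]
        congr 1
        apply Finset.prod_congr rfl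
        intro i _
        apply hdep
        intro j hj
        have hj0 : j ≠ 0 := by
          intro h; rw [h] at hj; exact (Fin.succ_ne_zero i) (le_antisymm hj (Fin.zero_le _))
        obtain ⟨k, rfl⟩ := Fin.exists_succ_eq.2 hj0
        simp
      simp only [h1]
      have hg0 : Measurable fun t : ℝ => g 0 (Fin.cons t z) := by
        apply (hmeas 0).comp
        apply measurable_pi_lambda
        intro j
        refine Fin.cases ?_ ?_ j
        · simp only [Fin.cons_zero]; exact measurable_id
        · intro k; simpa using measurable_const
      rw [lintegral_const_mul _ hg0]
      have : ∫⁻ t, g 0 (Fin.cons t z) ≤ 1 := by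
        have := hint 0 (Fin.cons 0 z)
        refine le_trans (le_of_eq ?_) this
        apply lintegral_congr
        intro t
        congr 1
        rw [Fin.update_cons_zero]
      calc C z * ∫⁻ t, g 0 (Fin.cons t z) ≤ C z * 1 := mul_le_mul' le_rfl this
        _ = C z := mul_one _
    refine le_trans (lintegral_mono inner_le) ?_
    apply ih (fun i z => g i.succ (Fin.cons 0 z))
    · intro i; exact (hmeas i.succ).comp hconsm
    · intro i z z' hz
      apply hdep
      intro j hj
      have hj0 : j ≠ 0 := by
        intro h; rw [h] at hj; exact (Fin.succ_ne_zero i) (le_antisymm hj (Fin.zero_le _))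
      obtain ⟨k, rfl⟩ := Fin.exists_succ_eq.2 hj0
      simp only [Fin.cons_succ]
      exact hz k (Fin.succ_le_succ_iff.mp hj)
    · intro i z
      have : ∀ t : ℝ, (Fin.cons (0:ℝ) (Function.update z i t) : Fin (n+1) → ℝ)
          = Function.update (Fin.cons 0 z) i.succ t := fun t => Fin.cons_update _ _ _ _
      simp only [this]
      exact hint i.succ (Fin.cons 0 z)

lemma chain_lintegral_le {H : Type*} [NormedAddCommGroup H] [InnerProductSpace ℝ H]
    [FiniteDimensional ℝ H] [MeasurableSpace H] [BorelSpace H]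
    {n : ℕ} (hn : finrank ℝ H = n) (P : ℕ → Submodule ℝ H)
    (hle : ∀ i < n, P i ≤ P (i+1))
    (hrk : ∀ i < n, finrank ℝ ↥(P (i+1)) = finrank ℝ ↥(P i) + 1)
    (f : ℕ → H → ℝ)
    (hf : ∀ i < n, IsNormalizedEdgeFunction (P i) (P (i+1)) (f i)) :
    ∫⁻ x, ∏ i ∈ Finset.range n, ENNReal.ofReal (f i x) ≤ 1 := by
  classical
  have hmono : ∀ a b, a ≤ b → b ≤ n → P a ≤ P b := by
    intro a b hab
    induction b, hab using Nat.le_induction with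
    | base => intro _; exact le_rfl
    | succ m ham ih => intro hm; exact le_trans (ih (by omega)) (hle m (by omega))
  -- construct orthonormal vectors
  have hex : ∀ i : Fin n, ∃ w : H, w ∈ P ((i : ℕ)+1) ∧ w ∈ (P (i : ℕ))ᗮ ∧ ‖w‖ = 1 := by
    intro i
    have hlt : P (i : ℕ) < P ((i : ℕ)+1) := by
      refine lt_of_le_of_ne (hle i i.isLt) ?_
      intro h
      have := hrk i i.isLt
      rw [← h] at this
      omega
    obtain ⟨v, hv2, hv1⟩ := SetLike.exists_of_lt hlt
    set u : H := v - (Submodule.orthogonalProjection (P (i : ℕ)) v : H) with hu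
    have hu_orth : u ∈ (P (i : ℕ))ᗮ := Submodule.sub_starProjection_mem_orthogonal (K := P (i : ℕ)) v
    have hu_mem : u ∈ P ((i : ℕ)+1) := by
      apply Submodule.sub_mem _ hv2
      exact hle i i.isLt (Submodule.orthogonalProjection (P (i : ℕ)) v).2
    have hu_ne : u ≠ 0 := by
      intro h
      apply hv1
      have : v = (Submodule.orthogonalProjection (P (i : ℕ)) v : H) := by
        rwa [hu, sub_eq_zero] at h
      rw [this]; exact (Submodule.orthogonalProjection (P (i : ℕ)) v).2
    refine ⟨(‖u‖⁻¹ : ℝ) • u, Submodule.smul_mem _ _ hu_mem, Submodule.smul_mem _ _ hu_orth, ?_⟩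
    exact norm_smul_inv_norm hu_ne
  choose w hw1 hw2 hw3 using hex
  have hwPle : ∀ (i : Fin n) (m : ℕ), (i : ℕ) < m → m ≤ n → w i ∈ P m := by
    intro i m him hmn
    exact hmono ((i : ℕ)+1) m (by omega) hmn (hw1 i)
  have honw : Orthonormal ℝ w := by
    rw [orthonormal_iff_ite]
    intro i j
    rcases eq_or_ne i j with rfl | hij
    · simp only [if_pos rfl]
      rw [real_inner_self_eq_norm_sq, hw3 i]; norm_num
    · rw [if_neg hij]
      rcases lt_or_gt_of_ne hij with h | h
      · -- i < j : w i ∈ P j, w j ∈ (P j)ᗮ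
        have hmem : w i ∈ P (j : ℕ) := hwPle i j (by exact_mod_cast h) (le_of_lt j.isLt)
        exact (Submodule.mem_orthogonal _ _).mp (hw2 j) (w i) hmem
      · have hmem : w j ∈ P (i : ℕ) := hwPle j i (by exact_mod_cast h) (le_of_lt i.isLt)
        rw [real_inner_comm]
        exact hw2 i (w j) hmem
  have hspan : ⊤ ≤ Submodule.span ℝ (Set.range w) := by
    have hli := honw.linearIndependent
    have h1 : finrank ℝ (Submodule.span ℝ (Set.range w)) = n := by
      rw [finrank_span_eq_card hli]; simp
    have := Submodule.eq_top_of_finrank_eq (S := Submodule.span ℝ (Set.range w)) (by rw [h1, hn])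
    rw [this]
  set b : OrthonormalBasis (Fin n) ℝ H := OrthonormalBasis.mk honw hspan with hb
  have hbw : ∀ i, b i = w i := fun i => by rw [hb, OrthonormalBasis.coe_mk]
  set e := (MeasurableEquiv.toLp 2 (Fin n → ℝ)).symm with he
  set T : (Fin n → ℝ) → H := fun y => b.repr.symm (e.symm y) with hT
  have hTmp : MeasurePreserving T volume volume :=
    (b.measurePreserving_repr_symm).comp
      (EuclideanSpace.volume_preserving_symm_measurableEquiv_toLp (Fin n)).symm
  have hTy : ∀ y : Fin n → ℝ, T y = ∑ j : Fin n, y j • w j := by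
    intro y
    have hsum := b.sum_repr_symm (e.symm y)
    calc T y = b.repr.symm (e.symm y) := rfl
      _ = ∑ i : Fin n, e.symm y i • b i := hsum.symm
      _ = ∑ j : Fin n, y j • w j := by
          apply Finset.sum_congr rfl
          intro j _
          rw [hbw]
          rfl
  set g : Fin n → (Fin n → ℝ) → ℝ≥0∞ := fun i y => ENNReal.ofReal (f i (T y)) with hg
  have step : ∫⁻ x, ∏ i ∈ Finset.range n, ENNReal.ofReal (f i x)
      = ∫⁻ y : Fin n → ℝ, ∏ i : Fin n, g i y := by
    rw [← hTmp.lintegral_comp]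
    · apply lintegral_congr; intro y
      rw [← Finset.prod_range (fun i => ENNReal.ofReal (f i (T y)))]
    · apply Finset.measurable_prod
      intro i hi
      exact ENNReal.measurable_ofReal.comp (hf i (Finset.mem_range.mp hi)).1
  rw [step]
  apply pi_prod_lintegral_le
  · intro i
    exact ENNReal.measurable_ofReal.comp ((hf i i.isLt).1.comp hTmp.measurable)
  · intro i y y' hyy
    have hmem : T y - T y' ∈ P (i : ℕ) := by
      rw [hTy, hTy, ← Finset.sum_sub_distrib]
      apply Submodule.sum_mem
      intro j _
      rw [← sub_smul]
      rcases le_or_gt i j with h | h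
      · rw [hyy j h, sub_self, zero_smul]; exact Submodule.zero_mem _
      · exact Submodule.smul_mem _ _ (hwPle j i (by exact_mod_cast h) (le_of_lt i.isLt))
    have : T y = T y' + (T y - T y') := by abel
    rw [hg]
    simp only
    rw [this, (hf i i.isLt).2.2.1 (T y') _ hmem]
  · intro i y
    have hupd : ∀ t : ℝ, T (Function.update y i t) = (T y - y i • w i) + t • w i := by
      intro t
      rw [hTy, hTy]
      have h1 : ∀ t : ℝ, (fun j => Function.update y i t j • w j)
          = Function.update (fun j : Fin n => y j • w j) i (t • w i) := by
        intro t
        funext j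
        rcases eq_or_ne j i with rfl | hj
        · simp
        · rw [Function.update_of_ne hj, Function.update_of_ne hj]
      have h2 : ∀ t : ℝ, ∑ j : Fin n, Function.update y i t j • w j
          = t • w i + ∑ j ∈ Finset.univ \ {i}, y j • w j := by
        intro t
        calc ∑ j : Fin n, Function.update y i t j • w j
            = ∑ j : Fin n, Function.update (fun j : Fin n => y j • w j) i (t • w i) j := by
              rw [h1]
          _ = t • w i + ∑ j ∈ Finset.univ \ {i}, y j • w j :=
              Finset.sum_update_of_mem (Finset.mem_univ i) _ _
      rw [h2]
      have h3 : ∑ j : Fin n, y j • w j = y i • w i + ∑ j ∈ Finset.univ \ {i}, y j • w j := by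
        have := h2 (y i)
        rw [← this]
        apply Finset.sum_congr rfl
        intro j _
        rw [Function.update_eq_self]
      rw [h3]
      abel
    simp only [hg, hupd]
    exact (hf i i.isLt).2.2.2 (w i) (hw1 i) (hw2 i) (hw3 i) (T y - y i • w i)

lemma rpow_sum_aux {ι : Type*} (x : ℝ≥0∞) (s : Finset ι) (f : ι → ℝ)
    (hf : ∀ i ∈ s, 0 ≤ f i) : x ^ (∑ i ∈ s, f i) = ∏ i ∈ s, x ^ f i := by
  classical
  induction s using Finset.cons_induction with
  | empty => simp
  | cons i s hi ih =>
    rw [Finset.sum_cons, Finset.prod_cons,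
      ENNReal.rpow_add_of_nonneg _ _ (hf i (Finset.mem_cons_self i s))
        (Finset.sum_nonneg fun j hj => hf j (Finset.mem_cons_of_mem hj)),
      ih (fun j hj => hf j (Finset.mem_cons_of_mem hj))]

open Classical in
lemma flow_decomp_aux {H : Type*} [NormedAddCommGroup H] [InnerProductSpace ℝ H]
    [FiniteDimensional ℝ H]
    {n : ℕ} (hn : finrank ℝ H = n)
    (E : Finset (Submodule ℝ H × Submodule ℝ H))
    (hE : ∀ e ∈ E, finrank ℝ ↥e.2 = finrank ℝ ↥e.1 + 1) :
    ∀ (N : ℕ) (φ : Submodule ℝ H × Submodule ℝ H → ℝ),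
    (∀ e ∈ E, 0 ≤ φ e) →
    (∀ V : Submodule ℝ H, V ≠ ⊥ → V ≠ ⊤ →
      ∑ e ∈ E.filter (fun e => e.2 = V), φ e = ∑ e ∈ E.filter (fun e => e.1 = V), φ e) →
    (E.filter (fun e => 0 < φ e)).card ≤ N →
    ∃ (k : ℕ) (c : Fin k → ℝ) (Q : Fin k → ℕ → Submodule ℝ H),
      (∀ j, 0 ≤ c j) ∧
      (∑ j, c j = ∑ e ∈ E.filter (fun e => e.1 = (⊥ : Submodule ℝ H)), φ e) ∧
      (∀ j, Q j 0 = ⊥) ∧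
      (∀ j, ∀ i, i < n → (Q j i, Q j (i+1)) ∈ E) ∧
      (∀ e ∈ E, φ e = ∑ j, if (Q j (finrank ℝ ↥e.1), Q j (finrank ℝ ↥e.1 + 1)) = e
        then c j else 0) := by
  classical
  -- the trivial case: all weights vanish
  have hallzero : ∀ (φ : Submodule ℝ H × Submodule ℝ H → ℝ), (∀ e ∈ E, φ e = 0) →
      ∃ (k : ℕ) (c : Fin k → ℝ) (Q : Fin k → ℕ → Submodule ℝ H),
      (∀ j, 0 ≤ c j) ∧
      (∑ j, c j = ∑ e ∈ E.filter (fun e => e.1 = (⊥ : Submodule ℝ H)), φ e) ∧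
      (∀ j, Q j 0 = ⊥) ∧
      (∀ j, ∀ i, i < n → (Q j i, Q j (i+1)) ∈ E) ∧
      (∀ e ∈ E, φ e = ∑ j, if (Q j (finrank ℝ ↥e.1), Q j (finrank ℝ ↥e.1 + 1)) = e
        then c j else 0) := by
    intro φ hz
    refine ⟨0, (fun _ => 0), (fun _ _ => ⊥), fun j => j.elim0, ?_, fun j => j.elim0,
      fun j => j.elim0, ?_⟩
    · rw [Finset.sum_eq_zero (fun e he => hz e (Finset.mem_filter.mp he).1)]
      simp
    · intro e he
      rw [hz e he]
      simp
  -- if the mass vanishes, all weights vanish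
  have hzeroflow : ∀ (φ : Submodule ℝ H × Submodule ℝ H → ℝ), (∀ e ∈ E, 0 ≤ φ e) →
      (∀ V : Submodule ℝ H, V ≠ ⊥ → V ≠ ⊤ →
        ∑ e ∈ E.filter (fun e => e.2 = V), φ e = ∑ e ∈ E.filter (fun e => e.1 = V), φ e) →
      (∑ e ∈ E.filter (fun e => e.1 = (⊥ : Submodule ℝ H)), φ e) = 0 →
      ∀ e ∈ E, φ e = 0 := by
    intro φ hφ0 hbal hm
    have key : ∀ (d : ℕ), ∀ e ∈ E, finrank ℝ ↥e.1 = d → φ e = 0 := by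
      intro d
      induction d using Nat.strong_induction_on with
      | _ d ih =>
        intro e he hd
        rcases Nat.eq_zero_or_pos d with rfl | hdpos
        · have h1 : e.1 = ⊥ := Submodule.finrank_eq_zero.mp hd
          have := (Finset.sum_eq_zero_iff_of_nonneg
            (fun e' he' => hφ0 e' (Finset.mem_filter.mp he').1)).mp hm e
            (Finset.mem_filter.mpr ⟨he, h1⟩)
          exact this
        · have hV1 : e.1 ≠ ⊥ := by
            intro h
            rw [h, finrank_bot] at hd
            omega
          have hdn : d < n := by
            have h2 := hE e he
            have h3 : finrank ℝ ↥e.2 ≤ n := hn ▸ e.2.finrank_le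
            omega
          have hV2 : e.1 ≠ ⊤ := by
            intro h
            rw [h, finrank_top, hn] at hd
            omega
          have hin : ∑ e' ∈ E.filter (fun e' => e'.2 = e.1), φ e' = 0 := by
            apply Finset.sum_eq_zero
            intro e' he'
            obtain ⟨he'E, he'2⟩ := Finset.mem_filter.mp he'
            apply ih (d - 1) (by omega) e' he'E
            have := hE e' he'E
            rw [he'2, hd] at this
            omega
          have hout := (hbal e.1 hV1 hV2).symm.trans hin
          exact (Finset.sum_eq_zero_iff_of_nonneg
            (fun e' he' => hφ0 e' (Finset.mem_filter.mp he').1)).mp hout e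
            (Finset.mem_filter.mpr ⟨he, rfl⟩)
    intro e he
    exact key _ e he rfl
  intro N
  induction N with
  | zero =>
    intro φ hφ0 hbal hcard
    apply hallzero
    intro e he
    by_contra h
    have hpos : 0 < φ e := lt_of_le_of_ne (hφ0 e he) (Ne.symm h)
    have : e ∈ E.filter (fun e => 0 < φ e) := Finset.mem_filter.mpr ⟨he, hpos⟩
    have := Finset.card_pos.mpr ⟨e, this⟩
    omega
  | succ N ih =>
    intro φ hφ0 hbal hcard
    by_cases hm : (∑ e ∈ E.filter (fun e => e.1 = (⊥ : Submodule ℝ H)), φ e) = 0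
    · exact hallzero φ (hzeroflow φ hφ0 hbal hm)
    -- positive mass
    have hmpos : 0 < ∑ e ∈ E.filter (fun e => e.1 = (⊥ : Submodule ℝ H)), φ e := by
      refine lt_of_le_of_ne ?_ (Ne.symm hm)
      exact Finset.sum_nonneg fun e he => hφ0 e (Finset.mem_filter.mp he).1
    -- there is a positive edge out of ⊥
    have hgood0 : ∃ e ∈ E, e.1 = (⊥ : Submodule ℝ H) ∧ 0 < φ e := by
      by_contra h
      push_neg at h
      apply hm
      apply Finset.sum_eq_zero
      intro e he
      obtain ⟨heE, he1⟩ := Finset.mem_filter.mp he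
      have := h e heE he1
      exact le_antisymm this (hφ0 e heE)
    have hnpos : 0 < n := by
      obtain ⟨e, he, he1, -⟩ := hgood0
      have h2 := hE e he
      have h3 : finrank ℝ ↥e.2 ≤ n := hn ▸ e.2.finrank_le
      rw [he1, finrank_bot] at h2
      omega
    -- construct a path of positive edges
    set next : Submodule ℝ H → Submodule ℝ H := fun V =>
      if h : ∃ e ∈ E, e.1 = V ∧ 0 < φ e then h.choose.2 else ⊤ with hnext
    set Q : ℕ → Submodule ℝ H := fun i => Nat.rec ⊥ (fun _ V => next V) i with hQdef
    have hQ0 : Q 0 = ⊥ := rfl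
    have hQsucc : ∀ i, Q (i+1) = next (Q i) := fun i => rfl
    have hstep : ∀ i, (∃ e ∈ E, e.1 = Q i ∧ 0 < φ e) →
        (Q i, Q (i+1)) ∈ E ∧ 0 < φ (Q i, Q (i+1)) := by
      intro i h
      have h1 : Q (i+1) = h.choose.2 := by
        rw [hQsucc, hnext]
        simp only [dif_pos h]
      obtain ⟨he, he1, heφ⟩ := h.choose_spec
      have h2 : h.choose = (Q i, Q (i+1)) := by
        rw [Prod.ext_iff]
        exact ⟨he1, h1.symm⟩
      rw [← h2]
      exact ⟨he, heφ⟩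
    -- invariant
    have hinv : ∀ i, i ≤ n → finrank ℝ ↥(Q i) = i ∧ (i < n → ∃ e ∈ E, e.1 = Q i ∧ 0 < φ e) := by
      intro i
      induction i with
      | zero =>
        intro _
        exact ⟨by rw [hQ0]; exact finrank_bot ℝ H, fun _ => hgood0⟩
      | succ i ihi =>
        intro hin
        obtain ⟨hrk, hgd⟩ := ihi (by omega)
        obtain ⟨heE, heφ⟩ := hstep i (hgd (by omega))
        have hrk1 : finrank ℝ ↥(Q (i+1)) = i + 1 := by
          have := hE _ heE
          simp only at this
          omega
        refine ⟨hrk1, ?_⟩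
        intro hin1
        -- Q (i+1) is an interior vertex with positive incoming flow
        have hV1 : Q (i+1) ≠ ⊥ := by
          intro h
          rw [h, finrank_bot] at hrk1
          omega
        have hV2 : Q (i+1) ≠ ⊤ := by
          intro h
          rw [h, finrank_top, hn] at hrk1
          omega
        have hinpos : 0 < ∑ e ∈ E.filter (fun e => e.2 = Q (i+1)), φ e := by
          have hmem : (Q i, Q (i+1)) ∈ E.filter (fun e => e.2 = Q (i+1)) :=
            Finset.mem_filter.mpr ⟨heE, rfl⟩
          calc (0:ℝ) < φ (Q i, Q (i+1)) := heφ
            _ ≤ ∑ e ∈ E.filter (fun e => e.2 = Q (i+1)), φ e :=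
              Finset.single_le_sum (fun e he => hφ0 e (Finset.mem_filter.mp he).1) hmem
        rw [hbal _ hV1 hV2] at hinpos
        by_contra h
        push_neg at h
        have : ∑ e ∈ E.filter (fun e => e.1 = Q (i+1)), φ e = 0 := by
          apply Finset.sum_eq_zero
          intro e he
          obtain ⟨heE', he1⟩ := Finset.mem_filter.mp he
          exact le_antisymm (h e heE' he1) (hφ0 e heE')
        rw [this] at hinpos
        exact lt_irrefl 0 hinpos
    have hrank : ∀ i, i ≤ n → finrank ℝ ↥(Q i) = i := fun i hi => (hinv i hi).1
    have hedge : ∀ i, i < n → (Q i, Q (i+1)) ∈ E ∧ 0 < φ (Q i, Q (i+1)) :=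
      fun i hi => hstep i ((hinv i (le_of_lt hi)).2 hi)
    -- the minimum weight along the path
    have hne : (Finset.range n).Nonempty := ⟨0, Finset.mem_range.mpr hnpos⟩
    set c₀ : ℝ := (Finset.range n).inf' hne (fun i => φ (Q i, Q (i+1))) with hc₀
    have hc₀pos : 0 < c₀ := by
      rw [hc₀, Finset.lt_inf'_iff]
      intro i hi
      exact (hedge i (Finset.mem_range.mp hi)).2
    have hc₀le : ∀ i < n, c₀ ≤ φ (Q i, Q (i+1)) := by
      intro i hi
      exact Finset.inf'_le _ (Finset.mem_range.mpr hi)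
    -- on-path predicate
    set onP : Submodule ℝ H × Submodule ℝ H → Prop :=
      fun e => (Q (finrank ℝ ↥e.1), Q (finrank ℝ ↥e.1 + 1)) = e with honP
    -- identification of on-path edges in incoming/outgoing filters
    have houtP : ∀ V : Submodule ℝ H, V ≠ ⊤ →
        (E.filter (fun e => e.1 = V)).filter onP
        = if Q (finrank ℝ ↥V) = V then {(Q (finrank ℝ ↥V), Q (finrank ℝ ↥V + 1))} else ∅ := by
      intro V hV2
      have hdn : finrank ℝ ↥V < n := by
        have h1 : finrank ℝ ↥V ≤ n := hn ▸ V.finrank_le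
        rcases eq_or_lt_of_le h1 with h | h
        · exact absurd (Submodule.eq_top_of_finrank_eq (by rw [h, hn])) hV2
        · exact h
      ext e
      simp only [Finset.mem_filter]
      constructor
      · rintro ⟨⟨heE, he1⟩, heP⟩
        have heP' : (Q (finrank ℝ ↥e.1), Q (finrank ℝ ↥e.1 + 1)) = e := heP
        have hfr : finrank ℝ ↥e.1 = finrank ℝ ↥V := by rw [he1]
        rw [hfr] at heP'
        have hq : Q (finrank ℝ ↥V) = V := by
          have h7 := congrArg Prod.fst heP'
          simpa [he1] using h7
        rw [if_pos hq, Finset.mem_singleton]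
        exact heP'.symm
      · intro he
        by_cases hq : Q (finrank ℝ ↥V) = V
        · rw [if_pos hq, Finset.mem_singleton] at he
          subst he
          have h1 : (Q (finrank ℝ ↥V), Q (finrank ℝ ↥V + 1)) ∈ E := (hedge _ hdn).1
          have h2 : finrank ℝ ↥(Q (finrank ℝ ↥V)) = finrank ℝ ↥V := hrank _ (le_of_lt hdn)
          refine ⟨⟨h1, hq⟩, ?_⟩
          show (Q (finrank ℝ ↥(Q (finrank ℝ ↥V))), Q (finrank ℝ ↥(Q (finrank ℝ ↥V)) + 1)) = _
          rw [h2]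
        · rw [if_neg hq] at he
          exact absurd he (Finset.notMem_empty e)
    have hinP : ∀ V : Submodule ℝ H, V ≠ ⊥ → V ≠ ⊤ →
        (E.filter (fun e => e.2 = V)).filter onP
        = if Q (finrank ℝ ↥V) = V then {(Q (finrank ℝ ↥V - 1), Q (finrank ℝ ↥V))} else ∅ := by
      intro V hV1 hV2
      have hdpos : 0 < finrank ℝ ↥V := by
        rcases Nat.eq_zero_or_pos (finrank ℝ ↥V) with h | h
        · exact absurd (Submodule.finrank_eq_zero.mp h) hV1
        · exact h
      have hdn : finrank ℝ ↥V < n := by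
        have h1 : finrank ℝ ↥V ≤ n := hn ▸ V.finrank_le
        rcases eq_or_lt_of_le h1 with h | h
        · exact absurd (Submodule.eq_top_of_finrank_eq (by rw [h, hn])) hV2
        · exact h
      have h5 : finrank ℝ ↥V - 1 + 1 = finrank ℝ ↥V := by omega
      ext e
      simp only [Finset.mem_filter]
      constructor
      · rintro ⟨⟨heE, he2⟩, heP⟩
        have heP' : (Q (finrank ℝ ↥e.1), Q (finrank ℝ ↥e.1 + 1)) = e := heP
        have hre : finrank ℝ ↥e.1 = finrank ℝ ↥V - 1 := by
          have := hE e heE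
          rw [he2] at this
          omega
        rw [hre, h5] at heP'
        have hq : Q (finrank ℝ ↥V) = V := by
          have h7 := congrArg Prod.snd heP'
          simpa [he2] using h7
        rw [if_pos hq, Finset.mem_singleton]
        exact heP'.symm
      · intro he
        by_cases hq : Q (finrank ℝ ↥V) = V
        · rw [if_pos hq, Finset.mem_singleton] at he
          subst he
          have h6 : finrank ℝ ↥V - 1 < n := by omega
          have h1 : (Q (finrank ℝ ↥V - 1), Q (finrank ℝ ↥V - 1 + 1)) ∈ E := (hedge _ h6).1
          rw [h5] at h1
          have h2 : finrank ℝ ↥(Q (finrank ℝ ↥V - 1)) = finrank ℝ ↥V - 1 :=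
            hrank _ (by omega)
          refine ⟨⟨h1, hq⟩, ?_⟩
          show (Q (finrank ℝ ↥(Q (finrank ℝ ↥V - 1))), Q (finrank ℝ ↥(Q (finrank ℝ ↥V - 1)) + 1))
            = _
          rw [h2, h5]
        · rw [if_neg hq] at he
          exact absurd he (Finset.notMem_empty e)
    -- the new weights
    set φ' : Submodule ℝ H × Submodule ℝ H → ℝ :=
      fun e => φ e - (if onP e then c₀ else 0) with hφ'
    have hφ'eq : ∀ e, φ e = (if onP e then c₀ else 0) + φ' e := by
      intro e; simp only [hφ']; ring
    have hφ'le : ∀ e, φ' e ≤ φ e := by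
      intro e
      simp only [hφ']
      by_cases h : onP e
      · rw [if_pos h]; linarith
      · rw [if_neg h]; linarith
    have hφ'0 : ∀ e ∈ E, 0 ≤ φ' e := by
      intro e he
      simp only [hφ']
      by_cases h : onP e
      · rw [if_pos h]
        have heP' : (Q (finrank ℝ ↥e.1), Q (finrank ℝ ↥e.1 + 1)) = e := h
        have hdn : finrank ℝ ↥e.1 < n := by
          have h2 := hE e he
          have h3 : finrank ℝ ↥e.2 ≤ n := hn ▸ e.2.finrank_le
          omega
        have := hc₀le _ hdn
        rw [heP'] at this
        linarith
      · rw [if_neg h]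
        linarith [hφ0 e he]
    -- sums of the indicator over filters
    have hindsum : ∀ (F : Finset (Submodule ℝ H × Submodule ℝ H)),
        ∑ e ∈ F, (if onP e then c₀ else 0) = ∑ e ∈ F.filter onP, c₀ := by
      intro F
      rw [Finset.sum_filter]
    have hbal' : ∀ V : Submodule ℝ H, V ≠ ⊥ → V ≠ ⊤ →
        ∑ e ∈ E.filter (fun e => e.2 = V), φ' e = ∑ e ∈ E.filter (fun e => e.1 = V), φ' e := by
      intro V hV1 hV2
      have h1 : ∀ (F : Finset (Submodule ℝ H × Submodule ℝ H)),
          ∑ e ∈ F, φ' e = ∑ e ∈ F, φ e - ∑ e ∈ F, (if onP e then c₀ else 0) := by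
        intro F
        rw [← Finset.sum_sub_distrib]
      rw [h1, h1, hbal V hV1 hV2, hindsum, hindsum, hinP V hV1 hV2, houtP V hV2]
      by_cases hq : Q (finrank ℝ ↥V) = V
      · rw [if_pos hq, if_pos hq]
        simp
      · rw [if_neg hq, if_neg hq]
    have hbotne : (⊥ : Submodule ℝ H) ≠ (⊤ : Submodule ℝ H) := by
      intro h
      have : finrank ℝ ↥(⊥ : Submodule ℝ H) = finrank ℝ ↥(⊤ : Submodule ℝ H) := by rw [h]
      rw [finrank_bot, finrank_top, hn] at this
      omega
    have hbotQ : Q (finrank ℝ (⊥ : Submodule ℝ H)) = ⊥ := by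
      rw [finrank_bot]; exact hQ0
    have hmass' : ∑ e ∈ E.filter (fun e => e.1 = (⊥ : Submodule ℝ H)), φ' e
        = (∑ e ∈ E.filter (fun e => e.1 = (⊥ : Submodule ℝ H)), φ e) - c₀ := by
      have h1 : ∑ e ∈ E.filter (fun e => e.1 = (⊥ : Submodule ℝ H)), φ' e
          = ∑ e ∈ E.filter (fun e => e.1 = (⊥ : Submodule ℝ H)), φ e
          - ∑ e ∈ E.filter (fun e => e.1 = (⊥ : Submodule ℝ H)), (if onP e then c₀ else 0) := by
        simp only [hφ']
        rw [← Finset.sum_sub_distrib]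
      rw [h1]
      congr 1
      rw [hindsum, houtP (⊥ : Submodule ℝ H) hbotne, if_pos hbotQ]
      simp
    -- the positive support strictly decreases
    obtain ⟨i₀, hi₀mem, hi₀⟩ := Finset.exists_mem_eq_inf' hne (fun i => φ (Q i, Q (i+1)))
    have hi₀n : i₀ < n := Finset.mem_range.mp hi₀mem
    have honPe₀ : onP (Q i₀, Q (i₀+1)) := by
      simp only [honP]
      have h2 : finrank ℝ ↥(Q i₀) = i₀ := hrank i₀ (le_of_lt hi₀n)
      simp only [h2]
    have hφ'e₀ : φ' (Q i₀, Q (i₀+1)) = 0 := by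
      simp only [hφ']
      rw [if_pos honPe₀, hc₀, hi₀]
      ring
    have hcard' : (E.filter (fun e => 0 < φ' e)).card ≤ N := by
      have hss : E.filter (fun e => 0 < φ' e) ⊂ E.filter (fun e => 0 < φ e) := by
        have hsub : E.filter (fun e => 0 < φ' e) ⊆ E.filter (fun e => 0 < φ e) := by
          intro e he
          obtain ⟨heE, heφ'⟩ := Finset.mem_filter.mp he
          exact Finset.mem_filter.mpr ⟨heE, lt_of_lt_of_le heφ' (hφ'le e)⟩
        rw [Finset.ssubset_iff_of_subset hsub]
        refine ⟨(Q i₀, Q (i₀+1)),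
          Finset.mem_filter.mpr ⟨(hedge i₀ hi₀n).1, (hedge i₀ hi₀n).2⟩, ?_⟩
        intro hmem
        have h9 := (Finset.mem_filter.mp hmem).2
        rw [hφ'e₀] at h9
        exact lt_irrefl 0 h9
      have := Finset.card_lt_card hss
      omega
    obtain ⟨k, c, Qs, hc0, hcsum, hQs0, hQsE, hQsid⟩ := ih φ' hφ'0 hbal' hcard'
    refine ⟨k+1, Fin.cons c₀ c, Fin.cons Q Qs, ?_, ?_, ?_, ?_, ?_⟩
    · intro j
      refine Fin.cases ?_ ?_ j
      · simpa using le_of_lt hc₀pos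
      · intro j
        simpa using hc0 j
    · rw [Fin.sum_univ_succ]
      simp only [Fin.cons_zero, Fin.cons_succ]
      rw [hcsum, hmass']
      ring
    · intro j
      refine Fin.cases ?_ ?_ j
      · simpa using hQ0
      · intro j
        simpa using hQs0 j
    · intro j
      refine Fin.cases ?_ ?_ j
      · intro i hi
        simpa using (hedge i hi).1
      · intro j
        simpa using hQsE j
    · intro e he
      rw [Fin.sum_univ_succ]
      simp only [Fin.cons_zero, Fin.cons_succ]
      rw [← hQsid e he]
      have h2 := hφ'eq e
      by_cases h : (Q (finrank ℝ ↥e.1), Q (finrank ℝ ↥e.1 + 1)) = e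
      · have h' : onP e := by simp only [honP]; exact h
        rw [if_pos h'] at h2
        rw [if_pos h]
        exact h2
      · have h' : ¬ onP e := by simp only [honP]; exact h
        rw [if_neg h'] at h2
        rw [if_neg h]
        simpa using h2

/-- **Proposition 4.** If a nonnegative measurable function `F` on `H` factors almost
everywhere as `∏_e F_e(x)^{φ(e)}` with each `F_e` a normalized edge function for the
edge `e` of a graph decomposition `G` carrying nonnegative balanced weights `φ` of
total mass `1`, then `∫_H F ≤ 1`. -/
theorem lintegral_le_one_of_normalized_factorization
    {H : Type*} [NormedAddCommGroup H] [InnerProductSpace ℝ H] [FiniteDimensional ℝ H]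
    [MeasurableSpace H] [BorelSpace H]
    (G : SubspaceGraph H) (hG : G.IsDecompositionOf ⊤)
    (F : H → ℝ) (hF0 : ∀ x, 0 ≤ F x) (hFm : Measurable F)
    (φ : Submodule ℝ H × Submodule ℝ H → ℝ)
    (hφ0 : ∀ e ∈ G.edges, 0 ≤ φ e)
    (hbal : G.IsBalancedWeight ⊤ φ) (hmass : G.totalMass φ = 1)
    (Fe : Submodule ℝ H × Submodule ℝ H → H → ℝ)
    (hFe : ∀ e ∈ G.edges, IsNormalizedEdgeFunction e.1 e.2 (Fe e))
    (hfact : ∀ᵐ x ∂(volume : Measure H), F x = ∏ᶠ e ∈ G.edges, Fe e x ^ φ e) :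
    ∫⁻ x : H, ENNReal.ofReal (F x) ≤ 1 := by
  classical
  obtain ⟨hvfin, hefin, hbotv, htopv, hsubv, hedgeprop, hinc, hout⟩ := hG
  set n := finrank ℝ H with hn'
  have hn : finrank ℝ H = n := rfl
  set Efin := hefin.toFinset with hEfin
  have hmemE : ∀ e, e ∈ Efin ↔ e ∈ G.edges := fun e => hefin.mem_toFinset
  have hcoeE : (↑Efin : Set (Submodule ℝ H × Submodule ℝ H)) = G.edges := hefin.coe_toFinset
  have hEprop : ∀ e ∈ Efin, finrank ℝ ↥e.2 = finrank ℝ ↥e.1 + 1 :=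
    fun e he => (hedgeprop e ((hmemE e).mp he)).2.2.2
  have hφ0F : ∀ e ∈ Efin, 0 ≤ φ e := fun e he => hφ0 e ((hmemE e).mp he)
  -- convert the balance and mass hypotheses to `Finset` sums
  have hinset : ∀ V : Submodule ℝ H,
      G.incomingEdges V = ↑(Efin.filter (fun e => e.2 = V)) := by
    intro V
    ext e
    simp only [SubspaceGraph.incomingEdges, Set.mem_setOf_eq, Finset.coe_filter,
      hefin.mem_toFinset, hmemE]
  have houtset : ∀ V : Submodule ℝ H,
      G.outgoingEdges V = ↑(Efin.filter (fun e => e.1 = V)) := by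
    intro V
    ext e
    simp only [SubspaceGraph.outgoingEdges, Set.mem_setOf_eq, Finset.coe_filter,
      hefin.mem_toFinset, hmemE]
  have hbalF : ∀ V : Submodule ℝ H, V ≠ ⊥ → V ≠ ⊤ →
      ∑ e ∈ Efin.filter (fun e => e.2 = V), φ e = ∑ e ∈ Efin.filter (fun e => e.1 = V), φ e := by
    intro V h1 h2
    by_cases hV : V ∈ G.verts
    · have hb := hbal V hV h1 h2
      rw [hinset V, houtset V, finsum_mem_coe_finset, finsum_mem_coe_finset] at hb
      exact hb
    · have e1 : Efin.filter (fun e => e.2 = V) = ∅ := by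
        apply Finset.filter_false_of_mem
        intro e he h
        exact hV (h ▸ (hedgeprop e ((hmemE e).mp he)).2.1)
      have e2 : Efin.filter (fun e => e.1 = V) = ∅ := by
        apply Finset.filter_false_of_mem
        intro e he h
        exact hV (h ▸ (hedgeprop e ((hmemE e).mp he)).1)
      rw [e1, e2]
  have hmassF : ∑ e ∈ Efin.filter (fun e => e.1 = (⊥ : Submodule ℝ H)), φ e = 1 := by
    have h := hmass
    rw [SubspaceGraph.totalMass, houtset ⊥, finsum_mem_coe_finset] at h
    exact h
  -- decompose the flow into paths
  obtain ⟨k, c, Qp, hc0, hcsum, hQ0, hQE, hQid⟩ :=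
    flow_decomp_aux hn Efin hEprop (Efin.filter (fun e => 0 < φ e)).card φ hφ0F hbalF le_rfl
  have hcsum1 : ∑ j, c j = 1 := by rw [hcsum, hmassF]
  -- ranks along each path
  have hQrank : ∀ (j : Fin k) (i : ℕ), i ≤ n → finrank ℝ ↥(Qp j i) = i := by
    intro j i
    induction i with
    | zero =>
      intro _
      rw [hQ0 j]
      exact finrank_bot ℝ H
    | succ i ihi =>
      intro hi
      have h1 : finrank ℝ ↥(Qp j (i+1)) = finrank ℝ ↥(Qp j i) + 1 :=
        hEprop _ (hQE j i (by omega))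
      rw [h1, ihi (by omega)]
  -- the line integral along each path is at most 1
  have hchain : ∀ j : Fin k,
      ∫⁻ x, ∏ i ∈ Finset.range n, ENNReal.ofReal (Fe (Qp j i, Qp j (i+1)) x) ≤ 1 := by
    intro j
    apply chain_lintegral_le hn (Qp j)
    · intro i hi
      exact (hedgeprop _ ((hmemE _).mp (hQE j i hi))).2.2.1
    · intro i hi
      exact hEprop _ (hQE j i hi)
    · intro i hi
      exact hFe _ ((hmemE _).mp (hQE j i hi))
  set g : Fin k → H → ℝ≥0∞ := fun j x =>
    ∏ e ∈ Efin.filter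
      (fun e : Submodule ℝ H × Submodule ℝ H =>
        (Qp j (finrank ℝ ↥e.1), Qp j (finrank ℝ ↥e.1 + 1)) = e),
      ENNReal.ofReal (Fe e x) with hg
  have hgmeas : ∀ j, Measurable (g j) := by
    intro j
    apply Finset.measurable_prod
    intro e he
    exact ENNReal.measurable_ofReal.comp
      (hFe e ((hmemE e).mp (Finset.mem_filter.mp he).1)).1
  have hgeq : ∀ (j : Fin k) (x : H),
      g j x = ∏ i ∈ Finset.range n, ENNReal.ofReal (Fe (Qp j i, Qp j (i+1)) x) := by
    intro j x
    simp only [hg]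
    symm
    apply Finset.prod_bij (fun (a : ℕ) (_ : a ∈ Finset.range n) => (Qp j a, Qp j (a+1)))
    · intro a ha
      rw [Finset.mem_filter]
      refine ⟨hQE j a (Finset.mem_range.mp ha), ?_⟩
      show (Qp j (finrank ℝ ↥(Qp j a)), Qp j (finrank ℝ ↥(Qp j a) + 1)) = _
      rw [hQrank j a (le_of_lt (Finset.mem_range.mp ha))]
    · intro a1 h1 a2 h2 heq
      have h3 := congrArg Prod.fst heq
      simp only at h3
      have r1 : finrank ℝ ↥(Qp j a1) = a1 := hQrank j a1 (le_of_lt (Finset.mem_range.mp h1))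
      have r2 : finrank ℝ ↥(Qp j a2) = a2 := hQrank j a2 (le_of_lt (Finset.mem_range.mp h2))
      rw [← r1, ← r2, h3]
    · intro e he
      obtain ⟨heE, hep⟩ := Finset.mem_filter.mp he
      have hd : finrank ℝ ↥e.2 ≤ n := hn ▸ e.2.finrank_le
      have hd2 := hEprop e heE
      exact ⟨finrank ℝ ↥e.1, Finset.mem_range.mpr (by omega), hep⟩
    · intro a ha
      rfl
  -- the pointwise identity
  have hpoint : ∀ x : H,
      ENNReal.ofReal (∏ᶠ e ∈ G.edges, Fe e x ^ φ e) = ∏ j : Fin k, (g j x) ^ (c j) := by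
    intro x
    rw [← hcoeE, finprod_mem_coe_finset,
      ENNReal.ofReal_prod_of_nonneg
        (fun e he => Real.rpow_nonneg ((hFe e ((hmemE e).mp he)).2.1 x) _)]
    have h1 : ∀ e ∈ Efin, ENNReal.ofReal (Fe e x ^ φ e) = ENNReal.ofReal (Fe e x) ^ φ e :=
      fun e he => (ENNReal.ofReal_rpow_of_nonneg ((hFe e ((hmemE e).mp he)).2.1 x) (hφ0F e he)).symm
    rw [Finset.prod_congr rfl h1]
    have h2 : ∀ e ∈ Efin, ENNReal.ofReal (Fe e x) ^ φ e
        = ∏ j : Fin k,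
          (if (Qp j (finrank ℝ ↥e.1), Qp j (finrank ℝ ↥e.1 + 1)) = e
            then ENNReal.ofReal (Fe e x) ^ (c j) else 1) := by
      intro e he
      rw [hQid e he, rpow_sum_aux _ _ _ (fun jj _ => by
        by_cases hh : (Qp jj (finrank ℝ ↥e.1), Qp jj (finrank ℝ ↥e.1 + 1)) = e
        · rw [if_pos hh]; exact hc0 jj
        · rw [if_neg hh])]
      apply Finset.prod_congr rfl
      intro jj _
      by_cases hh : (Qp jj (finrank ℝ ↥e.1), Qp jj (finrank ℝ ↥e.1 + 1)) = e
      · rw [if_pos hh, if_pos hh]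
      · rw [if_neg hh, if_neg hh, ENNReal.rpow_zero]
    rw [Finset.prod_congr rfl h2, Finset.prod_comm]
    apply Finset.prod_congr rfl
    intro j _
    rw [← Finset.prod_filter, ENNReal.prod_rpow_of_ne_top
      (fun e _ => ENNReal.ofReal_ne_top)]
  calc ∫⁻ x : H, ENNReal.ofReal (F x)
      = ∫⁻ x : H, ∏ j : Fin k, (g j x) ^ (c j) := by
        apply lintegral_congr_ae
        filter_upwards [hfact] with x hx
        rw [hx, hpoint x]
    _ ≤ ∏ j : Fin k, (∫⁻ x : H, g j x) ^ (c j) :=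
        ENNReal.lintegral_prod_norm_pow_le _ (fun j _ => (hgmeas j).aemeasurable)
          hcsum1 (fun j _ => hc0 j)
    _ ≤ ∏ _j : Fin k, (1 : ℝ≥0∞) := by
        apply Finset.prod_le_prod'
        intro j _
        apply ENNReal.rpow_le_one _ (hc0 j)
        have h5 : ∫⁻ x : H, g j x
            = ∫⁻ x : H, ∏ i ∈ Finset.range n, ENNReal.ofReal (Fe (Qp j i, Qp j (i+1)) x) :=
          lintegral_congr (fun x => hgeq j x)
        rw [h5]
        exact hchain j
    _ = 1 := Finset.prod_const_one


end
end

section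
/- Let 𝒢 be a graph decomposition of a finite-dimensional real Hilbert space H of dimension m, let e_1, …, e_m be a directed chain of edges in 𝒢 which begins at {0} and ends at H, and for each ℓ = 1, …, m let F_ℓ be a normalized edge function for e_ℓ. Then ∫_H ∏_{ℓ=1}^m F_ℓ(x) dx ≤ 1. -/
open MeasureTheory Module
open scoped ENNReal

noncomputable section

lemma exists_unit_orthogonal {H : Type*} [NormedAddCommGroup H] [InnerProductSpace ℝ H]
    [FiniteDimensional ℝ H] (V₁ V₂ : Submodule ℝ H) (h12 : V₁ ≤ V₂) (hne : V₁ ≠ V₂) :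
    ∃ w : H, w ∈ V₂ ∧ w ∈ V₁ᗮ ∧ ‖w‖ = 1 := by
  obtain ⟨v, hv2, hv1⟩ : ∃ v, v ∈ V₂ ∧ v ∉ V₁ := by
    by_contra h; push_neg at h; exact hne (le_antisymm h12 h)
  set u := v - (V₁.orthogonalProjectionOnto v : H) with hu
  have hu1 : u ∈ V₁ᗮ := Submodule.sub_starProjection_mem_orthogonal (K := V₁) v
  have hu2 : u ∈ V₂ := V₂.sub_mem hv2 (h12 (V₁.orthogonalProjectionOnto v).2)
  have hune : u ≠ 0 := by
    intro h0
    apply hv1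
    have hv : v = (V₁.orthogonalProjectionOnto v : H) := by
      have := sub_eq_zero.mp (hu ▸ h0)
      exact this
    rw [hv]; exact (V₁.orthogonalProjectionOnto v).2
  exact ⟨(‖u‖⁻¹ : ℝ) • u, V₂.smul_mem _ hu2, Submodule.smul_mem _ _ hu1,
    norm_smul_inv_norm hune⟩

lemma lmarginal_prod_le_one {m : ℕ} (f : Fin m → (Fin m → ℝ) → ℝ≥0∞)
    (hmeas : ∀ j, Measurable (f j))
    (hconst : ∀ (j ℓ : Fin m), ℓ < j → ∀ (z : Fin m → ℝ) (y : ℝ),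
      f j (Function.update z ℓ y) = f j z)
    (hint : ∀ (ℓ : Fin m) (z : Fin m → ℝ), (∫⁻ y : ℝ, f ℓ (Function.update z ℓ y)) ≤ 1) :
    ∫⁻ x : Fin m → ℝ, ∏ j, f j x ≤ 1 := by
  classical
  set μ : Fin m → Measure ℝ := fun _ => volume with hμ
  set s : ℕ → Finset (Fin m) := fun k => Finset.univ.filter (fun j : Fin m => k ≤ (j : ℕ))
    with hs
  have hmem : ∀ k (j : Fin m), j ∈ s k ↔ k ≤ (j : ℕ) := by
    intro k j; simp [hs]
  have hmeasprod : ∀ (t : Finset (Fin m)), Measurable (fun x => ∏ j ∈ t, f j x) :=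
    fun t => Finset.measurable_prod t (fun j _ => hmeas j)
  have key : ∀ d k, k + d = m → ∀ x : Fin m → ℝ,
      (∫⋯∫⁻_(s k), (fun x => ∏ j ∈ s k, f j x) ∂μ) x ≤ 1 := by
    intro d
    induction d with
    | zero =>
      intro k hk x
      have hempty : s k = ∅ := by
        ext j; simp only [hmem, Finset.notMem_empty, iff_false, not_le]
        omega
      rw [hempty, lmarginal_empty]
      simp
    | succ d ih =>
      intro k hk x
      have hkm : k < m := by omega
      set ℓ : Fin m := ⟨k, hkm⟩ with hℓ
      have hins : s k = insert ℓ (s (k + 1)) := by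
        ext j
        simp only [hmem, Finset.mem_insert]
        constructor
        · intro h
          rcases eq_or_lt_of_le h with h' | h'
          · left; exact Fin.ext h'.symm
          · right; omega
        · rintro (rfl | h)
          · exact le_rfl
          · omega
      have hnot : ℓ ∉ s (k + 1) := by simp [hmem, hℓ]
      rw [hins, lmarginal_insert' _ (by rw [← hins]; exact hmeasprod _) hnot]
      have hle : (fun x => ∫⁻ y, (∏ j ∈ insert ℓ (s (k+1)), f j (Function.update x ℓ y)) ∂μ ℓ)
          ≤ fun x => ∏ j ∈ s (k+1), f j x := by
        intro x
        have h1 : ∀ y : ℝ, (∏ j ∈ insert ℓ (s (k+1)), f j (Function.update x ℓ y))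
            = f ℓ (Function.update x ℓ y) * ∏ j ∈ s (k+1), f j x := by
          intro y
          rw [Finset.prod_insert hnot]
          congr 1
          apply Finset.prod_congr rfl
          intro j hj
          have hj' : k + 1 ≤ (j : ℕ) := (hmem _ j).mp hj
          exact hconst j ℓ (by simp only [Fin.lt_def, hℓ]; omega) x y
        simp only [h1]
        have hfm : Measurable (fun y : ℝ => f ℓ (Function.update x ℓ y)) :=
          (hmeas ℓ).comp (measurable_update x)
        rw [lintegral_mul_const _ hfm]
        calc (∫⁻ y, f ℓ (Function.update x ℓ y)) * ∏ j ∈ s (k+1), f j x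
            ≤ 1 * ∏ j ∈ s (k+1), f j x := by
              exact mul_le_mul_left (hint ℓ x) _
          _ = _ := one_mul _
      calc (∫⋯∫⁻_(s (k+1)), (fun x => ∫⁻ y, (∏ j ∈ insert ℓ (s (k+1)),
              f j (Function.update x ℓ y)) ∂μ ℓ) ∂μ) x
          ≤ (∫⋯∫⁻_(s (k+1)), (fun x => ∏ j ∈ s (k+1), f j x) ∂μ) x :=
            lmarginal_mono hle x
        _ ≤ 1 := ih (k + 1) (by omega) x
  have huniv : (Finset.univ : Finset (Fin m)) = s 0 := by
    ext j; simp [hmem]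
  calc ∫⁻ x : Fin m → ℝ, ∏ j, f j x
      = ∫⁻ x, ∏ j, f j x ∂Measure.pi μ := by rw [hμ, ← MeasureTheory.volume_pi]
    _ = (∫⋯∫⁻_Finset.univ, (fun x => ∏ j, f j x) ∂μ) (fun _ => 0) :=
        lintegral_eq_lmarginal_univ _
    _ = (∫⋯∫⁻_(s 0), (fun x => ∏ j ∈ s 0, f j x) ∂μ) (fun _ => 0) := by rw [← huniv]
    _ ≤ 1 := key m 0 (by omega) _

/-- If `e_1, …, e_m` is a directed chain of edges of a graph decomposition of `H`
(`m = dim H`) beginning at `{0}` and ending at `H`, and each `F ℓ` is a normalized edge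
function for `e_ℓ`, then `∫_H ∏_ℓ F_ℓ ≤ 1`. -/
theorem lintegral_prod_chain_le_one
    {H : Type*} [NormedAddCommGroup H] [InnerProductSpace ℝ H] [FiniteDimensional ℝ H]
    [MeasurableSpace H] [BorelSpace H]
    (G : SubspaceGraph H) (hG : G.IsDecompositionOf ⊤)
    {m : ℕ} (hm : m = finrank ℝ H)
    (c : Fin m → Submodule ℝ H × Submodule ℝ H) (hc : IsEdgeChain G.edges c)
    (hstart : ∀ h : 0 < m, (c ⟨0, h⟩).1 = ⊥)
    (hend : ∀ h : 0 < m, (c ⟨m - 1, Nat.sub_lt h Nat.one_pos⟩).2 = ⊤)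
    (F : Fin m → H → ℝ)
    (hF : ∀ ℓ, IsNormalizedEdgeFunction (c ℓ).1 (c ℓ).2 (F ℓ)) :
    ∫⁻ x : H, ∏ ℓ, ENNReal.ofReal (F ℓ x) ≤ 1 := by
  have hE : ∀ e ∈ G.edges, e.1 ≤ e.2 ∧ finrank ℝ ↥e.2 = finrank ℝ ↥e.1 + 1 :=
    fun e he => ⟨(hG.2.2.2.2.2.1 e he).2.2.1, (hG.2.2.2.2.2.1 e he).2.2.2⟩
  classical
  -- choose unit vectors
  have hexists : ∀ ℓ : Fin m, ∃ w : H, w ∈ (c ℓ).2 ∧ w ∈ (c ℓ).1ᗮ ∧ ‖w‖ = 1 := by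
    intro ℓ
    obtain ⟨hle, hdim⟩ := hE (c ℓ) (hc.1 ℓ)
    refine exists_unit_orthogonal _ _ hle ?_
    intro heq
    rw [heq] at hdim
    omega
  choose w hw2 hw1 hw3 using hexists
  -- monotonicity along the chain
  have hmono : ∀ (a b : ℕ) (ha : a < m) (hb : b < m), a < b →
      (c ⟨a, ha⟩).2 ≤ (c ⟨b, hb⟩).1 := by
    intro a b
    induction b with
    | zero => intro ha hb hab; omega
    | succ b ihb =>
      intro ha hb hab
      rcases Nat.lt_or_ge a b with h | h
      · have hb' : b < m := by omega
        refine le_trans (ihb ha hb' h) ?_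
        refine le_trans (hE _ (hc.1 ⟨b, hb'⟩)).1 ?_
        rw [hc.2 b hb]
      · have : a = b := by omega
        subst this
        rw [hc.2 a hb]
  have hwin : ∀ (ℓ j : Fin m), ℓ < j → w ℓ ∈ (c j).1 :=
    fun ℓ j h => hmono ℓ j ℓ.2 j.2 h (hw2 ℓ)
  -- orthonormal basis
  have honb : Orthonormal ℝ w := by
    constructor
    · exact hw3
    · intro i j hij
      rcases lt_or_gt_of_ne hij with h | h
      · exact Submodule.inner_right_of_mem_orthogonal (hwin i j h) (hw1 j)
      · rw [real_inner_comm]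
        exact Submodule.inner_right_of_mem_orthogonal (hwin j i h) (hw1 i)
  have hspan : ⊤ ≤ Submodule.span ℝ (Set.range w) := by
    rcases Nat.eq_zero_or_pos m with h0 | hpos
    · have h1 : finrank ℝ H = 0 := by omega
      have h2 : Subsingleton H := finrank_zero_iff.mp h1
      intro x _
      rw [Subsingleton.elim x 0]
      exact Submodule.zero_mem _
    · have : Nonempty (Fin m) := ⟨⟨0, hpos⟩⟩
      rw [honb.linearIndependent.span_eq_top_of_card_eq_finrank (by simp [hm])]
  set b : OrthonormalBasis (Fin m) ℝ H := OrthonormalBasis.mk honb hspan with hb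
  have hbw : ∀ i, b i = w i := fun i => by rw [hb, OrthonormalBasis.coe_mk]
  -- the functions on the coordinate space
  set T : (Fin m → ℝ) → H := fun z => ∑ i, z i • w i with hT
  have hTmeas : Measurable T := by
    apply Finset.measurable_sum
    intro i _
    exact (measurable_pi_apply i).smul_const (w i)
  set f : Fin m → (Fin m → ℝ) → ℝ≥0∞ := fun j z => ENNReal.ofReal (F j (T z)) with hf'
  have hfmeas : ∀ j, Measurable (f j) :=
    fun j => ENNReal.measurable_ofReal.comp ((hF j).1.comp hTmeas)
  -- update formula
  have hupdate : ∀ (z : Fin m → ℝ) (ℓ : Fin m) (y : ℝ),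
      T (Function.update z ℓ y) = T z + (y - z ℓ) • w ℓ := by
    intro z ℓ y
    show (∑ i, Function.update z ℓ y i • w i) = (∑ i, z i • w i) + (y - z ℓ) • w ℓ
    rw [← Finset.sum_erase_add _ _ (Finset.mem_univ ℓ),
      ← Finset.sum_erase_add _ (fun i => z i • w i) (Finset.mem_univ ℓ)]
    have h1 : ∑ i ∈ Finset.univ.erase ℓ, Function.update z ℓ y i • w i
        = ∑ i ∈ Finset.univ.erase ℓ, z i • w i :=
      Finset.sum_congr rfl (fun i hi => by
        rw [Function.update_of_ne (Finset.ne_of_mem_erase hi)])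
    rw [h1, Function.update_self]
    module
  have hconst : ∀ (j ℓ : Fin m), ℓ < j → ∀ (z : Fin m → ℝ) (y : ℝ),
      f j (Function.update z ℓ y) = f j z := by
    intro j ℓ h z y
    rw [hf']
    simp only
    rw [hupdate, (hF j).2.2.1 (T z) _ (Submodule.smul_mem _ _ (hwin ℓ j h))]
  have hint : ∀ (ℓ : Fin m) (z : Fin m → ℝ),
      (∫⁻ y : ℝ, f ℓ (Function.update z ℓ y)) ≤ 1 := by
    intro ℓ z
    have heq : ∀ y : ℝ, T (Function.update z ℓ y)
        = (T z - z ℓ • w ℓ) + y • w ℓ := by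
      intro y
      rw [hupdate]
      module
    simp only [hf', heq]
    exact (hF ℓ).2.2.2 (w ℓ) (hw2 ℓ) (hw1 ℓ) (hw3 ℓ) _
  -- transfer the integral
  have htrans : (∫⁻ x : H, ∏ ℓ, ENNReal.ofReal (F ℓ x))
      = ∫⁻ z : Fin m → ℝ, ∏ ℓ, f ℓ z := by
    have hg : Measurable (fun x : H => ∏ ℓ, ENNReal.ofReal (F ℓ x)) :=
      Finset.measurable_prod _ (fun ℓ _ => ENNReal.measurable_ofReal.comp (hF ℓ).1)
    have h1 := b.measurePreserving_repr_symm.lintegral_comp hg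
    have h2 := (PiLp.volume_preserving_toLp (Fin m)).lintegral_comp
        (hg.comp b.repr.symm.continuous.measurable)
    simp only [Function.comp] at h1 h2
    rw [← h1, ← h2]
    apply lintegral_congr
    intro z
    have heq : b.repr.symm (WithLp.toLp 2 z) = T z := by
      show _ = ∑ i, z i • w i
      simp only [← hbw]
      rw [← b.sum_repr_symm]
    simp only [hf', heq]
  rw [htrans]
  exact lmarginal_prod_le_one f hfmeas hconst hint

end
end

section
/- Let (H, {π_i}_{i=1}^N, {τ_i}_{i=1}^N) be Hölder–Brascamp–Lieb data satisfying dim V ≤ Σ_{i=1}^N τ_i dim π_i(V) for every subspace V of H and dim H = Σ_{i=1}^N τ_i dim π_i(H). Suppose τ_{i₀} = 1 for some index i₀ with dim π_{i₀}(H) > 0. Let W be any subspace of π_{i₀}(H) of codimension 1 in π_{i₀}(H) and set V := π_{i₀}^{−1}(W) ∩ H. Then dim V = Σ_{i=1}^N τ_i dim π_i(V); that is, V is a critical subspace. -/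
open MeasureTheory Module
open scoped ENNReal

noncomputable section

/-- If the Bennett–Carbery–Christ–Tao conditions hold and `τ i₀ = 1` for some `i₀` with
`dim π_{i₀}(H) > 0`, then for any codimension-one subspace `W` of `π_{i₀}(H)` the
preimage `V = π_{i₀}⁻¹(W)` is a critical subspace. -/
theorem critical_subspace_of_exponent_one
    {H : Type*} [NormedAddCommGroup H] [InnerProductSpace ℝ H] [FiniteDimensional ℝ H]
    {N : ℕ} {H' : Fin N → Type*} [∀ i, NormedAddCommGroup (H' i)]
    [∀ i, InnerProductSpace ℝ (H' i)] [∀ i, FiniteDimensional ℝ (H' i)]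
    (π : ∀ i, H →ₗ[ℝ] H' i) (τ : Fin N → ℝ) (hτ : ∀ i, τ i ∈ Set.Icc (0 : ℝ) 1)
    (h1 : ∀ V : Submodule ℝ H, (finrank ℝ ↥V : ℝ) ≤
      ∑ i, τ i * (finrank ℝ ↥(Submodule.map (π i) V) : ℝ))
    (h2 : (finrank ℝ H : ℝ) =
      ∑ i, τ i * (finrank ℝ ↥(Submodule.map (π i) (⊤ : Submodule ℝ H)) : ℝ))
    (i₀ : Fin N) (hτ₁ : τ i₀ = 1)
    (hrank : 0 < finrank ℝ ↥(Submodule.map (π i₀) (⊤ : Submodule ℝ H)))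
    (W : Submodule ℝ (H' i₀)) (hW : W ≤ Submodule.map (π i₀) (⊤ : Submodule ℝ H))
    (hWcodim : finrank ℝ ↥W + 1 =
      finrank ℝ ↥(Submodule.map (π i₀) (⊤ : Submodule ℝ H))) :
    (finrank ℝ ↥(Submodule.comap (π i₀) W) : ℝ) =
      ∑ i, τ i * (finrank ℝ ↥(Submodule.map (π i) (Submodule.comap (π i₀) W)) : ℝ) := by
  set V : Submodule ℝ H := Submodule.comap (π i₀) W with hV
  have hWrange : W ≤ LinearMap.range (π i₀) := by rwa [← Submodule.map_top]
  have hmapV : Submodule.map (π i₀) V = W := by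
    rw [hV, Submodule.map_comap_eq, inf_eq_right.2 hWrange]
  -- rank-nullity computation: finrank V + 1 = finrank H
  have hdim : finrank ℝ V + 1 = finrank ℝ H := by
    have h1' := LinearMap.finrank_range_add_finrank_ker ((π i₀).domRestrict V)
    rw [LinearMap.range_domRestrict, LinearMap.ker_domRestrict, hmapV] at h1'
    have hker : LinearMap.ker (π i₀) ≤ V := fun x hx => by
      simp [hV, Submodule.mem_comap, LinearMap.mem_ker.1 hx]
    have e := LinearEquiv.finrank_eq (Submodule.comapSubtypeEquivOfLe hker)
    have h2' := LinearMap.finrank_range_add_finrank_ker (π i₀)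
    have hWr : finrank ℝ W + 1 = finrank ℝ (LinearMap.range (π i₀)) := by
      rwa [← Submodule.map_top]
    omega
  -- upper bound for the sum
  have hle : ∑ i, τ i * (finrank ℝ ↥(Submodule.map (π i) V) : ℝ) ≤
      (finrank ℝ V : ℝ) := by
    have hterm : ∀ i ∈ Finset.univ, τ i * (finrank ℝ ↥(Submodule.map (π i) V) : ℝ) ≤
        τ i * (finrank ℝ ↥(Submodule.map (π i) (⊤ : Submodule ℝ H)) : ℝ) -
          (if i = i₀ then (1 : ℝ) else 0) := by
      intro i _
      by_cases h : i = i₀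
      · subst h
        rw [hmapV, hτ₁]
        have : (finrank ℝ W : ℝ) + 1 =
            (finrank ℝ ↥(Submodule.map (π i) (⊤ : Submodule ℝ H)) : ℝ) := by
          exact_mod_cast congrArg (Nat.cast : ℕ → ℝ) hWcodim
        simp only [one_mul]
        norm_num
        linarith
      · simp only [if_neg h, sub_zero]
        have hmono : Submodule.map (π i) V ≤ Submodule.map (π i) (⊤ : Submodule ℝ H) :=
          Submodule.map_mono le_top
        have := Submodule.finrank_mono hmono
        have hcast : (finrank ℝ ↥(Submodule.map (π i) V) : ℝ) ≤
            (finrank ℝ ↥(Submodule.map (π i) (⊤ : Submodule ℝ H)) : ℝ) := by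
          exact_mod_cast this
        exact mul_le_mul_of_nonneg_left hcast (hτ i).1
    have := Finset.sum_le_sum hterm
    rw [Finset.sum_sub_distrib, Finset.sum_ite_eq' Finset.univ i₀
      (fun _ => (1 : ℝ)), if_pos (Finset.mem_univ i₀)] at this
    have hdim' : (finrank ℝ V : ℝ) + 1 = (finrank ℝ H : ℝ) := by
      exact_mod_cast congrArg (Nat.cast : ℕ → ℝ) hdim
    linarith [h2, this]
  exact le_antisymm (h1 V) hle

end
end

section
/- Let H be a finite-dimensional real Hilbert space with dim H ≥ 2 and let π_i : H → H_i be linear maps for i = 1, …, N. Let K ⊂ [0,1]^N be the compact convex set of all tuples (τ_1, …, τ_N) satisfying dim V ≤ Σ_{i=1}^N τ_i dim π_i(V) for every subspace V of H and dim H = Σ_{i=1}^N τ_i dim π_i(H). Then every extreme point (τ_1, …, τ_N) of K admits a proper critical subspace: there exists a subspace V of H with {0} ≠ V ≠ H and dim V = Σ_{i=1}^N τ_i dim π_i(V). -/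
open MeasureTheory Module
open scoped ENNReal

noncomputable section

/-- Every extreme point of the compact convex set of exponent tuples satisfying the
Bennett–Carbery–Christ–Tao conditions admits a proper critical subspace (provided
`dim H ≥ 2`). -/
theorem extreme_point_admits_critical_subspace
    {H : Type*} [NormedAddCommGroup H] [InnerProductSpace ℝ H] [FiniteDimensional ℝ H]
    {N : ℕ} {H' : Fin N → Type*} [∀ i, NormedAddCommGroup (H' i)]
    [∀ i, InnerProductSpace ℝ (H' i)] [∀ i, FiniteDimensional ℝ (H' i)]
    (π : ∀ i, H →ₗ[ℝ] H' i) (hdim : 2 ≤ finrank ℝ H) :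
    ∀ τ ∈ Set.extremePoints ℝ
      {τ : Fin N → ℝ | (∀ i, τ i ∈ Set.Icc (0 : ℝ) 1) ∧
        (∀ V : Submodule ℝ H, (finrank ℝ ↥V : ℝ) ≤
          ∑ i, τ i * (finrank ℝ ↥(Submodule.map (π i) V) : ℝ)) ∧
        (finrank ℝ H : ℝ) =
          ∑ i, τ i * (finrank ℝ ↥(Submodule.map (π i) (⊤ : Submodule ℝ H)) : ℝ)},
      ∃ V : Submodule ℝ H, V ≠ ⊥ ∧ V ≠ ⊤ ∧
        (finrank ℝ ↥V : ℝ) =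
          ∑ i, τ i * (finrank ℝ ↥(Submodule.map (π i) V) : ℝ) := by
  classical
  intro τ hτ
  obtain ⟨hτK, hext⟩ := hτ
  obtain ⟨hIcc, hineq, heq⟩ := hτK
  by_contra hcon
  push_neg at hcon
  set d : ℕ := finrank ℝ H with hd
  set D : Fin N → ℕ := fun i => finrank ℝ ↥(Submodule.map (π i) (⊤ : Submodule ℝ H))
    with hD
  set m : Fin N → Submodule ℝ H → ℕ := fun i V => finrank ℝ ↥(Submodule.map (π i) V)
    with hm
  have hτ0 : ∀ i, 0 ≤ τ i := fun i => (hIcc i).1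
  have hτ1 : ∀ i, τ i ≤ 1 := fun i => (hIcc i).2
  have heq' : (d : ℝ) = ∑ j, τ j * (D j : ℝ) := heq
  -- strict inequality for proper subspaces
  have hstrict : ∀ V : Submodule ℝ H, V ≠ ⊥ → V ≠ ⊤ →
      (finrank ℝ ↥V : ℝ) < ∑ i, τ i * (m i V : ℝ) := by
    intro V h1 h2
    exact lt_of_le_of_ne (hineq V) (hcon V h1 h2)
  have hmD : ∀ (i) (V : Submodule ℝ H), m i V ≤ D i := by
    intro i V
    exact Submodule.finrank_mono (Submodule.map_mono le_top)
  have hmd : ∀ (i) (V : Submodule ℝ H), m i V ≤ d := by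
    intro i V
    exact le_trans (Submodule.finrank_map_le (π i) V) (Submodule.finrank_le V)
  have hDd : ∀ i, D i ≤ d := fun i => hmd i ⊤ |>.trans_eq' rfl
  -- a nonzero vector and the basic proper subspace
  have hdpos : 0 < finrank ℝ H := lt_of_lt_of_le two_pos hdim
  haveI : Nontrivial H := Module.finrank_pos_iff.mp hdpos
  obtain ⟨x0, hx0⟩ := exists_ne (0 : H)
  have hspan_ne_bot : ∀ x : H, x ≠ 0 → (Submodule.span ℝ {x}) ≠ ⊥ := by
    intro x hx hb
    have h1 : finrank ℝ ↥(Submodule.span ℝ {x}) = 1 := finrank_span_singleton hx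
    rw [hb] at h1
    simp at h1
  have hspan_ne_top : ∀ x : H, x ≠ 0 → (Submodule.span ℝ {x}) ≠ ⊤ := by
    intro x hx ht
    have h1 : finrank ℝ ↥(Submodule.span ℝ {x}) = 1 := finrank_span_singleton hx
    rw [ht, finrank_top] at h1
    omega
  -- Step A: if τ i = 1 then D i = 0
  have claim1 : ∀ i, τ i = 1 → D i = 0 := by
    intro i hi
    by_contra hDi
    have hker : Submodule.map (π i) (LinearMap.ker (π i)) = ⊥ := by
      rw [Submodule.eq_bot_iff]
      rintro x ⟨y, hy, rfl⟩
      exact hy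
    set W := LinearMap.ker (π i) with hW
    have hrn : D i + finrank ℝ ↥W = d := by
      have h := LinearMap.finrank_range_add_finrank_ker (π i)
      rw [LinearMap.range_eq_map] at h
      exact h
    have htermW : (m i W : ℝ) = 0 := by
      have h0 : m i W = 0 := by
        simp only [hm]
        rw [hker, finrank_bot]
      rw [h0]; norm_num
    have hDsplit : τ i * (D i : ℝ) + ∑ j ∈ Finset.univ.erase i, τ j * (D j : ℝ) = (d : ℝ) := by
      rw [heq']
      exact Finset.add_sum_erase Finset.univ (fun j => τ j * (D j : ℝ)) (Finset.mem_univ i)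
    have hub : ∑ j, τ j * (m j W : ℝ) ≤ (finrank ℝ ↥W : ℝ) := by
      rw [← Finset.add_sum_erase Finset.univ (fun j => τ j * (m j W : ℝ)) (Finset.mem_univ i),
        htermW, mul_zero, zero_add]
      have h2 : ∑ j ∈ Finset.univ.erase i, τ j * (m j W : ℝ)
          ≤ ∑ j ∈ Finset.univ.erase i, τ j * (D j : ℝ) := by
        refine Finset.sum_le_sum fun j _ => ?_
        exact mul_le_mul_of_nonneg_left (Nat.cast_le.mpr (hmD j W)) (hτ0 j)
      have h3 : ∑ j ∈ Finset.univ.erase i, τ j * (D j : ℝ) = (finrank ℝ ↥W : ℝ) := by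
        have h4 : (finrank ℝ ↥W : ℝ) = (d : ℝ) - (D i : ℝ) := by
          have h5 : (D i : ℝ) + (finrank ℝ ↥W : ℝ) = (d : ℝ) := by exact_mod_cast hrn
          linarith
        rw [h4, ← hDsplit, hi]; ring
      exact h2.trans_eq h3
    have heqW : (finrank ℝ ↥W : ℝ) = ∑ j, τ j * (m j W : ℝ) :=
      le_antisymm (hineq W) hub
    have hWtop : W ≠ ⊤ := by
      intro ht
      rw [ht, finrank_top] at hrn
      omega
    by_cases hWbot : W = ⊥
    · -- π i injective; D i = d
      have hinj : Function.Injective (π i) := LinearMap.ker_eq_bot.mp hWbot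
      have hDi_d : D i = d := by
        rw [hWbot, finrank_bot] at hrn; omega
      have hrest : ∑ j ∈ Finset.univ.erase i, τ j * (D j : ℝ) = 0 := by
        have h6 := hDsplit
        rw [hi, hDi_d] at h6
        linarith
      have hrest0 : ∀ j ∈ Finset.univ.erase i, τ j * (D j : ℝ) = 0 := by
        refine (Finset.sum_eq_zero_iff_of_nonneg ?_).mp hrest
        intro j _
        exact mul_nonneg (hτ0 j) (Nat.cast_nonneg _)
      set V' := Submodule.span ℝ {x0} with hV'
      have hfV' : finrank ℝ ↥V' = 1 := finrank_span_singleton hx0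
      have hmi : m i V' = 1 := by
        have h7 := LinearEquiv.finrank_eq (Submodule.equivMapOfInjective (π i) hinj V')
        simp only [hm]
        rw [← h7, hfV']
      have hsum1 : ∑ j, τ j * (m j V' : ℝ) = 1 := by
        rw [← Finset.add_sum_erase Finset.univ (fun j => τ j * (m j V' : ℝ)) (Finset.mem_univ i),
          hi, hmi]
        have h8 : ∑ j ∈ Finset.univ.erase i, τ j * (m j V' : ℝ) = 0 := by
          refine Finset.sum_eq_zero fun j hj => ?_
          rcases mul_eq_zero.mp (hrest0 j hj) with h | h
          · rw [h, zero_mul]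
          · have h9 : D j = 0 := by exact_mod_cast h
            have h10 : m j V' = 0 := le_antisymm (h9 ▸ hmD j V') (Nat.zero_le _)
            rw [h10]
            norm_num
        rw [h8]
        norm_num
      refine hcon V' (hspan_ne_bot x0 hx0) (hspan_ne_top x0 hx0) ?_
      rw [hfV']
      exact_mod_cast hsum1.symm
    · exact hcon W hWbot hWtop heqW
  -- Step B
  set T : Finset (Fin N) := Finset.univ.filter (fun i => τ i ≠ 0 ∧ τ i ≠ 1) with hT
  have hmemT : ∀ i, i ∈ T ↔ (τ i ≠ 0 ∧ τ i ≠ 1) := by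
    intro i; simp [hT]
  have hsumT : (d : ℝ) = ∑ i ∈ T, τ i * (D i : ℝ) := by
    rw [heq']
    symm
    apply Finset.sum_subset (Finset.subset_univ T)
    intro j _ hjT
    by_cases h0 : τ j = 0
    · rw [h0, zero_mul]
    · have h1 : τ j = 1 := by
        by_contra h1
        exact hjT ((hmemT j).mpr ⟨h0, h1⟩)
      rw [claim1 j h1]
      norm_num
  have hdR : (0 : ℝ) < (d : ℝ) := by exact_mod_cast hdpos
  have hTne : T.Nonempty := by
    rw [Finset.nonempty_iff_ne_empty]
    intro hTe
    rw [hTe, Finset.sum_empty] at hsumT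
    linarith
  -- a perturbation direction
  have hEe : ∃ e : Fin N → ℝ, e ≠ 0 ∧ (∀ i, e i ≠ 0 → i ∈ T) ∧ ∑ i, e i * (D i : ℝ) = 0 := by
    by_cases hz : ∃ i ∈ T, D i = 0
    · obtain ⟨i, hiT, hDi⟩ := hz
      refine ⟨fun k => if k = i then 1 else 0, ?_, ?_, ?_⟩
      · intro h
        have h1 := congrFun h i
        simp at h1
      · intro k hk
        by_cases hki : k = i
        · exact hki ▸ hiT
        · simp [hki] at hk
      · rw [Finset.sum_eq_single i]
        · simp [hDi]
        · intro b _ hb; simp [hb]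
        · intro h; exact absurd (Finset.mem_univ i) h
    · push_neg at hz
      have hcard : 1 < T.card := by
        by_contra hc
        push_neg at hc
        have hc1 : T.card = 1 := le_antisymm hc (Finset.card_pos.mpr hTne)
        obtain ⟨i0, hi0⟩ := Finset.card_eq_one.mp hc1
        have hi0T : i0 ∈ T := by rw [hi0]; exact Finset.mem_singleton_self i0
        rw [hi0, Finset.sum_singleton] at hsumT
        have hD0 : 0 < D i0 := Nat.pos_of_ne_zero (hz i0 hi0T)
        have hτlt : τ i0 < 1 := lt_of_le_of_ne (hτ1 i0) ((hmemT i0).mp hi0T).2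
        have h1 : τ i0 * (D i0 : ℝ) < (D i0 : ℝ) := by
          have : (0 : ℝ) < (D i0 : ℝ) := by exact_mod_cast hD0
          nlinarith
        have h2 : (D i0 : ℝ) ≤ (d : ℝ) := by exact_mod_cast hDd i0
        linarith
      obtain ⟨i, hiT, j, hjT, hij⟩ := Finset.one_lt_card.mp hcard
      refine ⟨fun k => if k = i then (D j : ℝ) else if k = j then -(D i : ℝ) else 0, ?_, ?_, ?_⟩
      · intro h
        have h1 := congrFun h i
        simp at h1
        exact hz j hjT h1
      · intro k hk
        by_cases hki : k = i
        · exact hki ▸ hiT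
        · by_cases hkj : k = j
          · exact hkj ▸ hjT
          · simp [hki, hkj] at hk
      · rw [← Finset.sum_subset (Finset.subset_univ ({i, j} : Finset (Fin N)))]
        · rw [Finset.sum_pair hij]
          have hji : ¬ (j = i) := Ne.symm hij
          simp only [eq_self_iff_true, if_true, hji, if_false]
          ring
        · intro k _ hk
          simp only [Finset.mem_insert, Finset.mem_singleton] at hk
          push_neg at hk
          simp [hk.1, hk.2]
  obtain ⟨e, he0, heT, heD⟩ := hEe
  -- the uniform gap δ for proper subspaces
  set P : Finset (ℕ × (Fin N → ℕ)) :=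
    (Finset.range (d + 1) ×ˢ Fintype.piFinset fun _ => Finset.range (d + 1)).filter
      (fun p => (p.1 : ℝ) < ∑ i, τ i * (p.2 i : ℝ)) with hP
  have hprof : ∀ V : Submodule ℝ H, V ≠ ⊥ → V ≠ ⊤ →
      ((finrank ℝ ↥V, fun i => m i V) : ℕ × (Fin N → ℕ)) ∈ P := by
    intro V h1 h2
    rw [hP, Finset.mem_filter]
    refine ⟨Finset.mem_product.mpr ⟨?_, ?_⟩, ?_⟩
    · exact Finset.mem_range.mpr (Nat.lt_succ_of_le (Submodule.finrank_le V))
    · exact Fintype.mem_piFinset.mpr fun i => Finset.mem_range.mpr (Nat.lt_succ_of_le (hmd i V))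
    · exact hstrict V h1 h2
  have hPne : P.Nonempty :=
    ⟨_, hprof (Submodule.span ℝ {x0}) (hspan_ne_bot x0 hx0) (hspan_ne_top x0 hx0)⟩
  set g : ℕ × (Fin N → ℕ) → ℝ := fun p => (∑ i, τ i * (p.2 i : ℝ)) - (p.1 : ℝ) with hg
  set δ : ℝ := P.inf' hPne g with hδ
  have hδpos : 0 < δ := by
    rw [hδ, Finset.lt_inf'_iff]
    intro p hp
    rw [hP, Finset.mem_filter] at hp
    simp only [hg]
    linarith [hp.2]
  have hgap : ∀ V : Submodule ℝ H, V ≠ ⊥ → V ≠ ⊤ →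
      (finrank ℝ ↥V : ℝ) + δ ≤ ∑ i, τ i * (m i V : ℝ) := by
    intro V h1 h2
    have h3 := Finset.inf'_le g (hprof V h1 h2)
    simp only [hg] at h3
    rw [← hδ] at h3
    linarith
  -- bound on the perturbation of the sums
  set C : ℝ := ∑ i, |e i| * (d : ℝ) with hC
  have hC0 : 0 ≤ C :=
    Finset.sum_nonneg fun i _ => mul_nonneg (abs_nonneg _) (Nat.cast_nonneg _)
  have hbound : ∀ V : Submodule ℝ H, |∑ i, e i * (m i V : ℝ)| ≤ C := by
    intro V
    calc |∑ i, e i * (m i V : ℝ)| ≤ ∑ i, |e i * (m i V : ℝ)| :=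
          Finset.abs_sum_le_sum_abs _ _
      _ ≤ C := by
          rw [hC]
          refine Finset.sum_le_sum fun i _ => ?_
          rw [abs_mul, abs_of_nonneg (Nat.cast_nonneg (m i V) : (0:ℝ) ≤ _)]
          exact mul_le_mul_of_nonneg_left (by exact_mod_cast hmd i V) (abs_nonneg _)
  -- box margin
  haveI : Nonempty (Fin N) := ⟨hTne.choose⟩
  set β : ℝ := Finset.univ.inf' Finset.univ_nonempty
      (fun i => if e i = 0 then 1 else min (τ i) (1 - τ i) / |e i|) with hβ
  have hβpos : 0 < β := by
    rw [hβ, Finset.lt_inf'_iff]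
    intro i _
    by_cases hei : e i = 0
    · simp [hei]
    · simp only [hei, if_false]
      have hiT := (hmemT i).mp (heT i hei)
      have h0 : 0 < τ i := lt_of_le_of_ne (hτ0 i) (Ne.symm hiT.1)
      have h1 : τ i < 1 := lt_of_le_of_ne (hτ1 i) hiT.2
      exact div_pos (lt_min h0 (by linarith)) (abs_pos.mpr hei)
  have hβbox : ∀ i, e i ≠ 0 → β * |e i| ≤ min (τ i) (1 - τ i) := by
    intro i hei
    have hle : β ≤ min (τ i) (1 - τ i) / |e i| := by
      have h0 := Finset.inf'_le (fun i => if e i = 0 then 1 else min (τ i) (1 - τ i) / |e i|)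
        (Finset.mem_univ i)
      rw [hβ]
      simp only [hei, if_false] at h0
      exact h0
    calc β * |e i| ≤ (min (τ i) (1 - τ i) / |e i|) * |e i| :=
          mul_le_mul_of_nonneg_right hle (abs_nonneg _)
      _ = min (τ i) (1 - τ i) := div_mul_cancel₀ _ (ne_of_gt (abs_pos.mpr hei))
  set ε : ℝ := min (δ / (C + 1)) β with hε
  have hεpos : 0 < ε := lt_min (div_pos hδpos (by linarith)) hβpos
  have hεC : ε * C ≤ δ := by
    have h1 : ε ≤ δ / (C + 1) := min_le_left _ _
    have h2 : ε * (C + 1) ≤ δ := by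
      rw [← le_div_iff₀ (by linarith : (0 : ℝ) < C + 1)]
      exact h1
    nlinarith
  -- splitting the perturbed sums
  have hsplit : ∀ (c : ℝ) (w : Fin N → ℝ),
      ∑ i, (τ i + c * e i) * w i = (∑ i, τ i * w i) + c * ∑ i, e i * w i := by
    intro c w
    rw [Finset.mul_sum, ← Finset.sum_add_distrib]
    exact Finset.sum_congr rfl fun i _ => by ring
  have heqpert : ∀ c : ℝ, ∑ i, (τ i + c * e i) * (D i : ℝ) = (d : ℝ) := by
    intro c
    rw [hsplit, heD, mul_zero, add_zero, ← heq']
  -- perturbed tuples stay in the set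
  have hmem : ∀ c : ℝ, |c| ≤ ε →
      (fun i => τ i + c * e i) ∈
        {σ : Fin N → ℝ | (∀ i, σ i ∈ Set.Icc (0 : ℝ) 1) ∧
          (∀ V : Submodule ℝ H, (finrank ℝ ↥V : ℝ) ≤
            ∑ i, σ i * (finrank ℝ ↥(Submodule.map (π i) V) : ℝ)) ∧
          (finrank ℝ H : ℝ) =
            ∑ i, σ i * (finrank ℝ ↥(Submodule.map (π i) (⊤ : Submodule ℝ H)) : ℝ)} := by
    intro c hc
    refine ⟨?_, ?_, ?_⟩
    · intro i
      show τ i + c * e i ∈ Set.Icc (0 : ℝ) 1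
      by_cases hei : e i = 0
      · simpa [hei] using hIcc i
      · have hbox := hβbox i hei
        have h1 : |c * e i| ≤ min (τ i) (1 - τ i) := by
          rw [abs_mul]
          calc |c| * |e i| ≤ ε * |e i| := mul_le_mul_of_nonneg_right hc (abs_nonneg _)
            _ ≤ β * |e i| := mul_le_mul_of_nonneg_right (min_le_right _ _) (abs_nonneg _)
            _ ≤ _ := hbox
        have h2 := abs_le.mp h1
        constructor
        · have h3 := min_le_left (τ i) (1 - τ i)
          linarith [h2.1]
        · have h3 := min_le_right (τ i) (1 - τ i)
          linarith [h2.2]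
    · intro V
      show (finrank ℝ ↥V : ℝ) ≤ ∑ i, (τ i + c * e i) * (m i V : ℝ)
      by_cases h1 : V = ⊥
      · subst h1
        have h2 : ∀ i, m i (⊥ : Submodule ℝ H) = 0 := by
          intro i
          simp [hm, Submodule.map_bot, finrank_bot]
        simp [finrank_bot, h2]
      · by_cases h2 : V = ⊤
        · subst h2
          have h3 : (finrank ℝ ↥(⊤ : Submodule ℝ H) : ℝ) = (d : ℝ) := by
            rw [finrank_top]
          exact le_of_eq (h3.trans (heqpert c).symm)
        · have h3 := hgap V h1 h2
          have h4 := hbound V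
          have h5 : |c * ∑ i, e i * (m i V : ℝ)| ≤ ε * C := by
            rw [abs_mul]
            exact mul_le_mul hc h4 (abs_nonneg _) hεpos.le
          have h6 := neg_abs_le (c * ∑ i, e i * (m i V : ℝ))
          rw [hsplit]
          linarith
    · show (finrank ℝ H : ℝ) = ∑ i, (τ i + c * e i) * (D i : ℝ)
      exact (heqpert c).symm
  have hmem₁ := hmem (-ε) (by rw [abs_neg, abs_of_pos hεpos])
  have hmem₂ := hmem ε (by rw [abs_of_pos hεpos])
  have hseg : τ ∈ openSegment ℝ (fun i => τ i + (-ε) * e i) (fun i => τ i + ε * e i) := by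
    refine ⟨1/2, 1/2, by norm_num, by norm_num, by norm_num, ?_⟩
    funext i
    simp only [Pi.add_apply, Pi.smul_apply, smul_eq_mul]
    ring
  have hfix := hext hmem₁ hmem₂ hseg
  obtain ⟨i, hei⟩ : ∃ i, e i ≠ 0 := by
    by_contra h
    push_neg at h
    exact he0 (funext fun i => h i)
  have h1 := congrFun hfix i
  have h2 : (-ε) * e i = 0 := by linarith [h1]
  rcases mul_eq_zero.mp h2 with h | h
  · linarith
  · exact hei h

end
end

section
/- Let (H, {π_i}_{i=1}^N, {τ_i}_{i=1}^N) be Hölder–Brascamp–Lieb data satisfying dim V′ ≤ Σ_{i=1}^N τ_i dim π_i(V′) for every subspace V′ of H and dim H = Σ_{i=1}^N τ_i dim π_i(H), and let V be a critical subspace, i.e. {0} ≠ V ≠ H and dim V = Σ_{i=1}^N τ_i dim π_i(V). For each i let P_i denote orthogonal projection onto the orthogonal complement of π_i(V) in H_i. Then the quotient data (V^⊥, {P_i ∘ π_i restricted to V^⊥}_{i=1}^N, {τ_i}_{i=1}^N) also satisfies the Bennett–Carbery–Christ–Tao conditions: for every subspace W of V^⊥, dim W ≤ Σ_{i=1}^N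 τ_i dim P_i π_i(W), with equality when W = V^⊥. Likewise the restricted data (V, {π_i restricted to V}, {τ_i}) satisfies dim V′ ≤ Σ_{i=1}^N τ_i dim π_i(V′) for every subspace V′ of V, with equality when V′ = V. -/
open MeasureTheory Module
open scoped ENNReal

noncomputable section

private lemma finrank_sup_eq_add_proj
    {E : Type*} [NormedAddCommGroup E] [InnerProductSpace ℝ E] [FiniteDimensional ℝ E]
    (A B : Submodule ℝ E) :
    finrank ℝ ↥(A ⊔ B) = finrank ℝ ↥A +
      finrank ℝ ↥(Submodule.map (Submodule.orthogonalProjectionOnto Aᗮ).toLinearMap B) := by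
  set f : E →ₗ[ℝ] Aᗮ := (Submodule.orthogonalProjectionOnto Aᗮ).toLinearMap with hf
  have hker : LinearMap.ker f = A := by
    rw [hf]
    have : LinearMap.ker (Submodule.orthogonalProjectionOnto Aᗮ).toLinearMap
        = (Submodule.orthogonalProjectionOnto Aᗮ).ker := rfl
    rw [this, Submodule.ker_orthogonalProjectionOnto, Submodule.orthogonal_orthogonal]
  have hA : Submodule.map f A = ⊥ := by
    rw [← LinearMap.le_ker_iff_map, hker]
  have rn := LinearMap.finrank_range_add_finrank_ker (f.domRestrict (A ⊔ B))
  rw [LinearMap.range_domRestrict, LinearMap.ker_domRestrict, hker] at rn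
  have hmap : Submodule.map f (A ⊔ B) = Submodule.map f B := by
    rw [Submodule.map_sup, hA, bot_sup_eq]
  rw [hmap] at rn
  have hcomap : finrank ℝ ↥(Submodule.comap (A ⊔ B).subtype A) = finrank ℝ ↥A :=
    (Submodule.comapSubtypeEquivOfLe (le_sup_left : A ≤ A ⊔ B)).finrank_eq
  rw [hcomap] at rn
  omega

/-- If `V` is a critical subspace for data satisfying the
Bennett–Carbery–Christ–Tao conditions, then both the quotient data on `Vᗮ` (with maps
`Pᵢ ∘ πᵢ`, where `Pᵢ` is the orthogonal projection onto `(πᵢ(V))ᗮ`) and the restricted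
data on `V` satisfy the Bennett–Carbery–Christ–Tao conditions. -/
theorem bcct_for_restricted_and_quotient_data
    {H : Type*} [NormedAddCommGroup H] [InnerProductSpace ℝ H] [FiniteDimensional ℝ H]
    {N : ℕ} {H' : Fin N → Type*} [∀ i, NormedAddCommGroup (H' i)]
    [∀ i, InnerProductSpace ℝ (H' i)] [∀ i, FiniteDimensional ℝ (H' i)]
    (π : ∀ i, H →ₗ[ℝ] H' i) (τ : Fin N → ℝ) (hτ : ∀ i, τ i ∈ Set.Icc (0 : ℝ) 1)
    (h1 : ∀ V' : Submodule ℝ H, (finrank ℝ ↥V' : ℝ) ≤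
      ∑ i, τ i * (finrank ℝ ↥(Submodule.map (π i) V') : ℝ))
    (h2 : (finrank ℝ H : ℝ) =
      ∑ i, τ i * (finrank ℝ ↥(Submodule.map (π i) (⊤ : Submodule ℝ H)) : ℝ))
    (V : Submodule ℝ H) (hV0 : V ≠ ⊥) (hVT : V ≠ ⊤)
    (hcrit : (finrank ℝ ↥V : ℝ) =
      ∑ i, τ i * (finrank ℝ ↥(Submodule.map (π i) V) : ℝ)) :
    (∀ W : Submodule ℝ H, W ≤ Vᗮ →
      (finrank ℝ ↥W : ℝ) ≤ ∑ i, τ i * (finrank ℝ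
        ↥(Submodule.map
          ((Submodule.orthogonalProjectionOnto (Submodule.map (π i) V)ᗮ).toLinearMap ∘ₗ π i) W) : ℝ)) ∧
    ((finrank ℝ ↥Vᗮ : ℝ) = ∑ i, τ i * (finrank ℝ
        ↥(Submodule.map
          ((Submodule.orthogonalProjectionOnto (Submodule.map (π i) V)ᗮ).toLinearMap ∘ₗ π i) Vᗮ) : ℝ)) ∧
    (∀ V' : Submodule ℝ H, V' ≤ V →
      (finrank ℝ ↥V' : ℝ) ≤ ∑ i, τ i * (finrank ℝ ↥(Submodule.map (π i) V') : ℝ)) ∧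
    ((finrank ℝ ↥V : ℝ) = ∑ i, τ i * (finrank ℝ ↥(Submodule.map (π i) V) : ℝ)) := by
  -- key computation: for W ≤ Vᗮ, dim π_i(V ⊔ W) = dim π_i V + dim Q_i W
  have key : ∀ (W : Submodule ℝ H) (i : Fin N),
      finrank ℝ ↥(Submodule.map (π i) (V ⊔ W))
        = finrank ℝ ↥(Submodule.map (π i) V) +
          finrank ℝ ↥(Submodule.map
            ((Submodule.orthogonalProjectionOnto (Submodule.map (π i) V)ᗮ).toLinearMap ∘ₗ π i) W) := by
    intro W i
    rw [Submodule.map_sup, Submodule.map_comp,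
      finrank_sup_eq_add_proj (Submodule.map (π i) V) (Submodule.map (π i) W)]
  have hdirect : ∀ W : Submodule ℝ H, W ≤ Vᗮ →
      finrank ℝ ↥(V ⊔ W) = finrank ℝ ↥V + finrank ℝ ↥W := by
    intro W hW
    have hinf : V ⊓ W = ⊥ := by
      rw [eq_bot_iff]
      refine le_trans (inf_le_inf_left V hW) ?_
      rw [Submodule.inf_orthogonal_eq_bot]
    have := Submodule.finrank_sup_add_finrank_inf_eq V W
    rw [hinf, finrank_bot] at this
    omega
  have main : ∀ W : Submodule ℝ H, W ≤ Vᗮ →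
      (finrank ℝ ↥(V ⊔ W) : ℝ) - (finrank ℝ ↥V : ℝ)
        = (finrank ℝ ↥W : ℝ) ∧
      (∑ i, τ i * (finrank ℝ ↥(Submodule.map (π i) (V ⊔ W)) : ℝ))
        = (∑ i, τ i * (finrank ℝ ↥(Submodule.map (π i) V) : ℝ)) +
          ∑ i, τ i * (finrank ℝ ↥(Submodule.map
            ((Submodule.orthogonalProjectionOnto (Submodule.map (π i) V)ᗮ).toLinearMap ∘ₗ π i) W) : ℝ) := by
    intro W hW
    constructor
    · rw [hdirect W hW]; push_cast; ring
    · rw [← Finset.sum_add_distrib]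
      refine Finset.sum_congr rfl fun i _ => ?_
      rw [key W i]; push_cast; ring
  refine ⟨?_, ?_, fun V' _ => h1 V', hcrit⟩
  · intro W hW
    obtain ⟨e1, e2⟩ := main W hW
    have := h1 (V ⊔ W)
    rw [e2] at this
    linarith [this, e1, hcrit]
  · have htop : V ⊔ Vᗮ = ⊤ := Submodule.sup_orthogonal_of_hasOrthogonalProjection
    obtain ⟨e1, e2⟩ := main Vᗮ le_rfl
    rw [htop] at e1 e2
    have hfin : (finrank ℝ ↥(⊤ : Submodule ℝ H) : ℝ) = (finrank ℝ H : ℝ) := by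
      rw [finrank_top]
    rw [hfin, h2] at e1
    linarith [e1, e2, hcrit]

end
end
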